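/- arXiv:1305.7080 — 7 statements merged into one kernel-verified Lean document; each statement's English description precedes it below -/
import Mathlib

section
/- Let G_{ωω} be the graph with vertex set ℕ × ℕ in which (i,k) and (j,l) are adjacent iff i = j and k ≠ l. Then for every linear order L the following are equivalent: (a) L is order-isomorphic to a maximal chain in the poset ⟨P(G_{ωω}) ∪ {∅}, ⊆⟩; (c) L is order-isomorphic to a compact nowhere dense set K ⊆ ℝ (with the order inherited from ℝ) whose minimum is a non-isolated point of K. -/
open SimpleGraph Set
open scoped Classical

/-- `P(G)`: the collection of vertex sets whose induced subgraph is isomorphic to `G`. -/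
def graphCopies {V : Type*} (G : SimpleGraph V) : Set (Set V) :=
  {A : Set V | Nonempty ((G.induce A) ≃g G)}

/-- `𝓛` is a maximal chain in the poset `⟨𝒞, ⊆⟩`. -/
def IsMaxChainIn {α : Type*} (𝒞 : Set (Set α)) (𝓛 : Set (Set α)) : Prop :=
  𝓛 ⊆ 𝒞 ∧ IsChain (· ⊆ ·) 𝓛 ∧
    ∀ 𝓛', 𝓛' ⊆ 𝒞 → IsChain (· ⊆ ·) 𝓛' → 𝓛 ⊆ 𝓛' → 𝓛' = 𝓛

noncomputable section

namespace GomegaAux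

/-- the `k`-th column (fiber) of a set of pairs -/
def fib (A : Set (ℕ × ℕ)) (k : ℕ) : Set ℕ := {n | (k, n) ∈ A}

lemma fib_mono {A B : Set (ℕ × ℕ)} (h : A ⊆ B) (k : ℕ) : fib A k ⊆ fib B k :=
  fun _ hn => h hn

/-- structural characterization of copies of `G_{ωω}` -/
def IsGood (A : Set (ℕ × ℕ)) : Prop :=
  (∀ k, (fib A k).Nonempty → (fib A k).Infinite) ∧ {k | (fib A k).Nonempty}.Infinite

variable {G : SimpleGraph (ℕ × ℕ)}
  (hG : ∀ a b : ℕ × ℕ, G.Adj a b ↔ (a.1 = b.1 ∧ a.2 ≠ b.2))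

section CopyIff
include hG

lemma induce_adj' {A : Set (ℕ × ℕ)} (u v : A) :
    (G.induce A).Adj u v ↔ (u : ℕ × ℕ).1 = (v : ℕ × ℕ).1 ∧ (u : ℕ × ℕ).2 ≠ (v : ℕ × ℕ).2 := by
  have : (G.induce A).Adj u v ↔ G.Adj u v := by simp [SimpleGraph.induce]
  rw [this, hG]

lemma good_of_mem {A : Set (ℕ × ℕ)} (hA : A ∈ graphCopies G) : IsGood A := by
  obtain ⟨e⟩ := hA
  constructor
  · rintro k ⟨n₀, hn₀⟩
    set v : A := ⟨(k, n₀), hn₀⟩ with hv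
    set i₀ : ℕ := (e v).1
    set t₀ : ℕ := (e v).2
    set g : ℕ → ℕ := fun t => if t < t₀ then t else t + 1 with hg
    have hgne : ∀ t, g t ≠ t₀ := by
      intro t; by_cases h : t < t₀ <;> simp [hg, h] <;> omega
    have hginj : Function.Injective g := by
      intro a b hab; simp only [hg] at hab
      split_ifs at hab <;> omega
    set u : ℕ → A := fun t => e.symm (i₀, g t) with hu
    have hadj : ∀ t, (G.induce A).Adj (u t) v := by
      intro t
      have hGadj : G.Adj (i₀, g t) (e v) := by
        rw [hG]
        exact ⟨rfl, hgne t⟩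
      have := (RelIso.map_rel_iff e.symm).mpr hGadj
      simpa [hu] using this
    refine infinite_of_injective_forall_mem (f := fun t => ((u t : ℕ × ℕ)).2) ?_ ?_
    · intro a b hab
      have h1 : ((u a : ℕ × ℕ)).1 = k := ((induce_adj' hG _ _).mp (hadj a)).1
      have h2 : ((u b : ℕ × ℕ)).1 = k := ((induce_adj' hG _ _).mp (hadj b)).1
      have hval : (u a : ℕ × ℕ) = (u b : ℕ × ℕ) := Prod.ext_iff.mpr ⟨h1.trans h2.symm, hab⟩
      have huab : u a = u b := Subtype.coe_injective hval
      have hpair : (i₀, g a) = (i₀, g b) := e.symm.toEquiv.injective huab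
      exact hginj (congrArg Prod.snd hpair)
    · intro t
      have h1 : ((u t : ℕ × ℕ)).1 = k := ((induce_adj' hG _ _).mp (hadj t)).1
      have hmem : (u t : ℕ × ℕ) ∈ A := (u t).2
      show ((u t : ℕ × ℕ)).2 ∈ fib A k
      simpa [fib, ← h1] using hmem
  · set u : ℕ → A := fun i => e.symm (i, 0) with hu
    refine infinite_of_injective_forall_mem (f := fun i => ((u i : ℕ × ℕ)).1) ?_ ?_
    · intro a b hab
      by_contra hne
      have hnadj : ¬ (G.induce A).Adj (u a) (u b) := by
        intro hcon
        have : G.Adj (a, 0) (b, 0) := (RelIso.map_rel_iff e.symm).mp hcon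
        rw [hG] at this
        exact hne (by simpa using this.1)
      have hval : (u a : ℕ × ℕ) ≠ (u b : ℕ × ℕ) := by
        intro hcon
        have : u a = u b := Subtype.coe_injective hcon
        have : (a, 0) = (b, 0) := e.symm.toEquiv.injective this
        exact hne (by simpa using congrArg Prod.fst this)
      apply hnadj
      rw [induce_adj' hG]
      refine ⟨hab, ?_⟩
      intro hcon
      exact hval (Prod.ext_iff.mpr ⟨hab, hcon⟩)
    · intro i
      exact ⟨((u i : ℕ × ℕ)).2, by simpa [fib] using (u i).2⟩

lemma mem_of_good {A : Set (ℕ × ℕ)} (hA : IsGood A) : A ∈ graphCopies G := by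
  classical
  obtain ⟨hcols, hR⟩ := hA
  set R : ℕ → Prop := fun k => (fib A k).Nonempty with hRdef
  have hRinf : (setOf R).Infinite := hR
  set r : ℕ → ℕ := Nat.nth R with hr
  have hrmem : ∀ i, (fib A (r i)).Nonempty := fun i => Nat.nth_mem_of_infinite hRinf i
  have hrinj : Function.Injective r := Nat.nth_injective hRinf
  have hfibinf : ∀ i, (fib A (r i)).Infinite := fun i => hcols _ (hrmem i)
  set s : ℕ → ℕ → ℕ := fun i => Nat.nth (· ∈ fib A (r i)) with hs
  have hsmem : ∀ i t, s i t ∈ fib A (r i) := fun i t =>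
    Nat.nth_mem_of_infinite (by simpa using hfibinf i) t
  have hsinj : ∀ i, Function.Injective (s i) := fun i =>
    Nat.nth_injective (by simpa using hfibinf i)
  set F : ℕ × ℕ → A := fun q => ⟨(r q.1, s q.1 q.2), hsmem q.1 q.2⟩ with hF
  have hFbij : Function.Bijective F := by
    constructor
    · rintro ⟨a, b⟩ ⟨c, d⟩ h
      have h' : (r a, s a b) = (r c, s c d) := congrArg Subtype.val h
      have h1 : r a = r c := congrArg Prod.fst h'
      have hac : a = c := hrinj h1
      subst hac
      have h2 : s a b = s a d := congrArg Prod.snd h'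
      exact Prod.ext rfl (hsinj a h2)
    · rintro ⟨⟨k, n⟩, hkn⟩
      have hkR : R k := ⟨n, hkn⟩
      have : k ∈ Set.range r := by
        rw [hr, Nat.range_nth_of_infinite hRinf]; exact hkR
      obtain ⟨i, hi⟩ := this
      have hnfib : n ∈ fib A (r i) := by rw [hi]; exact hkn
      have : n ∈ Set.range (s i) := by
        rw [hs]
        have := Nat.range_nth_of_infinite (p := (· ∈ fib A (r i))) (by simpa using hfibinf i)
        rw [this]; exact hnfib
      obtain ⟨t, ht⟩ := this
      exact ⟨(i, t), Subtype.ext (by simp [hF, hi, ht])⟩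
  set e : (ℕ × ℕ) ≃ A := Equiv.ofBijective F hFbij with he
  have hmap : ∀ a b : ℕ × ℕ, (G.induce A).Adj (e a) (e b) ↔ G.Adj a b := by
    intro a b
    rw [induce_adj' hG, hG]
    have hea : (e a : ℕ × ℕ) = (r a.1, s a.1 a.2) := rfl
    have heb : (e b : ℕ × ℕ) = (r b.1, s b.1 b.2) := rfl
    rw [hea, heb]
    constructor
    · rintro ⟨h1, h2⟩
      have h1' : a.1 = b.1 := hrinj h1
      refine ⟨h1', ?_⟩
      intro hcon
      exact h2 (by rw [h1', hcon])
    · rintro ⟨h1, h2⟩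
      refine ⟨by rw [h1], ?_⟩
      rw [h1]
      intro hcon
      exact h2 (hsinj b.1 hcon)
  exact ⟨(RelIso.mk e (@fun a b => hmap a b)).symm⟩

lemma mem_copies_iff (A : Set (ℕ × ℕ)) : A ∈ graphCopies G ↔ IsGood A :=
  ⟨good_of_mem hG, mem_of_good hG⟩

end CopyIff


section MaxChain

variable {𝓛 : Set (Set (ℕ × ℕ))}

lemma chain_cmp (hM : IsMaxChainIn (insert ∅ (graphCopies G)) 𝓛)
    {E F : Set (ℕ × ℕ)} (hE : E ∈ 𝓛) (hF : F ∈ 𝓛) : E ⊆ F ∨ F ⊆ E := by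
  rcases eq_or_ne E F with h | h
  · exact Or.inl h.subset
  · exact hM.2.1 hE hF h

lemma mem_of_cmp (hM : IsMaxChainIn (insert ∅ (graphCopies G)) 𝓛)
    {X : Set (ℕ × ℕ)} (hX : X ∈ insert ∅ (graphCopies G))
    (h : ∀ E ∈ 𝓛, X ⊆ E ∨ E ⊆ X) : X ∈ 𝓛 := by
  have hchain : IsChain (· ⊆ ·) (insert X 𝓛) := by
    apply hM.2.1.insert
    intro E hE _
    exact h E hE
  have hsub : insert X 𝓛 ⊆ insert ∅ (graphCopies G) := insert_subset hX hM.1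
  have := hM.2.2 _ hsub hchain (subset_insert _ _)
  rw [← this]
  exact mem_insert _ _

lemma empty_mem (hM : IsMaxChainIn (insert ∅ (graphCopies G)) 𝓛) : ∅ ∈ 𝓛 :=
  mem_of_cmp hM (mem_insert _ _) (fun E _ => Or.inl (empty_subset E))

include hG in
lemma good_of_memL (hM : IsMaxChainIn (insert ∅ (graphCopies G)) 𝓛)
    {E : Set (ℕ × ℕ)} (hE : E ∈ 𝓛) (hne : E ≠ ∅) : IsGood E := by
  rcases hM.1 hE with h | h
  · exact absurd h hne
  · exact good_of_mem hG h

include hG in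
lemma sUnion_memL (hM : IsMaxChainIn (insert ∅ (graphCopies G)) 𝓛)
    {𝒮 : Set (Set (ℕ × ℕ))} (h𝒮 : 𝒮 ⊆ 𝓛) : ⋃₀ 𝒮 ∈ 𝓛 := by
  apply mem_of_cmp hM
  · by_cases hall : ∀ s ∈ 𝒮, s = ∅
    · have : ⋃₀ 𝒮 = ∅ := by
        apply eq_empty_iff_forall_notMem.mpr
        rintro v ⟨s, hs, hv⟩
        rw [hall s hs] at hv
        exact hv
      rw [this]; exact mem_insert _ _
    · push_neg at hall
      obtain ⟨s₀, hs₀, hs₀ne'⟩ := hall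
      have hs₀ne : s₀ ≠ ∅ := by
        first
        | exact hs₀ne'
        | exact Set.nonempty_iff_ne_empty.mp hs₀ne'
      have hgood₀ := good_of_memL hG hM (h𝒮 hs₀) hs₀ne
      right
      apply mem_of_good hG
      constructor
      · rintro k ⟨n, hn⟩
        obtain ⟨s, hs, hns⟩ := hn
        have hsne : s ≠ ∅ := by rintro rfl; exact hns
        have hgood := good_of_memL hG hM (h𝒮 hs) hsne
        have : (fib s k).Infinite := hgood.1 k ⟨n, hns⟩
        exact this.mono (fib_mono (subset_sUnion_of_mem hs) k)
      · apply hgood₀.2.mono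
        intro k ⟨n, hn⟩
        exact ⟨n, subset_sUnion_of_mem hs₀ hn⟩
  · intro E hE
    by_cases h : ∃ s ∈ 𝒮, E ⊆ s
    · obtain ⟨s, hs, hEs⟩ := h
      exact Or.inr (hEs.trans (subset_sUnion_of_mem hs))
    · push_neg at h
      left
      apply sUnion_subset
      intro s hs
      rcases chain_cmp hM (h𝒮 hs) hE with h' | h'
      · exact h'
      · exact absurd h' (h s hs)

include hG in
lemma univ_memL (hM : IsMaxChainIn (insert ∅ (graphCopies G)) 𝓛) : Set.univ ∈ 𝓛 := by
  apply mem_of_cmp hM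
  · right
    apply mem_of_good hG
    constructor
    · intro k _
      have : fib Set.univ k = Set.univ := by ext n; simp [fib]
      rw [this]; exact Set.infinite_univ
    · apply infinite_of_injective_forall_mem (f := fun k : ℕ => k) Function.injective_id
      intro k
      exact ⟨0, trivial⟩
  · intro E _; exact Or.inr (subset_univ E)

include hG in
lemma no_least (hM : IsMaxChainIn (insert ∅ (graphCopies G)) 𝓛) :
    ¬ ∃ M ∈ 𝓛, M ≠ ∅ ∧ ∀ E ∈ 𝓛, E ≠ ∅ → M ⊆ E := by
  rintro ⟨M, hM𝓛, hMne, hleast⟩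
  have hgood := good_of_memL hG hM hM𝓛 hMne
  obtain ⟨k, n, hn⟩ : ∃ k n, n ∈ fib M k := by
    obtain ⟨k, hk⟩ := hgood.2.nonempty
    exact ⟨k, hk.choose, hk.choose_spec⟩
  set M' : Set (ℕ × ℕ) := M \ {(k, n)} with hM'
  have hfib : ∀ k', fib M' k' = if k' = k then fib M k \ {n} else fib M k' := by
    intro k'
    split_ifs with h
    · subst h; ext t; simp [fib, hM']
    · ext t
      simp only [fib, hM', Set.mem_diff, Set.mem_singleton_iff, Set.mem_setOf_eq, Prod.mk.injEq]
      constructor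
      · rintro ⟨ht, -⟩; exact ht
      · intro ht; exact ⟨ht, fun hc => h hc.1⟩
  have hMkinf : (fib M k).Infinite := hgood.1 k ⟨n, hn⟩
  have hgood' : IsGood M' := by
    constructor
    · intro k' hk'
      by_cases h : k' = k
      · rw [hfib k', if_pos h]
        exact hMkinf.diff (Set.finite_singleton n)
      · rw [hfib k', if_neg h]
        rw [hfib k', if_neg h] at hk'
        exact hgood.1 k' hk'
    · apply ((hgood.2.diff (Set.finite_singleton k)).mono)
      rintro k' ⟨hk', hkk'⟩
      simp only [Set.mem_singleton_iff] at hkk'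
      rw [Set.mem_setOf_eq, hfib k', if_neg hkk']
      exact hk'
  have hM'ne : M' ≠ ∅ := by
    have hinf : (fib M' k).Infinite := by
      rw [hfib k, if_pos rfl]; exact hMkinf.diff (Set.finite_singleton n)
    obtain ⟨t, ht⟩ := hinf.nonempty
    intro h
    rw [h] at ht
    exact ht
  have hM'mem : M' ∈ 𝓛 := by
    apply mem_of_cmp hM (Or.inr (mem_of_good hG hgood'))
    intro E hE
    rcases eq_or_ne E ∅ with rfl | hEne
    · exact Or.inr (empty_subset _)
    · exact Or.inl ((Set.diff_subset).trans (hleast E hE hEne))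
  have : M ⊆ M' := hleast M' hM'mem hM'ne
  have : (k, n) ∈ M' := this hn
  simp [hM'] at this

end MaxChain

section Jumps

variable {𝓛 : Set (Set (ℕ × ℕ))}

lemma mem_fib {A : Set (ℕ × ℕ)} {k n : ℕ} : n ∈ fib A k ↔ (k, n) ∈ A := Iff.rfl

lemma fib_empty (k : ℕ) : fib (∅ : Set (ℕ × ℕ)) k = ∅ := by
  ext n; simp [fib]

/-- the union of `U` with the infinite columns of `I` -/
def core (U I : Set (ℕ × ℕ)) : Set (ℕ × ℕ) := U ∪ {v ∈ I | (fib I v.1).Infinite}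

lemma core_subset {U I : Set (ℕ × ℕ)} (hUI : U ⊆ I) : core U I ⊆ I :=
  Set.union_subset hUI (Set.sep_subset _ _)

lemma subset_core_left {U I : Set (ℕ × ℕ)} : U ⊆ core U I := Set.subset_union_left

lemma fib_core {U I : Set (ℕ × ℕ)} (hUI : U ⊆ I) (k : ℕ) :
    fib (core U I) k = if (fib I k).Infinite then fib I k else fib U k := by
  classical
  ext n
  have hmem : n ∈ fib (core U I) k ↔ (k, n) ∈ U ∨ ((k, n) ∈ I ∧ (fib I k).Infinite) := by
    simp [fib, core]
  by_cases h : (fib I k).Infinite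
  · rw [if_pos h, hmem]
    constructor
    · rintro (hU | ⟨hI, -⟩)
      · exact hUI hU
      · exact hI
    · intro hI; exact Or.inr ⟨hI, h⟩
  · rw [if_neg h, hmem]
    constructor
    · rintro (hU | ⟨-, hinf⟩)
      · exact hU
      · exact absurd hinf h
    · intro hU; exact Or.inl hU

/-- `(C, D)` is a jump (adjacent pair) of the chain `𝓛` -/
def IsJump (𝓛 : Set (Set (ℕ × ℕ))) (C D : Set (ℕ × ℕ)) : Prop :=
  C ∈ 𝓛 ∧ D ∈ 𝓛 ∧ C ⊂ D ∧ ∀ E ∈ 𝓛, E ⊆ C ∨ D ⊆ E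

include hG in
lemma cut_least (hM : IsMaxChainIn (insert ∅ (graphCopies G)) 𝓛)
    (T : Set (Set (ℕ × ℕ))) (hT : T ⊆ 𝓛) (hTne : T.Nonempty)
    (hup : ∀ C ∈ 𝓛, ∀ Z ∈ T, Z ⊆ C → C ∈ T)
    (hUnotT : ⋃₀ (𝓛 \ T) ∉ T)
    (hUne : (⋃₀ (𝓛 \ T)).Nonempty)
    (hUneI : ⋃₀ (𝓛 \ T) ≠ ⋂₀ T)
    (htrig : core (⋃₀ (𝓛 \ T)) (⋂₀ T) ∈ 𝓛 → core (⋃₀ (𝓛 \ T)) (⋂₀ T) ∈ T) :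
    ∃ M ∈ T, ∀ Z ∈ T, M ⊆ Z := by
  classical
  set U := ⋃₀ (𝓛 \ T) with hUdef
  set I := ⋂₀ T with hIdef
  have hU𝓛 : U ∈ 𝓛 := sUnion_memL hG hM Set.diff_subset
  have hlow : ∀ C ∈ 𝓛 \ T, ∀ Z ∈ T, C ⊆ Z := by
    intro C hC Z hZ
    rcases chain_cmp hM hC.1 (hT hZ) with h | h
    · exact h
    · exact absurd (hup C hC.1 Z hZ h) hC.2
  have hUI : U ⊆ I := by
    apply Set.sUnion_subset
    intro C hC
    exact Set.subset_sInter (fun Z hZ => hlow C hC Z hZ)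
  have hIcmp : ∀ E ∈ 𝓛, I ⊆ E ∨ E ⊆ I := by
    intro E hE
    by_cases hET : E ∈ T
    · exact Or.inl (Set.sInter_subset_of_mem hET)
    · exact Or.inr ((Set.subset_sUnion_of_mem ((Set.mem_diff _).mpr ⟨hE, hET⟩)).trans hUI)
  by_contra hno
  push_neg at hno
  have hInot𝓛 : I ∉ 𝓛 := by
    intro hI
    by_cases hIT : I ∈ T
    · obtain ⟨Z, hZ, hnsub⟩ := hno I hIT
      exact hnsub (Set.sInter_subset_of_mem hZ)
    · have : I ⊆ U := Set.subset_sUnion_of_mem ((Set.mem_diff _).mpr ⟨hI, hIT⟩)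
      exact hUneI (le_antisymm hUI this)
  have hInotGood : ¬ IsGood I := by
    intro h
    exact hInot𝓛 (mem_of_cmp hM (Or.inr (mem_of_good hG h)) hIcmp)
  have hUne' : U ≠ ∅ := Set.nonempty_iff_ne_empty.mp hUne
  have hUgood := good_of_memL hG hM hU𝓛 hUne'
  set Cst := core U I with hCstdef
  have hCstI : Cst ⊆ I := core_subset hUI
  have hgoodC : IsGood Cst := by
    constructor
    · intro k hk
      rw [fib_core hUI] at hk ⊢
      by_cases h : (fib I k).Infinite
      · rwa [if_pos h]
      · rw [if_neg h] at hk ⊢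
        exact hUgood.1 k hk
    · apply hUgood.2.mono
      intro k hk
      exact hk.mono (fib_mono subset_core_left k)
  have hCst𝓛 : Cst ∈ 𝓛 := by
    apply mem_of_cmp hM (Or.inr (mem_of_good hG hgoodC))
    intro E hE
    by_cases hET : E ∈ T
    · exact Or.inl (hCstI.trans (Set.sInter_subset_of_mem hET))
    · exact Or.inr ((Set.subset_sUnion_of_mem ((Set.mem_diff _).mpr ⟨hE, hET⟩)).trans subset_core_left)
  have hICst : I ⊆ Cst := Set.sInter_subset_of_mem (htrig hCst𝓛)
  have : Cst = I := le_antisymm hCstI hICst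
  rw [← this] at hInotGood
  exact hInotGood hgoodC

include hG in
lemma point_jump (hM : IsMaxChainIn (insert ∅ (graphCopies G)) 𝓛)
    {A B : Set (ℕ × ℕ)} {y : ℕ × ℕ} (hA : A ∈ 𝓛) (hB : B ∈ 𝓛) (hyB : y ∈ B) (hyA : y ∉ A)
    (hC₁ : ∃ C₁ ∈ 𝓛, y ∉ C₁ ∧ (fib C₁ y.1).Nonempty) :
    ∃ C D, IsJump 𝓛 C D ∧ A ⊆ C ∧ D ⊆ B := by
  obtain ⟨C₁, hC₁𝓛, hyC₁, hC₁fib⟩ := hC₁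
  set T := {C ∈ 𝓛 | y ∈ C} with hTdef
  have hdiff : 𝓛 \ T = {C ∈ 𝓛 | y ∉ C} := by
    ext C; simp only [hTdef, Set.mem_diff, Set.mem_setOf_eq, not_and]
    constructor
    · rintro ⟨h1, h2⟩; exact ⟨h1, h2 h1⟩
    · rintro ⟨h1, h2⟩; exact ⟨h1, fun _ => h2⟩
  have hynotU : y ∉ ⋃₀ (𝓛 \ T) := by
    rintro ⟨C, hC, hyC⟩
    rw [hdiff] at hC
    exact hC.2 hyC
  have hC₁ne : C₁ ≠ ∅ := by
    intro h; rw [h, fib_empty] at hC₁fib; exact hC₁fib.ne_empty rfl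
  have hC₁good := good_of_memL hG hM hC₁𝓛 hC₁ne
  have hC₁sub : ∀ Z ∈ T, C₁ ⊆ Z := by
    intro Z hZ
    rcases chain_cmp hM hC₁𝓛 hZ.1 with h | h
    · exact h
    · exact absurd (h hZ.2) hyC₁
  have hC₁I : C₁ ⊆ ⋂₀ T := Set.subset_sInter hC₁sub
  have hyI : y ∈ ⋂₀ T := Set.mem_sInter.mpr (fun Z hZ => hZ.2)
  have hIfib : (fib (⋂₀ T) y.1).Infinite :=
    (hC₁good.1 y.1 hC₁fib).mono (fib_mono hC₁I y.1)
  have hcut : ∃ M ∈ T, ∀ Z ∈ T, M ⊆ Z := by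
    refine cut_least hG hM T (Set.sep_subset _ _) ⟨B, ⟨hB, hyB⟩⟩ ?_ ?_ ?_ ?_ ?_
    · intro C hC Z hZ hZC
      exact ⟨hC, hZC hZ.2⟩
    · intro hUT
      exact hynotU hUT.2
    · obtain ⟨n, hn⟩ := hC₁fib
      exact ⟨(y.1, n), Set.subset_sUnion_of_mem (by rw [hdiff]; exact ⟨hC₁𝓛, hyC₁⟩) hn⟩
    · intro hcon
      apply hynotU
      rw [hcon]
      exact hyI
    · intro hmem
      refine ⟨hmem, ?_⟩
      exact Or.inr ⟨hyI, hIfib⟩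
  obtain ⟨M, hMT, hMleast⟩ := hcut
  refine ⟨⋃₀ (𝓛 \ T), M, ⟨sUnion_memL hG hM Set.diff_subset, hMT.1, ?_, ?_⟩, ?_, ?_⟩
  · constructor
    · apply Set.sUnion_subset
      intro C hC
      rw [hdiff] at hC
      rcases chain_cmp hM hC.1 hMT.1 with h | h
      · exact h
      · exact absurd (h hMT.2) hC.2
    · intro hsub
      exact hynotU (hsub hMT.2)
  · intro E hE
    by_cases hyE : y ∈ E
    · exact Or.inr (hMleast E ⟨hE, hyE⟩)
    · exact Or.inl (Set.subset_sUnion_of_mem (by rw [hdiff]; exact ⟨hE, hyE⟩))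
  · exact Set.subset_sUnion_of_mem (by rw [hdiff]; exact ⟨hA, hyA⟩)
  · exact hMleast B ⟨hB, hyB⟩

include hG in
lemma col_jump (hM : IsMaxChainIn (insert ∅ (graphCopies G)) 𝓛)
    {A B : Set (ℕ × ℕ)} {j : ℕ} (hA : A ∈ 𝓛) (hAj : fib A j = ∅)
    (hB : B ∈ 𝓛) (hBj : (fib B j).Nonempty) (hBne : B ≠ ∅)
    (h2b : ∀ z ∈ fib B j, ∀ C ∈ 𝓛, (j, z) ∉ C → fib C j = ∅)
    (hC₂ : ∃ C₂ ∈ 𝓛, C₂ ≠ ∅ ∧ fib C₂ j = ∅) :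
    ∃ C D, IsJump 𝓛 C D ∧ A ⊆ C ∧ D ⊆ B := by
  obtain ⟨C₂, hC₂𝓛, hC₂ne, hC₂j⟩ := hC₂
  set T := {C ∈ 𝓛 | (fib C j).Nonempty} with hTdef
  have hdiff : 𝓛 \ T = {C ∈ 𝓛 | fib C j = ∅} := by
    ext C
    simp only [hTdef, Set.mem_diff, Set.mem_setOf_eq, not_and]
    constructor
    · rintro ⟨h1, h2⟩
      exact ⟨h1, Set.not_nonempty_iff_eq_empty.mp (h2 h1)⟩
    · rintro ⟨h1, h2⟩
      exact ⟨h1, fun _ => by rw [h2]; exact Set.not_nonempty_empty⟩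
  have hfibU : fib (⋃₀ (𝓛 \ T)) j = ∅ := by
    apply Set.eq_empty_iff_forall_notMem.mpr
    intro z hz
    obtain ⟨C, hC, hzC⟩ := hz
    rw [hdiff] at hC
    have : z ∈ fib C j := hzC
    rw [hC.2] at this
    exact this
  have hsubB : ∀ C ∈ T, fib B j ⊆ fib C j := by
    intro C hC z hz
    by_contra hzC
    have h0 := h2b z hz C hC.1 hzC
    have hCne := hC.2
    rw [h0] at hCne
    exact hCne.ne_empty rfl
  have hIBj : fib B j ⊆ fib (⋂₀ T) j := by
    intro z hz
    exact Set.mem_sInter.mpr (fun C hC => hsubB C hC hz)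
  have hgoodB := good_of_memL hG hM hB hBne
  have hBjinf : (fib B j).Infinite := hgoodB.1 j hBj
  have hcut : ∃ M ∈ T, ∀ Z ∈ T, M ⊆ Z := by
    refine cut_least hG hM T (Set.sep_subset _ _) ⟨B, ⟨hB, hBj⟩⟩ ?_ ?_ ?_ ?_ ?_
    · intro C hC Z hZ hZC
      exact ⟨hC, hZ.2.mono (fib_mono hZC j)⟩
    · intro hUT
      have h0 := hUT.2
      rw [hfibU] at h0
      exact h0.ne_empty rfl
    · obtain ⟨n, hn⟩ := Set.nonempty_iff_ne_empty.mpr hC₂ne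
      exact ⟨n, Set.subset_sUnion_of_mem (by rw [hdiff]; exact ⟨hC₂𝓛, hC₂j⟩) hn⟩
    · intro hcon
      obtain ⟨z, hz⟩ := hBj
      have : z ∈ fib (⋂₀ T) j := hIBj hz
      rw [← hcon] at this
      rw [hfibU] at this
      exact this
    · intro hmem
      refine ⟨hmem, ?_⟩
      obtain ⟨z, hz⟩ := hBj
      refine ⟨z, Or.inr ⟨hIBj hz, ?_⟩⟩
      exact hBjinf.mono hIBj
  obtain ⟨M, hMT, hMleast⟩ := hcut
  refine ⟨⋃₀ (𝓛 \ T), M, ⟨sUnion_memL hG hM Set.diff_subset, hMT.1, ?_, ?_⟩, ?_, ?_⟩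
  · constructor
    · apply Set.sUnion_subset
      intro C hC
      rcases chain_cmp hM (hdiff ▸ hC : C ∈ {C ∈ 𝓛 | fib C j = ∅}).1 hMT.1 with h | h
      · exact h
      · exfalso
        have hCin : C ∈ {C ∈ 𝓛 | fib C j = ∅} := hdiff ▸ hC
        have : (fib C j).Nonempty := hMT.2.mono (fib_mono h j)
        rw [hCin.2] at this
        exact this.ne_empty rfl
    · intro hsub
      obtain ⟨z, hz⟩ := hMT.2
      have : z ∈ fib (⋃₀ (𝓛 \ T)) j := fib_mono hsub j hz
      rw [hfibU] at this
      exact this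
  · intro E hE
    by_cases hEj : (fib E j).Nonempty
    · exact Or.inr (hMleast E ⟨hE, hEj⟩)
    · exact Or.inl (Set.subset_sUnion_of_mem
        (by rw [hdiff]; exact ⟨hE, Set.not_nonempty_iff_eq_empty.mp hEj⟩))
  · exact Set.subset_sUnion_of_mem (by rw [hdiff]; exact ⟨hA, hAj⟩)
  · exact hMleast B ⟨hB, hBj⟩

end Jumps

section Dense

variable {𝓛 : Set (Set (ℕ × ℕ))}

include hG in
lemma jump_dense (hM : IsMaxChainIn (insert ∅ (graphCopies G)) 𝓛)
    {A B : Set (ℕ × ℕ)} (hA : A ∈ 𝓛) (hB : B ∈ 𝓛) (hAB : A ⊂ B) :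
    ∃ C D, IsJump 𝓛 C D ∧ A ⊆ C ∧ D ⊆ B := by
  classical
  by_cases hstep1 : ∃ y ∈ B \ A, ∃ C₁ ∈ 𝓛, y ∉ C₁ ∧ (fib C₁ y.1).Nonempty
  · obtain ⟨y, hy, hC₁⟩ := hstep1
    exact point_jump hG hM hA hB hy.1 hy.2 hC₁
  · push_neg at hstep1
    have hH : ∀ y ∈ B \ A, ∀ C ∈ 𝓛, y ∉ C → fib C y.1 = ∅ := by
      intro y hy C hC hyC
      exact hstep1 y hy C hC hyC
    obtain ⟨y₀, hy₀B, hy₀A⟩ := Set.exists_of_ssubset hAB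
    set j := y₀.1 with hjdef
    have hy₀mem : y₀ ∈ B \ A := ⟨hy₀B, hy₀A⟩
    have hAj : fib A j = ∅ := hH y₀ hy₀mem A hA hy₀A
    have hBne : B ≠ ∅ := fun h => by rw [h] at hy₀B; exact hy₀B
    have hgoodB := good_of_memL hG hM hB hBne
    have hBj : (fib B j).Nonempty := ⟨y₀.2, by simpa [fib, hjdef] using hy₀B⟩
    have h2bgen : ∀ j' : ℕ, fib A j' = ∅ →
        ∀ z ∈ fib B j', ∀ C ∈ 𝓛, (j', z) ∉ C → fib C j' = ∅ := by
      intro j' hAj' z hz C hC hzC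
      have hzA : (j', z) ∉ A := by
        intro hmem
        have : z ∈ fib A j' := hmem
        rw [hAj'] at this
        exact this
      exact hH (j', z) ⟨hz, hzA⟩ C hC hzC
    have h2b := h2bgen j hAj
    by_cases hC₂ : ∃ C₂ ∈ 𝓛, C₂ ≠ ∅ ∧ fib C₂ j = ∅
    · exact col_jump hG hM hA hAj hB hBj hBne h2b hC₂
    · push_neg at hC₂
      have hall : ∀ C ∈ 𝓛, C ≠ ∅ → fib C j ≠ ∅ := fun C hC hne h0 =>
        ((hC₂ C hC (Set.nonempty_iff_ne_empty.mpr hne)).ne_empty h0)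
      have hAempty : A = ∅ := by
        by_contra hne
        exact hall A hA hne hAj
      set T := {C ∈ 𝓛 | C ≠ ∅} with hTdef
      have hBT : B ∈ T := ⟨hB, hBne⟩
      have hIBj : ∀ C ∈ T, fib B j ⊆ fib C j := by
        intro C hC z hz
        by_contra hzC
        have h0 := h2b z hz C hC.1 hzC
        exact hall C hC.1 hC.2 h0
      by_cases hleast : ∃ M ∈ T, ∀ Z ∈ T, M ⊆ Z
      · obtain ⟨M, hMT, hMleast⟩ := hleast
        refine ⟨∅, M, ⟨empty_mem hM, hMT.1, ?_, ?_⟩, ?_, ?_⟩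
        · exact (Set.empty_ssubset).mpr (Set.nonempty_iff_ne_empty.mpr hMT.2)
        · intro E hE
          rcases eq_or_ne E ∅ with rfl | hEne
          · exact Or.inl (subset_refl _)
          · exact Or.inr (hMleast E ⟨hE, hEne⟩)
        · rw [hAempty]
        · exact hMleast B hBT
      · set I := ⋂₀ T with hIdef
        have hIj : fib B j ⊆ fib I j := by
          intro z hz
          exact Set.mem_sInter.mpr (fun C hC => hIBj C hC hz)
        have hBjinf : (fib B j).Infinite := hgoodB.1 j hBj
        have hIjinf : (fib I j).Infinite := hBjinf.mono hIj
        have hIne : I ≠ ∅ := by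
          obtain ⟨z, hz⟩ := hBj
          intro h
          have : z ∈ fib I j := hIj hz
          rw [h] at this
          exact this
        have hIcmp : ∀ E ∈ 𝓛, I ⊆ E ∨ E ⊆ I := by
          intro E hE
          rcases eq_or_ne E ∅ with rfl | hEne
          · exact Or.inr (Set.empty_subset _)
          · exact Or.inl (Set.sInter_subset_of_mem ⟨hE, hEne⟩)
        have hInot𝓛 : I ∉ 𝓛 := by
          intro hI
          apply hleast
          exact ⟨I, ⟨hI, hIne⟩, fun Z hZ => Set.sInter_subset_of_mem hZ⟩
        have hInotGood : ¬ IsGood I := by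
          intro h
          exact hInot𝓛 (mem_of_cmp hM (Or.inr (mem_of_good hG h)) hIcmp)
        set Cst := core ∅ I with hCstdef
        have hCstI : Cst ⊆ I := core_subset (Set.empty_subset I)
        have hCstcols : ∀ k, (fib Cst k).Nonempty → (fib Cst k).Infinite := by
          intro k hk
          rw [fib_core (Set.empty_subset I)] at hk ⊢
          by_cases h : (fib I k).Infinite
          · rwa [if_pos h]
          · rw [if_neg h, fib_empty] at hk
            exact absurd rfl hk.ne_empty
        have hjCst : fib I j ⊆ fib Cst j := by
          rw [fib_core (Set.empty_subset I), if_pos hIjinf]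
        have hCstne : Cst ≠ ∅ := by
          obtain ⟨z, hz⟩ := hIjinf.nonempty
          intro h
          have : z ∈ fib Cst j := hjCst hz
          rw [h] at this
          exact this
        have hCstnotgood : ¬ IsGood Cst := by
          intro hgood
          have hCst𝓛 : Cst ∈ 𝓛 := by
            apply mem_of_cmp hM (Or.inr (mem_of_good hG hgood))
            intro E hE
            rcases eq_or_ne E ∅ with rfl | hEne
            · exact Or.inr (Set.empty_subset _)
            · exact Or.inl (hCstI.trans (Set.sInter_subset_of_mem ⟨hE, hEne⟩))
          have : I ⊆ Cst := Set.sInter_subset_of_mem ⟨hCst𝓛, hCstne⟩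
          have heq : Cst = I := le_antisymm hCstI this
          rw [← heq] at hInotGood
          exact hInotGood hgood
        have hRfin : {k | (fib Cst k).Nonempty}.Finite := by
          by_contra h
          exact hCstnotgood ⟨hCstcols, h⟩
        obtain ⟨j', hBj', hnotC⟩ := ((hgoodB.2.diff hRfin).nonempty)
        have hBj'1 : (fib B j').Nonempty := hBj'
        have hBj'inf : (fib B j').Infinite := hgoodB.1 j' hBj'1
        have hIj'notinf : ¬ (fib I j').Infinite := by
          intro hinf
          apply hnotC
          obtain ⟨z, hz⟩ := hinf.nonempty
          refine ⟨z, ?_⟩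
          rw [fib_core (Set.empty_subset I), if_pos hinf]
          exact hz
        have hIj' : fib I j' = ∅ := by
          by_contra hne'
          have hfin : (fib I j').Finite := Set.not_infinite.mp hIj'notinf
          obtain ⟨z, hzB, hzI⟩ : ∃ z, z ∈ fib B j' ∧ z ∉ fib I j' := by
            by_contra hcon
            push_neg at hcon
            exact hIj'notinf (hBj'inf.mono hcon)
          obtain ⟨C, hCT, hzC⟩ : ∃ C ∈ T, (j', z) ∉ C := by
            by_contra hcon
            push_neg at hcon
            exact hzI (Set.mem_sInter.mpr hcon)
          have h0 : fib C j' = ∅ := by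
            refine hH (j', z) ⟨hzB, ?_⟩ C hCT.1 hzC
            rw [hAempty]
            exact Set.notMem_empty _
          apply hne'
          have : fib I j' ⊆ fib C j' := fib_mono (Set.sInter_subset_of_mem hCT) j'
          rw [h0] at this
          exact Set.eq_empty_iff_forall_notMem.mpr (fun z' hz' => this hz')
        obtain ⟨C₂', hC₂'T, hC₂'j'⟩ : ∃ C₂' ∈ T, fib C₂' j' = ∅ := by
          by_contra hcon
          push_neg at hcon
          have hsub' : fib B j' ⊆ fib I j' := by
            intro z hz
            apply Set.mem_sInter.mpr
            intro C hC
            by_contra hzC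
            exact (hcon C hC).ne_empty
              (hH (j', z) ⟨hz, by rw [hAempty]; exact Set.notMem_empty _⟩ C hC.1 hzC)
          obtain ⟨z, hz⟩ := hBj'1
          have : z ∈ fib I j' := hsub' hz
          rw [hIj'] at this
          exact this
        have hAj' : fib A j' = ∅ := by rw [hAempty, fib_empty]
        exact col_jump hG hM hA hAj' hB hBj'1 hBne (h2bgen j' hAj')
          ⟨C₂', hC₂'T.1, hC₂'T.2, hC₂'j'⟩

end Dense

section Weights

variable {𝓛 : Set (Set (ℕ × ℕ))}

abbrev JumpT (𝓛 : Set (Set (ℕ × ℕ))) := {p : Set (ℕ × ℕ) × Set (ℕ × ℕ) // IsJump 𝓛 p.1 p.2}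

lemma jump_disjoint (hM : IsMaxChainIn (insert ∅ (graphCopies G)) 𝓛)
    {p q : JumpT 𝓛} (hne : p ≠ q) : p.val.2 ⊆ q.val.1 ∨ q.val.2 ⊆ p.val.1 := by
  by_contra hcon
  push_neg at hcon
  obtain ⟨h1, h2⟩ := hcon
  obtain ⟨hp1, hp2, hplt, hpall⟩ := p.prop
  obtain ⟨hq1, hq2, hqlt, hqall⟩ := q.prop
  have e1 : q.val.1 ⊆ p.val.1 := (hpall _ hq1).resolve_right h1
  have e2 : p.val.2 ⊆ q.val.2 := (hpall _ hq2).resolve_left h2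
  have e3 : p.val.1 ⊆ q.val.1 := (hqall _ hp1).resolve_right h2
  have e4 : q.val.2 ⊆ p.val.2 := (hqall _ hp2).resolve_left h1
  apply hne
  apply Subtype.ext
  exact Prod.ext (le_antisymm e3 e1) (le_antisymm e2 e4)

/-- a chosen point in the difference of a jump -/
def jpt (p : JumpT 𝓛) : ℕ × ℕ := (Set.exists_of_ssubset p.prop.2.2.1).choose

lemma jpt_mem (p : JumpT 𝓛) : jpt p ∈ p.val.2 ∧ jpt p ∉ p.val.1 :=
  (Set.exists_of_ssubset p.prop.2.2.1).choose_spec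

lemma jpt_injective (hM : IsMaxChainIn (insert ∅ (graphCopies G)) 𝓛) :
    Function.Injective (jpt : JumpT 𝓛 → ℕ × ℕ) := by
  intro p q h
  by_contra hne
  rcases jump_disjoint hM hne with hd | hd
  · exact (jpt_mem q).2 (by rw [← h]; exact hd (jpt_mem p).1)
  · exact (jpt_mem p).2 (by rw [h]; exact hd (jpt_mem q).1)

lemma exists_weight (hM : IsMaxChainIn (insert ∅ (graphCopies G)) 𝓛) :
    ∃ w : JumpT 𝓛 → ℝ, Summable w ∧ ∀ p, 0 < w p := by
  have hcount : Countable (JumpT 𝓛) :=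
    Function.Injective.countable (jpt_injective hM)
  obtain ⟨j, hj⟩ := countable_iff_exists_injective (JumpT 𝓛) |>.mp hcount
  refine ⟨fun p => (1/2 : ℝ) ^ (j p), ?_, ?_⟩
  · exact (summable_geometric_two).comp_injective hj
  · intro p
    positivity

variable (w : JumpT 𝓛 → ℝ)

/-- the map sending a member of the chain to a real number, by summing weights of
jumps below it -/
def jf (X : Set (ℕ × ℕ)) : ℝ := ∑' p : JumpT 𝓛, if p.val.2 ⊆ X then w p else 0

variable (hw : Summable w) (hwpos : ∀ p, 0 < w p)

section flemmas
include hw hwpos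

lemma jg_nonneg (X : Set (ℕ × ℕ)) (p : JumpT 𝓛) :
    0 ≤ if p.val.2 ⊆ X then w p else 0 := by
  split_ifs
  · exact (hwpos _).le
  · exact le_refl _

lemma jg_le_w (X : Set (ℕ × ℕ)) (p : JumpT 𝓛) :
    (if p.val.2 ⊆ X then w p else 0) ≤ w p := by
  split_ifs
  · exact le_refl _
  · exact (hwpos _).le

lemma jg_summable (X : Set (ℕ × ℕ)) :
    Summable (fun p : JumpT 𝓛 => if p.val.2 ⊆ X then w p else 0) :=
  Summable.of_nonneg_of_le (jg_nonneg w hw hwpos X) (jg_le_w w hw hwpos X) hw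

lemma jf_nonneg (X : Set (ℕ × ℕ)) : 0 ≤ jf w X :=
  tsum_nonneg (jg_nonneg w hw hwpos X)

lemma jf_le_total (X : Set (ℕ × ℕ)) : jf w X ≤ ∑' p, w p :=
  Summable.tsum_le_tsum (jg_le_w w hw hwpos X) (jg_summable w hw hwpos X) hw

lemma jf_mono {X Y : Set (ℕ × ℕ)} (h : X ⊆ Y) : jf w X ≤ jf w Y := by
  apply Summable.tsum_le_tsum _ (jg_summable w hw hwpos X) (jg_summable w hw hwpos Y)
  intro p
  by_cases hp : p.val.2 ⊆ X
  · rw [if_pos hp, if_pos (hp.trans h)]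
  · rw [if_neg hp]
    exact jg_nonneg w hw hwpos Y p

lemma jf_empty : jf w (∅ : Set (ℕ × ℕ)) = 0 := by
  have : ∀ p : JumpT 𝓛, (if p.val.2 ⊆ (∅ : Set (ℕ × ℕ)) then w p else 0) = 0 := by
    intro p
    rw [if_neg]
    intro hsub
    exact (hsub (jpt_mem p).1)
  rw [jf, tsum_congr this, tsum_zero]

lemma jf_add_le (hM : IsMaxChainIn (insert ∅ (graphCopies G)) 𝓛)
    {X Y : Set (ℕ × ℕ)} (p₀ : JumpT 𝓛) (hXC : X ⊆ p₀.val.1) (hDY : p₀.val.2 ⊆ Y) :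
    jf w X + w p₀ ≤ jf w Y := by
  have h1 : ∀ p : JumpT 𝓛,
      (if p.val.2 ⊆ X then w p else 0) + (if p = p₀ then w p₀ else 0)
        ≤ (if p.val.2 ⊆ Y then w p else 0) := by
    intro p
    by_cases hp : p = p₀
    · subst hp
      rw [if_pos rfl, if_pos hDY, if_neg]
      · simp
      · intro hsub
        exact absurd ((jpt_mem p).1) (fun hmem => (jpt_mem p).2 (hXC (hsub hmem)))
    · rw [if_neg hp, add_zero]
      by_cases hp2 : p.val.2 ⊆ X
      · have hXY : X ⊆ Y := hXC.trans ((subset_of_ssubset p₀.prop.2.2.1).trans hDY)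
        rw [if_pos hp2, if_pos (hp2.trans hXY)]
      · rw [if_neg hp2]
        exact jg_nonneg w hw hwpos Y p
  have hδ : Summable (fun p : JumpT 𝓛 => if p = p₀ then w p₀ else 0) :=
    summable_of_ne_finset_zero (s := {p₀}) (fun b hb => if_neg (by simpa using hb))
  calc jf w X + w p₀
      = ∑' p : JumpT 𝓛, ((if p.val.2 ⊆ X then w p else 0) + (if p = p₀ then w p₀ else 0)) := by
        rw [Summable.tsum_add (jg_summable w hw hwpos X) hδ, tsum_ite_eq, jf]
    _ ≤ jf w Y := Summable.tsum_le_tsum h1 ((jg_summable w hw hwpos X).add hδ)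
        (jg_summable w hw hwpos Y)

include hG in
lemma jf_strict (hM : IsMaxChainIn (insert ∅ (graphCopies G)) 𝓛)
    {X Y : Set (ℕ × ℕ)} (hX : X ∈ 𝓛) (hY : Y ∈ 𝓛) (hXY : X ⊂ Y) :
    jf w X < jf w Y := by
  obtain ⟨C, D, hjump, hXC, hDY⟩ := jump_dense hG hM hX hY hXY
  have := jf_add_le w hw hwpos hM ⟨(C, D), hjump⟩ hXC hDY
  have hpos := hwpos (⟨(C, D), hjump⟩ : JumpT 𝓛)
  linarith

end flemmas

end Weights

section Approx

variable {𝓛 : Set (Set (ℕ × ℕ))}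

lemma chain_finset_lb {ι : Type*} (hM : IsMaxChainIn (insert ∅ (graphCopies G)) 𝓛)
    (T' : Set (Set (ℕ × ℕ))) (hT' : T' ⊆ 𝓛) (hne : T'.Nonempty)
    (s : Finset ι) (Z : ι → Set (ℕ × ℕ)) (hZ : ∀ i ∈ s, Z i ∈ T') :
    ∃ W ∈ T', ∀ i ∈ s, W ⊆ Z i := by
  classical
  induction s using Finset.induction_on with
  | empty => exact ⟨hne.choose, hne.choose_spec, by simp⟩
  | @insert i s hi ih =>
    obtain ⟨W, hW, hWs⟩ := ih (fun i hi => hZ i (Finset.mem_insert_of_mem hi))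
    have hZi : Z i ∈ T' := hZ i (Finset.mem_insert_self _ _)
    rcases chain_cmp hM (hT' hW) (hT' hZi) with h | h
    · refine ⟨W, hW, ?_⟩
      intro i' hi'
      rcases Finset.mem_insert.mp hi' with rfl | hmem
      · exact h
      · exact hWs i' hmem
    · refine ⟨Z i, hZi, ?_⟩
      intro i' hi'
      rcases Finset.mem_insert.mp hi' with rfl | hmem
      · exact subset_refl _
      · exact h.trans (hWs i' hmem)

lemma chain_finset_ub {ι : Type*} (hM : IsMaxChainIn (insert ∅ (graphCopies G)) 𝓛)
    (T' : Set (Set (ℕ × ℕ))) (hT' : T' ⊆ 𝓛) (hne : T'.Nonempty)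
    (s : Finset ι) (Z : ι → Set (ℕ × ℕ)) (hZ : ∀ i ∈ s, Z i ∈ T') :
    ∃ W ∈ T', ∀ i ∈ s, Z i ⊆ W := by
  classical
  induction s using Finset.induction_on with
  | empty => exact ⟨hne.choose, hne.choose_spec, by simp⟩
  | @insert i s hi ih =>
    obtain ⟨W, hW, hWs⟩ := ih (fun i hi => hZ i (Finset.mem_insert_of_mem hi))
    have hZi : Z i ∈ T' := hZ i (Finset.mem_insert_self _ _)
    rcases chain_cmp hM (hT' hW) (hT' hZi) with h | h
    · refine ⟨Z i, hZi, ?_⟩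
      intro i' hi'
      rcases Finset.mem_insert.mp hi' with rfl | hmem
      · exact subset_refl _
      · exact (hWs i' hmem).trans h
    · refine ⟨W, hW, ?_⟩
      intro i' hi'
      rcases Finset.mem_insert.mp hi' with rfl | hmem
      · exact h
      · exact hWs i' hmem

variable (w : JumpT 𝓛 → ℝ)

lemma approx_inf (hM : IsMaxChainIn (insert ∅ (graphCopies G)) 𝓛)
    (hw : Summable w) (hwpos : ∀ p, 0 < w p)
    (T' : Set (Set (ℕ × ℕ))) (hT' : T' ⊆ 𝓛) (hT'ne : T'.Nonempty)
    {ε : ℝ} (hε : 0 < ε) :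
    ∃ Z ∈ T', jf w Z < jf w (⋃₀ {E ∈ 𝓛 | ∀ Y ∈ T', E ⊆ Y}) + ε := by
  classical
  set B₀ := ⋃₀ {E ∈ 𝓛 | ∀ Y ∈ T', E ⊆ Y} with hB₀def
  -- choose a finset capturing all but ε of the total weight
  set Wtot := ∑' p, w p with hWdef
  obtain ⟨s, hs⟩ : ∃ s : Finset (JumpT 𝓛), Wtot - ε < ∑ p ∈ s, w p := by
    have := hw.hasSum
    have hev : ∀ᶠ (v : ℝ) in nhds Wtot, Wtot - ε < v :=
      eventually_gt_nhds (by linarith)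
    exact (this.eventually hev).exists
  have htail : ∑' (p : ↥(↑s : Set (JumpT 𝓛))ᶜ), w ↑p < ε := by
    have := Summable.sum_add_tsum_compl (s := s) hw
    linarith
  -- for each p ∈ s whose top is not below B₀, find a member of T' not above p.2
  have hXex : ∀ p : JumpT 𝓛, ¬ p.val.2 ⊆ B₀ → ∃ Z ∈ T', ¬ p.val.2 ⊆ Z := by
    intro p hp
    by_contra hcon
    push_neg at hcon
    exact hp (Set.subset_sUnion_of_mem ⟨p.prop.2.1, hcon⟩)
  set Zf : JumpT 𝓛 → Set (ℕ × ℕ) := fun p =>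
    if h : ∃ Z ∈ T', ¬ p.val.2 ⊆ Z then h.choose else hT'ne.choose with hZfdef
  have hZfT : ∀ p, Zf p ∈ T' := by
    intro p
    simp only [hZfdef]
    split_ifs with h
    · exact h.choose_spec.1
    · exact hT'ne.choose_spec
  have hZfp : ∀ p : JumpT 𝓛, ¬ p.val.2 ⊆ B₀ → ¬ p.val.2 ⊆ Zf p := by
    intro p hp
    have h := hXex p hp
    simp only [hZfdef, dif_pos h]
    exact h.choose_spec.2
  obtain ⟨W, hWT, hWs⟩ := chain_finset_lb hM T' hT' hT'ne s Zf (fun i _ => hZfT i)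
  refine ⟨W, hWT, ?_⟩
  have hsum : ∑ p ∈ s, (if p.val.2 ⊆ W then w p else 0) ≤ ∑ p ∈ s, (if p.val.2 ⊆ B₀ then w p else 0) := by
    apply Finset.sum_le_sum
    intro p hp
    by_cases h : p.val.2 ⊆ W
    · rw [if_pos h]
      have hpB : p.val.2 ⊆ B₀ := by
        by_contra hnB
        exact hZfp p hnB (h.trans (hWs p hp))
      rw [if_pos hpB]
    · rw [if_neg h]
      exact jg_nonneg w hw hwpos B₀ p
  have hsplit : jf w W = ∑ p ∈ s, (if p.val.2 ⊆ W then w p else 0)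
      + ∑' (p : ↥(↑s : Set (JumpT 𝓛))ᶜ), (if (p : JumpT 𝓛).val.2 ⊆ W then w p else 0) :=
    (Summable.sum_add_tsum_compl (s := s) (jg_summable w hw hwpos W)).symm
  have htail2 : ∑' (p : ↥(↑s : Set (JumpT 𝓛))ᶜ), (if (p : JumpT 𝓛).val.2 ⊆ W then w p else 0)
      ≤ ∑' (p : ↥(↑s : Set (JumpT 𝓛))ᶜ), w ↑p := by
    apply Summable.tsum_le_tsum _ ((jg_summable w hw hwpos W).subtype _) (hw.subtype _)
    intro p
    exact jg_le_w w hw hwpos W _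
  have hfin : ∑ p ∈ s, (if p.val.2 ⊆ B₀ then w p else 0) ≤ jf w B₀ :=
    Summable.sum_le_tsum s (fun p _ => jg_nonneg w hw hwpos B₀ p) (jg_summable w hw hwpos B₀)
  calc jf w W ≤ ∑ p ∈ s, (if p.val.2 ⊆ B₀ then w p else 0)
        + ∑' (p : ↥(↑s : Set (JumpT 𝓛))ᶜ), w ↑p := by
        rw [hsplit]; exact add_le_add hsum htail2
    _ < jf w B₀ + ε := by
        apply add_lt_add_of_le_of_lt hfin htail
    _ = jf w (⋃₀ {E ∈ 𝓛 | ∀ Y ∈ T', E ⊆ Y}) + ε := by rw [hB₀def]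

include hG in
lemma jf_sUnion_le (hM : IsMaxChainIn (insert ∅ (graphCopies G)) 𝓛)
    (hw : Summable w) (hwpos : ∀ p, 0 < w p)
    (S' : Set (Set (ℕ × ℕ))) (hS' : S' ⊆ 𝓛) (hne : S'.Nonempty)
    (x : ℝ) (hx : ∀ X ∈ S', jf w X ≤ x) : jf w (⋃₀ S') ≤ x := by
  classical
  set A₀ := ⋃₀ S' with hA₀def
  by_contra hcon
  push_neg at hcon
  obtain ⟨s, hs⟩ : ∃ s : Finset (JumpT 𝓛), x < ∑ p ∈ s, (if p.val.2 ⊆ A₀ then w p else 0) := by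
    have := (jg_summable w hw hwpos A₀).hasSum
    have hev : ∀ᶠ (v : ℝ) in nhds (jf w A₀), x < v := eventually_gt_nhds hcon
    exact (this.eventually hev).exists
  have hXex : ∀ p : JumpT 𝓛, p.val.2 ⊆ A₀ → ∃ X ∈ S', p.val.2 ⊆ X := by
    intro p hp
    by_contra hcon2
    push_neg at hcon2
    have hA₀p1 : A₀ ⊆ p.val.1 := by
      apply Set.sUnion_subset
      intro X hX
      rcases p.prop.2.2.2 X (hS' hX) with h | h
      · exact h
      · exact absurd h (hcon2 X hX)
    have := hp.trans hA₀p1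
    obtain ⟨v, hv1, hv2⟩ := Set.exists_of_ssubset p.prop.2.2.1
    exact hv2 (this hv1)
  set Xf : JumpT 𝓛 → Set (ℕ × ℕ) := fun p =>
    if h : ∃ X ∈ S', p.val.2 ⊆ X then h.choose else hne.choose with hXfdef
  have hXfS : ∀ p, Xf p ∈ S' := by
    intro p
    simp only [hXfdef]
    split_ifs with h
    · exact h.choose_spec.1
    · exact hne.choose_spec
  have hXfp : ∀ p : JumpT 𝓛, p.val.2 ⊆ A₀ → p.val.2 ⊆ Xf p := by
    intro p hp
    have h := hXex p hp
    simp only [hXfdef, dif_pos h]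
    exact h.choose_spec.2
  obtain ⟨W, hWS, hWs⟩ := chain_finset_ub hM S' hS' hne s Xf (fun i _ => hXfS i)
  have hsum : ∑ p ∈ s, (if p.val.2 ⊆ A₀ then w p else 0)
      ≤ ∑ p ∈ s, (if p.val.2 ⊆ W then w p else 0) := by
    apply Finset.sum_le_sum
    intro p hp
    by_cases h : p.val.2 ⊆ A₀
    · rw [if_pos h, if_pos ((hXfp p h).trans (hWs p hp))]
    · rw [if_neg h]
      exact jg_nonneg w hw hwpos W p
  have hfin : ∑ p ∈ s, (if p.val.2 ⊆ W then w p else 0) ≤ jf w W :=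
    Summable.sum_le_tsum s (fun p _ => jg_nonneg w hw hwpos W p) (jg_summable w hw hwpos W)
  have := hx W hWS
  linarith

end Approx

section Forward

variable {𝓛 : Set (Set (ℕ × ℕ))}

include hG in
theorem forward_dir (hM : IsMaxChainIn (insert ∅ (graphCopies G)) 𝓛) :
    ∃ K : Set ℝ, IsCompact K ∧ interior (closure K) = ∅ ∧
      Nonempty (↥𝓛 ≃o ↥K) ∧ ∃ m : ℝ, IsLeast K m ∧ Filter.NeBot (nhdsWithin m (K \ {m})) := by
  classical
  obtain ⟨w, hw, hwpos⟩ := exists_weight hM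
  set K : Set ℝ := (jf w) '' 𝓛 with hKdef
  have hKIcc : K ⊆ Set.Icc 0 (∑' p, w p) := by
    rintro _ ⟨X, hX, rfl⟩
    exact ⟨jf_nonneg w hw hwpos X, jf_le_total w hw hwpos X⟩
  have hfe : jf w (∅ : Set (ℕ × ℕ)) = 0 := jf_empty w hw hwpos
  have hclosed : IsClosed K := by
    apply isClosed_of_closure_subset
    intro x hx
    have hxIcc : x ∈ Set.Icc 0 (∑' p, w p) := closure_minimal hKIcc isClosed_Icc hx
    set S := {X ∈ 𝓛 | jf w X ≤ x} with hSdef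
    have hSsub : S ⊆ 𝓛 := Set.sep_subset _ _
    have hemptyS : ∅ ∈ S := by
      refine ⟨empty_mem hM, ?_⟩
      rw [hfe]
      exact hxIcc.1
    have hA₀mem : ⋃₀ S ∈ 𝓛 := sUnion_memL hG hM hSsub
    set A₀ := ⋃₀ S with hA₀def
    have hfA₀ : jf w A₀ ≤ x :=
      jf_sUnion_le hG w hM hw hwpos S hSsub ⟨∅, hemptyS⟩ x (fun X hX => hX.2)
    rcases eq_or_lt_of_le hfA₀ with heq | hlt
    · exact ⟨A₀, hA₀mem, heq⟩
    · set T := {X ∈ 𝓛 | x < jf w X} with hTdef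
      by_cases hTne : T.Nonempty
      · set B₀ := ⋃₀ {E ∈ 𝓛 | ∀ Y ∈ T, E ⊆ Y} with hB₀def
        have hB₀mem : B₀ ∈ 𝓛 := sUnion_memL hG hM (Set.sep_subset _ _)
        have hlb : ∀ Z ∈ T, B₀ ⊆ Z := fun Z hZ =>
          Set.sUnion_subset (fun E hE => hE.2 Z hZ)
        have hxle : x ≤ jf w B₀ := by
          by_contra hcon
          push_neg at hcon
          obtain ⟨Z, hZT, hZlt⟩ :=
            approx_inf w hM hw hwpos T (Set.sep_subset _ _) hTne (sub_pos.mpr hcon)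
          rw [← hB₀def] at hZlt
          have := hZT.2
          linarith
        have hle : jf w B₀ ≤ x := by
          by_contra hcon
          push_neg at hcon
          set ε := min (x - jf w A₀) (jf w B₀ - x) with hεdef
          have hεpos : 0 < ε := lt_min (by linarith) (by linarith)
          obtain ⟨y, hyK, hdist⟩ := Metric.mem_closure_iff.mp hx ε hεpos
          obtain ⟨X, hX𝓛, rfl⟩ := hyK
          rcases le_or_gt (jf w X) x with hc | hc
          · have hXS : X ∈ S := ⟨hX𝓛, hc⟩
            have : jf w X ≤ jf w A₀ := jf_mono w hw hwpos (Set.subset_sUnion_of_mem hXS)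
            have h1 : ε ≤ x - jf w X := le_trans (min_le_left _ _) (by linarith)
            rw [Real.dist_eq] at hdist
            have := le_abs_self (x - jf w X)
            linarith
          · have hXT : X ∈ T := ⟨hX𝓛, hc⟩
            have : jf w B₀ ≤ jf w X := jf_mono w hw hwpos (hlb X hXT)
            have h1 : ε ≤ jf w X - x := le_trans (min_le_right _ _) (by linarith)
            rw [Real.dist_eq, abs_sub_comm] at hdist
            have := le_abs_self (jf w X - x)
            linarith
        exact ⟨B₀, hB₀mem, le_antisymm hle hxle⟩
      · exfalso
        have hKle : K ⊆ Set.Iic (jf w A₀) := by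
          rintro _ ⟨X, hX, rfl⟩
          have : ¬ x < jf w X := fun hcon => hTne ⟨X, hX, hcon⟩
          push_neg at this
          exact jf_mono w hw hwpos (Set.subset_sUnion_of_mem ⟨hX, this⟩)
        have : x ∈ Set.Iic (jf w A₀) := closure_minimal hKle isClosed_Iic hx
        exact absurd this (by simpa using hlt)
  have hcompact : IsCompact K := IsCompact.of_isClosed_subset isCompact_Icc hclosed hKIcc
  have hint : interior (closure K) = ∅ := by
    rw [hclosed.closure_eq]
    by_contra h
    obtain ⟨x, hx⟩ := Set.nonempty_iff_ne_empty.mpr h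
    obtain ⟨ε, hε, hball⟩ := Metric.isOpen_iff.mp isOpen_interior x hx
    have hxK : x ∈ K := interior_subset hx
    have hx2K : x + ε/2 ∈ K := by
      apply interior_subset
      apply hball
      rw [Metric.mem_ball, Real.dist_eq]
      rw [show x + ε/2 - x = ε/2 by ring, abs_of_pos (by linarith)]
      linarith
    obtain ⟨X, hX𝓛, hXeq⟩ := hxK
    obtain ⟨Y, hY𝓛, hYeq⟩ := hx2K
    have hssub : X ⊂ Y := by
      have hne : X ≠ Y := by
        intro hcon
        rw [hcon, hYeq] at hXeq
        linarith
      rcases chain_cmp hM hX𝓛 hY𝓛 with hc | hc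
      · exact ssubset_of_subset_of_ne hc hne
      · have := jf_mono w hw hwpos hc
        rw [hXeq, hYeq] at this
        linarith
    obtain ⟨C, D, hjump, hXC, hDY⟩ := jump_dense hG hM hX𝓛 hY𝓛 hssub
    have hCD : jf w C < jf w D :=
      jf_strict hG w hw hwpos hM hjump.1 hjump.2.1 hjump.2.2.1
    set z := (jf w C + jf w D)/2 with hzdef
    have hCz : jf w C < z := by rw [hzdef]; linarith
    have hzD : z < jf w D := by rw [hzdef]; linarith
    have hxC : x ≤ jf w C := by
      rw [← hXeq]; exact jf_mono w hw hwpos hXC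
    have hDy : jf w D ≤ x + ε/2 := by
      rw [← hYeq]; exact jf_mono w hw hwpos hDY
    have hzK : z ∈ K := by
      apply interior_subset
      apply hball
      rw [Metric.mem_ball, Real.dist_eq, abs_of_nonneg (by linarith)]
      linarith
    obtain ⟨E, hE𝓛, hEz⟩ := hzK
    rcases hjump.2.2.2 E hE𝓛 with hc | hc
    · have := jf_mono w hw hwpos hc
      rw [hEz] at this
      linarith
    · have := jf_mono w hw hwpos hc
      rw [hEz] at this
      linarith
  have hleast : IsLeast K 0 := by
    constructor
    · exact ⟨∅, empty_mem hM, hfe⟩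
    · rintro _ ⟨X, hX, rfl⟩
      exact jf_nonneg w hw hwpos X
  have hNB : Filter.NeBot (nhdsWithin 0 (K \ {0})) := by
    rw [← mem_closure_iff_nhdsWithin_neBot]
    set T' := {X ∈ 𝓛 | X ≠ ∅} with hT'def
    have hT'sub : T' ⊆ 𝓛 := Set.sep_subset _ _
    have hT'ne : T'.Nonempty := ⟨Set.univ, univ_memL hG hM, by
      intro h
      exact (Set.univ_nonempty (α := ℕ × ℕ)).ne_empty h⟩
    have hB₀'empty : ⋃₀ {E ∈ 𝓛 | ∀ Y ∈ T', E ⊆ Y} = ∅ := by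
      by_contra hne
      apply no_least hG hM
      refine ⟨_, sUnion_memL hG hM (Set.sep_subset _ _), hne, ?_⟩
      intro E hE hEne
      exact Set.sUnion_subset (fun E' hE' => hE'.2 E ⟨hE, hEne⟩)
    rw [Metric.mem_closure_iff]
    intro ε hε
    obtain ⟨Z, hZT', hZlt⟩ := approx_inf w hM hw hwpos T' hT'sub hT'ne hε
    rw [hB₀'empty, hfe, zero_add] at hZlt
    have hZpos : 0 < jf w Z := by
      have := jf_strict hG w hw hwpos hM (empty_mem hM) (hT'sub hZT')
        ((Set.empty_ssubset).mpr (Set.nonempty_iff_ne_empty.mpr hZT'.2))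
      rwa [hfe] at this
    refine ⟨jf w Z, ⟨⟨Z, hZT'.1, rfl⟩, ?_⟩, ?_⟩
    · simp only [Set.mem_singleton_iff]
      exact ne_of_gt hZpos
    · rw [Real.dist_eq, abs_sub_comm, sub_zero, abs_of_pos hZpos]
      exact hZlt
  have hinj : ∀ X ∈ 𝓛, ∀ Y ∈ 𝓛, jf w X = jf w Y → X = Y := by
    intro X hX Y hY hXY
    by_contra hne
    rcases chain_cmp hM hX hY with hc | hc
    · have := jf_strict hG w hw hwpos hM hX hY (ssubset_of_subset_of_ne hc hne)
      linarith
    · have := jf_strict hG w hw hwpos hM hY hX (ssubset_of_subset_of_ne hc (Ne.symm hne))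
      linarith
  have hbij : Function.Bijective (fun X : ↥𝓛 => (⟨jf w X.1, X.1, X.2, rfl⟩ : ↥K)) := by
    constructor
    · intro X Y h
      have : jf w X.1 = jf w Y.1 := congrArg Subtype.val h
      exact Subtype.ext (hinj X.1 X.2 Y.1 Y.2 this)
    · rintro ⟨_, X, hX, rfl⟩
      exact ⟨⟨X, hX⟩, rfl⟩
  refine ⟨K, hcompact, hint, ⟨?_⟩, 0, hleast, hNB⟩
  refine ⟨Equiv.ofBijective _ hbij, ?_⟩
  intro a b
  constructor
  · intro h
    have h' : jf w a.1 ≤ jf w b.1 := h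
    show a.1 ⊆ b.1
    by_contra hn
    rcases chain_cmp hM a.2 b.2 with hc | hc
    · exact hn hc
    · have hbne : b.1 ≠ a.1 := by
        intro hcon
        exact hn (hcon ▸ subset_refl _)
      have := jf_strict hG w hw hwpos hM b.2 a.2 (ssubset_of_subset_of_ne hc hbne)
      linarith
  · intro h
    exact jf_mono w hw hwpos h

end Forward

section Backward

variable {K : Set ℝ} {m : ℝ}

/-- right endpoints of gaps of `K` -/
def Qset (K : Set ℝ) : Set ℝ := {b | b ∈ K ∧ ∃ a ∈ K, a < b ∧ ∀ z ∈ K, z ≤ a ∨ b ≤ z}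

lemma Qset_subset : Qset K ⊆ K := fun _ hb => hb.1

lemma gapAbove (hK : IsCompact K) (hint : interior K = ∅)
    {x y : ℝ} (hx : x ∈ K) (hy : y ∈ K) (hxy : x < y) :
    ∃ b ∈ Qset K, x < b ∧ b ≤ y := by
  obtain ⟨u, hu1, hu2⟩ : ∃ u, u ∈ Set.Ioo x y ∧ u ∉ K := by
    by_contra hcon
    push_neg at hcon
    have hsub : Set.Ioo x y ⊆ K := fun u hu => hcon u hu
    have : Set.Ioo x y ⊆ interior K := interior_maximal hsub isOpen_Ioo
    rw [hint] at this
    obtain ⟨t, ht⟩ := Set.nonempty_Ioo.mpr hxy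
    exact this ht
  set K₁ := K ∩ Set.Iic u with hK₁def
  set K₂ := K ∩ Set.Ici u with hK₂def
  have hK₁c : IsCompact K₁ := hK.inter_right isClosed_Iic
  have hK₂c : IsCompact K₂ := hK.inter_right isClosed_Ici
  have hK₁ne : K₁.Nonempty := ⟨x, hx, le_of_lt hu1.1⟩
  have hK₂ne : K₂.Nonempty := ⟨y, hy, le_of_lt hu1.2⟩
  set a := sSup K₁ with hadef
  set b := sInf K₂ with hbdef
  have haK₁ : a ∈ K₁ := hK₁c.sSup_mem hK₁ne
  have hbK₂ : b ∈ K₂ := hK₂c.sInf_mem hK₂ne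
  have hau : a < u := lt_of_le_of_ne haK₁.2 (fun h => hu2 (by rw [← h]; exact haK₁.1))
  have hub : u < b := lt_of_le_of_ne hbK₂.2 (fun h => hu2 (by rw [h]; exact hbK₂.1))
  have hgap : ∀ z ∈ K, z ≤ a ∨ b ≤ z := by
    intro z hz
    rcases le_total z u with h | h
    · exact Or.inl (le_csSup hK₁c.bddAbove ⟨hz, h⟩)
    · exact Or.inr (csInf_le hK₂c.bddBelow ⟨hz, h⟩)
  have hxa : x ≤ a := le_csSup hK₁c.bddAbove ⟨hx, le_of_lt hu1.1⟩
  have hby : b ≤ y := csInf_le hK₂c.bddBelow ⟨hy, le_of_lt hu1.2⟩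
  exact ⟨b, ⟨hbK₂.1, a, haK₁.1, lt_trans hau hub, hgap⟩, lt_of_le_of_lt hxa (lt_trans hau hub), hby⟩

lemma near_min (hm : IsLeast K m) (hNB : Filter.NeBot (nhdsWithin m (K \ {m})))
    {ε : ℝ} (hε : 0 < ε) : ∃ z ∈ K, m < z ∧ z < m + ε := by
  have hcl : m ∈ closure (K \ {m}) := mem_closure_iff_nhdsWithin_neBot.mpr hNB
  obtain ⟨z, ⟨hzK, hzm⟩, hdist⟩ := Metric.mem_closure_iff.mp hcl ε hε
  have hzne : z ≠ m := by simpa using hzm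
  have hmz : m < z := lt_of_le_of_ne (hm.2 hzK) (Ne.symm hzne)
  refine ⟨z, hzK, hmz, ?_⟩
  rw [Real.dist_eq, abs_sub_comm, abs_of_pos (by linarith)] at hdist
  linarith

lemma m_lt_Qset (hm : IsLeast K m) {b : ℝ} (hb : b ∈ Qset K) : m < b := by
  obtain ⟨hbK, a, haK, hab, -⟩ := hb
  exact lt_of_le_of_lt (hm.2 haK) hab

lemma Qset_dense_step (hK : IsCompact K) (hint : interior K = ∅)
    (hm : IsLeast K m) (hNB : Filter.NeBot (nhdsWithin m (K \ {m})))
    {b : ℝ} (hb : b ∈ Qset K) : ∃ b' ∈ Qset K, b' < b := by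
  obtain ⟨hbK, a, haK, hab, hgap⟩ := hb
  have hma : m < a := by
    obtain ⟨z, hzK, hmz, hzb⟩ := near_min hm hNB (show (0:ℝ) < b - m by
      have := m_lt_Qset hm ⟨hbK, a, haK, hab, hgap⟩
      linarith)
    rcases hgap z hzK with h | h
    · exact lt_of_lt_of_le hmz h
    · linarith
  obtain ⟨b', hb', hmb', hb'a⟩ := gapAbove hK hint hm.1 haK hma
  exact ⟨b', hb', lt_of_le_of_lt hb'a hab⟩

lemma Qset_below_infinite (hK : IsCompact K) (hint : interior K = ∅)
    (hm : IsLeast K m) (hNB : Filter.NeBot (nhdsWithin m (K \ {m})))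
    {c : ℝ} (hc : c ∈ K) (hmc : m < c) : {b ∈ Qset K | b ≤ c}.Infinite := by
  intro hfin
  have hne : {b ∈ Qset K | b ≤ c}.Nonempty := by
    obtain ⟨b, hb, -, hbc⟩ := gapAbove hK hint hm.1 hc hmc
    exact ⟨b, hb, hbc⟩
  have hmem : sInf {b ∈ Qset K | b ≤ c} ∈ {b ∈ Qset K | b ≤ c} := hne.csInf_mem hfin
  obtain ⟨b', hb'Q, hb'lt⟩ := Qset_dense_step hK hint hm hNB hmem.1
  have : sInf {b ∈ Qset K | b ≤ c} ≤ b' :=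
    csInf_le hfin.bddBelow ⟨hb'Q, le_trans (le_of_lt hb'lt) hmem.2⟩
  linarith

lemma Qset_countable : (Qset K).Countable := by
  classical
  set f : ℝ → ℚ := fun b =>
    if h : b ∈ Qset K then (exists_rat_btwn h.2.choose_spec.2.1).choose else 0 with hfdef
  have hf : ∀ b (h : b ∈ Qset K),
      (h.2.choose : ℝ) < (f b : ℝ) ∧ ((f b : ℝ)) < b := by
    intro b h
    simp only [hfdef, dif_pos h]
    exact (exists_rat_btwn h.2.choose_spec.2.1).choose_spec
  have hmono : ∀ b ∈ Qset K, ∀ b' ∈ Qset K, b < b' → f b < f b' := by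
    intro b hb b' hb' hlt
    have h1 := hf b hb
    have h2 := hf b' hb'
    have hba : b ≤ (hb'.2.choose : ℝ) := by
      rcases hb'.2.choose_spec.2.2 b hb.1 with h | h
      · exact h
      · linarith
    have hcast : (f b : ℝ) < (f b' : ℝ) := by linarith [h1.2, h2.1]
    exact_mod_cast hcast
  have hinj : Set.InjOn f (Qset K) := by
    intro b hb b' hb' heq
    by_contra hne
    rcases lt_or_gt_of_ne hne with hlt | hlt
    · exact (hmono b hb b' hb' hlt).ne heq
    · exact (hmono b' hb' b hb hlt).ne (heq.symm)
  rw [Set.countable_iff_exists_injOn]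
  exact ⟨fun b => Encodable.encode (f b), fun b hb b' hb' h =>
    hinj hb hb' (Encodable.encode_injective h)⟩

end Backward

section Bijection

lemma exists_good_bijection (ρ : ℕ → ℕ) (hρ : ∀ n, {i | n ≤ ρ i}.Infinite) :
    ∃ p : ℕ → ℕ × ℕ, Function.Bijective p ∧
      ∀ n k, {t : ℕ | ∃ i, n ≤ ρ i ∧ p i = (k, t)}.Infinite := by
  classical
  have hd_ex : ∀ n c : ℕ, ∃ i, n ≤ ρ i ∧ c < i := by
    intro n c
    obtain ⟨i, hi, hci⟩ := (hρ n).exists_gt c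
    exact ⟨i, hi, hci⟩
  set d : ℕ → ℕ := fun n => Nat.rec 0 (fun n pr => (hd_ex (n+1) (pr+1)).choose) n with hddef
  have hdsucc : ∀ n, d (n+1) = (hd_ex (n+1) (d n + 1)).choose := fun n => rfl
  have hdgap : ∀ n, d n + 1 < d (n+1) := by
    intro n
    rw [hdsucc]
    exact (hd_ex (n+1) (d n + 1)).choose_spec.2
  have hdρ : ∀ n, 0 < n → n ≤ ρ (d n) := by
    intro n hn
    cases n with
    | zero => omega
    | succ n =>
      rw [hdsucc]
      exact (hd_ex (n+1) (d n + 1)).choose_spec.1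
  have hdmono : StrictMono d := strictMono_nat_of_lt_succ (fun n => by have := hdgap n; omega)
  have hdinj : Function.Injective d := hdmono.injective
  set Cpred : ℕ → Prop := fun i => ¬ ∃ u, d u = i with hCdef
  have hCinf : (setOf Cpred).Infinite := by
    apply infinite_of_injective_forall_mem (f := fun n => d n + 1)
    · intro a b h
      simp only at h
      exact hdinj (by omega)
    · intro n
      show ¬ ∃ u, d u = d n + 1
      rintro ⟨u, hu⟩
      rcases le_or_gt u n with h | h
      · have : d u ≤ d n := hdmono.monotone h
        omega
      · have : d (n+1) ≤ d u := hdmono.monotone h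
        have := hdgap n
        omega
  set cnt : ℕ → ℕ := fun i => Nat.count Cpred i with hcntdef
  set p : ℕ → ℕ × ℕ := fun i =>
    if h : ∃ u, d u = i then ((h.choose).unpair.1, 2 * (h.choose).unpair.2 + 1)
    else ((cnt i).unpair.1, 2 * (cnt i).unpair.2) with hpdef
  have hpd : ∀ u, p (d u) = (u.unpair.1, 2 * u.unpair.2 + 1) := by
    intro u
    have h : ∃ u', d u' = d u := ⟨u, rfl⟩
    have he : h.choose = u := hdinj h.choose_spec
    simp only [hpdef, dif_pos h, he]
  have hpc : ∀ i, Cpred i → p i = ((cnt i).unpair.1, 2 * (cnt i).unpair.2) := by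
    intro i hi
    simp only [hpdef]
    rw [dif_neg hi]
  have hnth : ∀ t : ℕ, cnt (Nat.nth Cpred t) = t := by
    intro t
    exact Nat.count_nth (fun hf => absurd hf hCinf)
  refine ⟨p, ⟨?_, ?_⟩, ?_⟩
  · -- injective
    intro i i' heq
    by_cases hi : ∃ u, d u = i <;> by_cases hi' : ∃ u, d u = i'
    · obtain ⟨u, hu⟩ := hi
      obtain ⟨u', hu'⟩ := hi'
      subst hu; subst hu'
      rw [hpd, hpd, Prod.mk.injEq] at heq
      obtain ⟨h1, h2'⟩ := heq
      have h2 : u.unpair.2 = u'.unpair.2 := by omega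
      have : u = u' := by
        rw [← Nat.pair_unpair u, ← Nat.pair_unpair u', h1, h2]
      rw [this]
    · obtain ⟨u, hu⟩ := hi
      subst hu
      rw [hpd, hpc i' hi', Prod.mk.injEq] at heq
      omega
    · obtain ⟨u, hu⟩ := hi'
      subst hu
      rw [hpc i hi, hpd, Prod.mk.injEq] at heq
      omega
    · rw [hpc i hi, hpc i' hi', Prod.mk.injEq] at heq
      obtain ⟨h1, h2'⟩ := heq
      have h2 : (cnt i).unpair.2 = (cnt i').unpair.2 := by omega
      have hcc : cnt i = cnt i' := by
        rw [← Nat.pair_unpair (cnt i), ← Nat.pair_unpair (cnt i'), h1, h2]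
      have e1 : Nat.nth Cpred (cnt i) = i := Nat.nth_count hi
      have e2 : Nat.nth Cpred (cnt i') = i' := Nat.nth_count hi'
      rw [← e1, ← e2, hcc]
  · -- surjective
    rintro ⟨k, j⟩
    rcases Nat.even_or_odd j with ⟨t, ht⟩ | ⟨t, ht⟩
    · refine ⟨Nat.nth Cpred (Nat.pair k t), ?_⟩
      have hCi : Cpred (Nat.nth Cpred (Nat.pair k t)) := Nat.nth_mem_of_infinite hCinf _
      rw [hpc _ hCi, hnth, Nat.unpair_pair]
      exact Prod.ext rfl (by omega)
    · refine ⟨d (Nat.pair k t), ?_⟩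
      rw [hpd, Nat.unpair_pair]
      exact Prod.ext rfl (by omega)
  · -- column property
    intro n k
    apply infinite_of_injective_forall_mem (f := fun s : ℕ => 2 * (Nat.pair k (s + n + 1)).unpair.2 + 1)
    · intro a b h
      simp only [Nat.unpair_pair] at h
      omega
    · intro s
      refine ⟨d (Nat.pair k (s + n + 1)), ?_, ?_⟩
      · have h1 : s + n + 1 ≤ Nat.pair k (s + n + 1) := Nat.right_le_pair _ _
        have h2 := hdρ (Nat.pair k (s + n + 1)) (by omega)
        omega
      · rw [hpd, Nat.unpair_pair]
  
end Bijection

section BackMain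

variable {K : Set ℝ} {m : ℝ}

include hG in
theorem backward_dir (hK : IsCompact K) (hnwd : interior (closure K) = ∅)
    (hm : IsLeast K m) (hNB : Filter.NeBot (nhdsWithin m (K \ {m}))) :
    ∃ 𝓛 : Set (Set (ℕ × ℕ)), IsMaxChainIn (insert ∅ (graphCopies G)) 𝓛 ∧
      Nonempty (↥K ≃o ↥𝓛) := by
  classical
  have hKc : IsClosed K := hK.isClosed
  have hKne : K.Nonempty := ⟨m, hm.1⟩
  have hint : interior K = ∅ := by rw [← hKc.closure_eq]; exact hnwd
  have hQcount : (Qset K).Countable := Qset_countable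
  have hQsubK : Qset K ⊆ K := Qset_subset
  have hmmax : m < sSup K := by
    obtain ⟨z, hz, hmz, _⟩ := near_min hm hNB one_pos
    exact lt_of_lt_of_le hmz (le_csSup hK.bddAbove hz)
  have hQinf : (Qset K).Infinite := by
    have h1 := Qset_below_infinite hK hint hm hNB (hK.sSup_mem hKne) hmmax
    exact h1.mono (Set.sep_subset _ _)
  haveI hc1 : Countable ↥(Qset K) := hQcount.to_subtype
  haveI hc2 : Infinite ↥(Qset K) := hQinf.to_subtype
  obtain ⟨DD⟩ : Nonempty (Denumerable ↥(Qset K)) := nonempty_denumerable_iff.mpr ⟨hc1, hc2⟩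
  set E : ↥(Qset K) ≃ ℕ := @Denumerable.eqv _ DD with hEdef
  -- the coinitial sequence
  have hstep : ∀ r : ℝ, m < r → ∀ n : ℕ, ∃ z, (z ∈ K ∧ m < z) ∧ z < r ∧ z < m + 1 / ((n:ℝ)+1) := by
    intro r hr n
    have hεpos : 0 < min (r - m) (1 / ((n:ℝ)+1)) := lt_min (by linarith) (by positivity)
    obtain ⟨z, hz, hmz, hzlt⟩ := near_min hm hNB hεpos
    have h1 := min_le_left (r - m) (1 / ((n:ℝ)+1))
    have h2 := min_le_right (r - m) (1 / ((n:ℝ)+1))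
    exact ⟨z, ⟨hz, hmz⟩, by linarith, by linarith⟩
  set F : ℕ → {r : ℝ // r ∈ K ∧ m < r} := fun n =>
    Nat.rec ⟨sSup K, hK.sSup_mem hKne, hmmax⟩
      (fun n pr => ⟨(hstep pr.1 pr.2.2 n).choose, (hstep pr.1 pr.2.2 n).choose_spec.1⟩) n
    with hFdef
  set x : ℕ → ℝ := fun n => (F n).1 with hxdef
  have hxK : ∀ n, x n ∈ K := fun n => (F n).2.1
  have hxm : ∀ n, m < x n := fun n => (F n).2.2
  have hxdec : ∀ n, x (n+1) < x n := fun n =>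
    (hstep (F n).1 (F n).2.2 n).choose_spec.2.1
  have hxsmall : ∀ n, x (n+1) < m + 1 / ((n:ℝ)+1) := fun n =>
    (hstep (F n).1 (F n).2.2 n).choose_spec.2.2
  have hxanti : StrictAnti x := strictAnti_nat_of_succ_lt hxdec
  have hcoin : ∀ y : ℝ, m < y → ∃ n, x n < y := by
    intro y hy
    obtain ⟨n, hn⟩ := exists_nat_one_div_lt (show (0:ℝ) < y - m by linarith)
    have := hxsmall n
    exact ⟨n+1, by linarith⟩
  -- ranks
  have hbpos : ∀ b : ↥(Qset K), m < (b : ℝ) := fun b => m_lt_Qset hm b.2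
  have hνex : ∀ b : ↥(Qset K), ∃ n, x n < (b : ℝ) := fun b => hcoin _ (hbpos b)
  set ν : ↥(Qset K) → ℕ := fun b => Nat.find (hνex b) with hνdef
  have hνspec : ∀ b, x (ν b) < (b : ℝ) := fun b => Nat.find_spec (hνex b)
  have hble_iff : ∀ (b : ↥(Qset K)) (n : ℕ), (b : ℝ) ≤ x n ↔ n < ν b := by
    intro b n
    constructor
    · intro h
      by_contra hn
      push_neg at hn
      have h1 : x n ≤ x (ν b) := hxanti.antitone hn
      have h2 := hνspec b
      linarith
    · intro hn
      exact le_of_not_gt (Nat.find_min (hνex b) hn)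
  set ρ : ℕ → ℕ := fun i => ν (E.symm i) with hρdef
  have hρinf : ∀ n, {i | n ≤ ρ i}.Infinite := by
    intro n
    have h1 : {b ∈ Qset K | b ≤ x n}.Infinite :=
      Qset_below_infinite hK hint hm hNB (hxK n) (hxm n)
    set f : ℝ → ℕ := fun r => if h : r ∈ Qset K then E ⟨r, h⟩ else 0 with hfdef
    have hinjOn : Set.InjOn f {b ∈ Qset K | b ≤ x n} := by
      intro b hb b' hb' heq
      simp only [hfdef, dif_pos hb.1, dif_pos hb'.1] at heq
      have := E.injective heq
      exact congrArg Subtype.val this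
    have himg : (f '' {b ∈ Qset K | b ≤ x n}).Infinite := h1.image hinjOn
    apply himg.mono
    rintro _ ⟨b, ⟨hbQ, hble⟩, rfl⟩
    show n ≤ ρ (f b)
    have hfb : f b = E ⟨b, hbQ⟩ := by simp only [hfdef, dif_pos hbQ]
    rw [hfb, hρdef]
    simp only [Equiv.symm_apply_apply]
    have : n < ν ⟨b, hbQ⟩ := (hble_iff ⟨b, hbQ⟩ n).mp hble
    omega
  obtain ⟨p, hpbij, hpcol⟩ := exists_good_bijection ρ hρinf
  set g : ↥(Qset K) → ℕ × ℕ := fun b => p (E b) with hgdef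
  have hginj : Function.Injective g := hpbij.1.comp E.injective
  have hgsurj : Function.Surjective g := hpbij.2.comp E.surjective
  set A : ℝ → Set (ℕ × ℕ) := fun r => g '' {b : ↥(Qset K) | (b : ℝ) ≤ r} with hAdef
  have hAmono : ∀ {r s : ℝ}, r ≤ s → A r ⊆ A s := by
    rintro r s hrs _ ⟨b, hb, rfl⟩
    exact ⟨b, le_trans hb hrs, rfl⟩
  have hAm : A m = ∅ := by
    apply Set.eq_empty_iff_forall_notMem.mpr
    rintro v ⟨b, hb, rfl⟩
    exact absurd hb (not_le.mpr (hbpos b))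
  have hAmax : A (sSup K) = Set.univ := by
    apply Set.eq_univ_iff_forall.mpr
    intro v
    obtain ⟨b, hbv⟩ := hgsurj v
    exact ⟨b, le_csSup hK.bddAbove (hQsubK b.2), hbv⟩
  have hAcol : ∀ r ∈ K, m < r → ∀ k, (fib (A r) k).Infinite := by
    intro r hr hmr k
    obtain ⟨n, hn⟩ := hcoin r hmr
    have hsub : {t | ∃ i, n+1 ≤ ρ i ∧ p i = (k, t)} ⊆ fib (A r) k := by
      rintro t ⟨i, hρi, hpi⟩
      have hble : ((E.symm i : ↥(Qset K)) : ℝ) ≤ x n := by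
        apply (hble_iff (E.symm i) n).mpr
        have : ρ i = ν (E.symm i) := rfl
        omega
      show (k, t) ∈ A r
      refine ⟨E.symm i, by show ((E.symm i : ↥(Qset K)) : ℝ) ≤ r; linarith, ?_⟩
      show g (E.symm i) = (k, t)
      rw [hgdef]
      simp only [Equiv.apply_symm_apply]
      exact hpi
    exact (hpcol (n+1) k).mono hsub
  have hAgood : ∀ r ∈ K, m < r → IsGood (A r) := by
    intro r hr hmr
    constructor
    · intro k _
      exact hAcol r hr hmr k
    · apply infinite_of_injective_forall_mem (f := fun k : ℕ => k) Function.injective_id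
      intro k
      exact (hAcol r hr hmr k).nonempty
  have hAmem : ∀ r ∈ K, A r ∈ insert ∅ (graphCopies G) := by
    intro r hr
    rcases eq_or_lt_of_le (hm.2 hr) with heq | hlt
    · left
      rw [← heq]
      exact hAm
    · right
      exact mem_of_good hG (hAgood r hr hlt)
  have hAstrictmono : ∀ {r s : ℝ}, r ∈ K → s ∈ K → r < s → ∃ v, v ∈ A s ∧ v ∉ A r := by
    intro r s hrK hsK hrs
    obtain ⟨b, hbQ, hrb, hbs⟩ := gapAbove hK hint hrK hsK hrs
    refine ⟨g ⟨b, hbQ⟩, ⟨⟨b, hbQ⟩, hbs, rfl⟩, ?_⟩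
    rintro ⟨b', hb', hgb⟩
    have hbb : b' = ⟨b, hbQ⟩ := hginj hgb
    rw [hbb] at hb'
    exact absurd hb' (not_le.mpr hrb)
  set 𝓛 := A '' K with h𝓛def
  have hchain : IsChain (· ⊆ ·) 𝓛 := by
    rintro _ ⟨r, hr, rfl⟩ _ ⟨s, hs, rfl⟩ hne
    rcases le_total r s with h | h
    · exact Or.inl (hAmono h)
    · exact Or.inr (hAmono h)
  have hsub𝓛 : 𝓛 ⊆ insert ∅ (graphCopies G) := by
    rintro _ ⟨r, hr, rfl⟩
    exact hAmem r hr
  have hmaxchain : IsMaxChainIn (insert ∅ (graphCopies G)) 𝓛 := by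
    refine ⟨hsub𝓛, hchain, ?_⟩
    intro 𝓛' h𝓛'P h𝓛'chain h𝓛𝓛'
    apply Set.Subset.antisymm _ h𝓛𝓛'
    intro C hC
    have hcmp : ∀ r ∈ K, A r ⊆ C ∨ C ⊆ A r := by
      intro r hr
      have hmem : A r ∈ 𝓛' := h𝓛𝓛' ⟨r, hr, rfl⟩
      rcases eq_or_ne (A r) C with heq | hne
      · exact Or.inl heq.subset
      · exact h𝓛'chain hmem hC hne
    set S := {r ∈ K | A r ⊆ C} with hSdef
    have hmS : m ∈ S := ⟨hm.1, by rw [hAm]; exact Set.empty_subset _⟩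
    have hSne : S.Nonempty := ⟨m, hmS⟩
    have hSbdd : BddAbove S := hK.bddAbove.mono (Set.sep_subset _ _)
    set s₀ := sSup S with hs₀def
    have hs₀K : s₀ ∈ K := by
      have h1 : s₀ ∈ closure S := csSup_mem_closure hSne hSbdd
      have h2 : closure S ⊆ closure K := closure_mono (Set.sep_subset _ _)
      rw [hKc.closure_eq] at h2
      exact h2 h1
    have hAs₀C : A s₀ ⊆ C := by
      rintro _ ⟨b, hb, rfl⟩
      by_cases hex : ∃ r ∈ S, (b : ℝ) ≤ r
      · obtain ⟨r, hrS, hbr⟩ := hex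
        exact hrS.2 ⟨b, hbr, rfl⟩
      · exfalso
        push_neg at hex
        have hs₀b : s₀ ≤ (b : ℝ) := csSup_le hSne (fun r hr => le_of_lt (hex r hr))
        have hbs₀ : (b : ℝ) = s₀ := le_antisymm hb hs₀b
        obtain ⟨hbK, a, haK, hab, hgap⟩ := b.2
        have hra : ∀ r ∈ S, r ≤ a := by
          intro r hrS
          rcases hgap r hrS.1 with h | h
          · exact h
          · exact absurd (hex r hrS) (not_lt.mpr h)
        have h1 : s₀ ≤ a := csSup_le hSne hra
        rw [hbs₀] at hab
        linarith
    have hs₀S : s₀ ∈ S := ⟨hs₀K, hAs₀C⟩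
    set TK := {y ∈ K | s₀ < y} with hTKdef
    by_cases hTKne : TK.Nonempty
    · have hnotS : ∀ y ∈ TK, ¬ (A y ⊆ C) := by
        intro y hy hsub
        have h1 : y ∈ S := ⟨hy.1, hsub⟩
        have h2 : y ≤ s₀ := le_csSup hSbdd h1
        exact absurd hy.2 (not_lt.mpr h2)
      have hCsub : ∀ y ∈ TK, C ⊆ A y := by
        intro y hy
        rcases hcmp y hy.1 with h | h
        · exact absurd h (hnotS y hy)
        · exact h
      by_cases hmin : ∃ bm ∈ TK, ∀ z ∈ TK, bm ≤ z
      · obtain ⟨bm, hbmTK, hbmmin⟩ := hmin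
        have hbmQ : bm ∈ Qset K := by
          refine ⟨hbmTK.1, s₀, hs₀K, hbmTK.2, ?_⟩
          intro z hz
          rcases le_or_gt z s₀ with h | h
          · exact Or.inl h
          · exact Or.inr (hbmmin z ⟨hz, h⟩)
        set bb : ↥(Qset K) := ⟨bm, hbmQ⟩ with hbbdef
        have hAbm : A bm = A s₀ ∪ {g bb} := by
          apply Set.Subset.antisymm
          · rintro _ ⟨b, hb, rfl⟩
            rcases le_or_gt (b : ℝ) s₀ with h | h
            · exact Or.inl ⟨b, h, rfl⟩
            · have hbTK : (b : ℝ) ∈ TK := ⟨hQsubK b.2, h⟩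
              have h1 : bm ≤ (b : ℝ) := hbmmin _ hbTK
              have hbeq : b = bb := Subtype.ext (le_antisymm hb h1)
              right
              rw [hbeq]
              rfl
          · apply Set.union_subset
            · exact hAmono (le_of_lt hbmTK.2)
            · intro v hv
              rw [Set.mem_singleton_iff] at hv
              exact ⟨bb, by show (bb : ℝ) ≤ bm; exact le_refl bm, hv.symm⟩
        have hCAbm : C ⊆ A bm := hCsub bm hbmTK
        by_cases hpt : g bb ∈ C
        · have h1 : A bm ⊆ C := by
            rw [hAbm]
            exact Set.union_subset hAs₀C (Set.singleton_subset_iff.mpr hpt)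
          exact ⟨bm, hbmTK.1, Set.Subset.antisymm h1 hCAbm⟩
        · have h1 : C ⊆ A s₀ := by
            intro v hv
            have h2 : v ∈ A s₀ ∪ {g bb} := hAbm ▸ hCAbm hv
            rcases h2 with h | h
            · exact h
            · rw [Set.mem_singleton_iff] at h
              exact absurd (h ▸ hv) hpt
          exact ⟨s₀, hs₀K, Set.Subset.antisymm hAs₀C h1⟩
      · have hCAs₀ : C ⊆ A s₀ := by
          intro v hv
          obtain ⟨y₀, hy₀⟩ := hTKne
          obtain ⟨b, hb, hgb⟩ := hCsub y₀ hy₀ hv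
          refine ⟨b, ?_, hgb⟩
          show (b : ℝ) ≤ s₀
          by_contra hbs
          push_neg at hbs
          have hbTK : (b : ℝ) ∈ TK := ⟨hQsubK b.2, hbs⟩
          have h1 : ¬ ∀ z ∈ TK, (b : ℝ) ≤ z := fun hcon => hmin ⟨b, hbTK, hcon⟩
          push_neg at h1
          obtain ⟨y, hyTK, hyb⟩ := h1
          obtain ⟨b', hb', hgb'⟩ := hCsub y hyTK hv
          have hbb' : b' = b := hginj (hgb'.trans hgb.symm)
          rw [hbb'] at hb'
          exact absurd hb' (not_le.mpr hyb)
        exact ⟨s₀, hs₀K, Set.Subset.antisymm hAs₀C hCAs₀⟩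
    · have hmax : ∀ y ∈ K, y ≤ s₀ := by
        intro y hy
        by_contra h
        exact hTKne ⟨y, hy, not_le.mp h⟩
      have hs₀sup : s₀ = sSup K := le_antisymm (le_csSup hK.bddAbove hs₀K) (csSup_le hKne hmax)
      have huniv : A s₀ = Set.univ := by rw [hs₀sup]; exact hAmax
      have hCeq : A s₀ = C := Set.Subset.antisymm hAs₀C (by rw [huniv]; exact Set.subset_univ C)
      exact ⟨s₀, hs₀K, hCeq⟩
  -- the order isomorphism
  have hAinjK : ∀ r s : ↥K, A r.1 = A s.1 → r = s := by
    intro r s heq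
    by_contra hne
    have hne' : r.1 ≠ s.1 := fun h => hne (Subtype.ext h)
    rcases lt_or_gt_of_ne hne' with h | h
    · obtain ⟨v, hv1, hv2⟩ := hAstrictmono r.2 s.2 h
      rw [← heq] at hv1
      exact hv2 hv1
    · obtain ⟨v, hv1, hv2⟩ := hAstrictmono s.2 r.2 h
      rw [heq] at hv1
      exact hv2 hv1
  have hbijF : Function.Bijective (fun r : ↥K => (⟨A r.1, ⟨r.1, r.2, rfl⟩⟩ : ↥𝓛)) := by
    constructor
    · intro r s h
      exact hAinjK r s (congrArg Subtype.val h)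
    · rintro ⟨_, r, hr, rfl⟩
      exact ⟨⟨r, hr⟩, rfl⟩
  refine ⟨𝓛, hmaxchain, ⟨⟨Equiv.ofBijective _ hbijF, ?_⟩⟩⟩
  intro r s
  constructor
  · intro h
    have h' : A r.1 ⊆ A s.1 := h
    show r.1 ≤ s.1
    by_contra hn
    push_neg at hn
    obtain ⟨v, hv1, hv2⟩ := hAstrictmono s.2 r.2 hn
    exact hv2 (h' hv1)
  · intro h
    exact hAmono h

end BackMain
end GomegaAux

theorem Gomega_omega_maximal_chains_iff_compact_nwd
    (G : SimpleGraph (ℕ × ℕ))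
    (hG : ∀ a b : ℕ × ℕ, G.Adj a b ↔ (a.1 = b.1 ∧ a.2 ≠ b.2))
    (L : Type*) [LinearOrder L] :
    (∃ 𝓛 : Set (Set (ℕ × ℕ)), IsMaxChainIn (insert ∅ (graphCopies G)) 𝓛 ∧
        Nonempty (L ≃o 𝓛)) ↔
      (∃ K : Set ℝ, IsCompact K ∧ interior (closure K) = ∅ ∧
        Nonempty (L ≃o K) ∧
        ∃ m : ℝ, IsLeast K m ∧ Filter.NeBot (nhdsWithin m (K \ {m}))) := by
  constructor
  · rintro ⟨𝓛, hM, ⟨φ⟩⟩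
    obtain ⟨K, hc, hi, ⟨ψ⟩, m, hle, hnb⟩ := GomegaAux.forward_dir hG hM
    exact ⟨K, hc, hi, ⟨φ.trans ψ⟩, m, hle, hnb⟩
  · rintro ⟨K, hc, hi, ⟨φ⟩, m, hle, hnb⟩
    obtain ⟨𝓛, hM, ⟨ψ⟩⟩ := GomegaAux.backward_dir hG hc hi hle hnb
    exact ⟨𝓛, hM, ⟨φ.trans ψ⟩⟩
end
end

section
/- Let G_{ωω} be the graph with vertex set ℕ × ℕ in which (i,k) and (j,l) are adjacent iff i = j and k ≠ l. Let 𝓛 be a maximal chain in the poset ⟨P(G_{ωω}) ∪ {∅}, ⊆⟩ and let A, B ∈ 𝓛 \ {∅} with A ⊊ B. Then there exist C ∈ 𝓛 with A ⊆ C ⊆ B and an index i ∈ ℕ such that the section {k : (i,k) ∈ C} is infinite and C ∩ ({i} × ℕ) ⊊ B ∩ ({i} × ℕ). -/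
open SimpleGraph

section Aux

variable {G : SimpleGraph (ℕ × ℕ)}

lemma Gom.section_infinite
    (hG : ∀ a b : ℕ × ℕ, G.Adj a b ↔ (a.1 = b.1 ∧ a.2 ≠ b.2))
    {S : Set (ℕ × ℕ)} (hS : S ∈ graphCopies G) {i k : ℕ}
    (h : (i, k) ∈ S) : {l : ℕ | (i, l) ∈ S}.Infinite := by
  obtain ⟨e⟩ := hS
  set v : ↥S := ⟨(i, k), h⟩ with hv
  haveI : Infinite ↥{m : ℕ | m ≠ (e v).2} := by
    have h1 : ({(e v).2} : Set ℕ)ᶜ.Infinite := (Set.finite_singleton _).infinite_compl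
    have h2 : ({(e v).2} : Set ℕ)ᶜ = {m : ℕ | m ≠ (e v).2} := by
      ext m; simp
    rw [h2] at h1
    exact h1.to_subtype
  set f : ↥{m : ℕ | m ≠ (e v).2} → ℕ :=
    fun m => ((e.symm ((e v).1, (m : ℕ))) : ℕ × ℕ).2 with hf
  have key : ∀ m : ↥{m : ℕ | m ≠ (e v).2},
      ((e.symm ((e v).1, (m : ℕ))) : ℕ × ℕ).1 = i ∧
      ((e.symm ((e v).1, (m : ℕ))) : ℕ × ℕ) ∈ S := by
    intro m
    have hadj : G.Adj (e v) ((e v).1, (m : ℕ)) := by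
      rw [hG]
      exact ⟨rfl, fun hc => m.2 hc.symm⟩
    have h2 : (G.induce S).Adj (e.symm (e v)) (e.symm ((e v).1, (m : ℕ))) :=
      e.symm.map_adj_iff.mpr hadj
    rw [e.symm_apply_apply] at h2
    have h3 : G.Adj (v : ℕ × ℕ) ((e.symm ((e v).1, (m : ℕ))) : ℕ × ℕ) := h2
    rw [hG] at h3
    exact ⟨h3.1.symm, (e.symm ((e v).1, (m : ℕ))).2⟩
  have hinj : Function.Injective f := by
    intro m m' hmm
    have k1 := key m
    have k2 := key m'
    have : (e.symm ((e v).1, (m : ℕ)) : ℕ × ℕ) = (e.symm ((e v).1, (m' : ℕ)) : ℕ × ℕ) := by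
      apply Prod.ext
      · rw [k1.1, k2.1]
      · exact hmm
    have := e.symm.injective (Subtype.ext this)
    have := (Prod.mk.injEq _ _ _ _).mp this
    exact Subtype.ext this.2
  have hmem : ∀ m, f m ∈ {l : ℕ | (i, l) ∈ S} := by
    intro m
    have k1 := key m
    have : (i, f m) = ((e.symm ((e v).1, (m : ℕ))) : ℕ × ℕ) := by
      apply Prod.ext
      · exact k1.1.symm
      · rfl
    simp only [Set.mem_setOf_eq, this]; exact k1.2
  exact Set.infinite_of_injective_forall_mem hinj hmem

lemma Gom.supp_infinite
    (hG : ∀ a b : ℕ × ℕ, G.Adj a b ↔ (a.1 = b.1 ∧ a.2 ≠ b.2))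
    {S : Set (ℕ × ℕ)} (hS : S ∈ graphCopies G) :
    {i : ℕ | ∃ k, (i, k) ∈ S}.Infinite := by
  obtain ⟨e⟩ := hS
  set f : ℕ → ℕ := fun n => ((e.symm (n, 0)) : ℕ × ℕ).1 with hf
  have hinj : Function.Injective f := by
    intro n n' hnn
    by_contra hne
    have hvne : e.symm (n, 0) ≠ e.symm (n', 0) := by
      intro hc
      exact hne (Prod.ext_iff.mp (e.symm.injective hc)).1
    have hsne : ((e.symm (n, 0)) : ℕ × ℕ).2 ≠ ((e.symm (n', 0)) : ℕ × ℕ).2 := by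
      intro hc
      exact hvne (Subtype.ext (Prod.ext hnn hc))
    have hadj : (G.induce S).Adj (e.symm (n, 0)) (e.symm (n', 0)) := by
      show G.Adj _ _
      rw [hG]
      exact ⟨hnn, hsne⟩
    have := e.map_adj_iff.mpr hadj
    rw [e.apply_symm_apply, e.apply_symm_apply, hG] at this
    exact hne this.1
  have hmem : ∀ n, f n ∈ {i : ℕ | ∃ k, (i, k) ∈ S} := by
    intro n
    refine ⟨((e.symm (n, 0)) : ℕ × ℕ).2, ?_⟩
    have : (f n, ((e.symm (n, 0)) : ℕ × ℕ).2) = ((e.symm (n, 0)) : ℕ × ℕ) := rfl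
    rw [this]
    exact (e.symm (n, 0)).2
  exact Set.infinite_of_injective_forall_mem hinj hmem

lemma Gom.mem_copies
    (hG : ∀ a b : ℕ × ℕ, G.Adj a b ↔ (a.1 = b.1 ∧ a.2 ≠ b.2))
    {S : Set (ℕ × ℕ)}
    (h1 : ∀ i k, (i, k) ∈ S → {l : ℕ | (i, l) ∈ S}.Infinite)
    (h2 : {i : ℕ | ∃ k, (i, k) ∈ S}.Infinite) :
    S ∈ graphCopies G := by
  classical
  haveI : Infinite ↥{i : ℕ | ∃ k, (i, k) ∈ S} := h2.to_subtype
  haveI hsecInf : ∀ j : ↥{i : ℕ | ∃ k, (i, k) ∈ S},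
      Infinite ↥{l : ℕ | ((j : ℕ), l) ∈ S} := by
    intro j
    obtain ⟨k, hk⟩ := j.2
    exact (h1 _ k hk).to_subtype
  have esupp : ↥{i : ℕ | ∃ k, (i, k) ∈ S} ≃ ℕ := Classical.choice nonempty_equiv_of_countable
  have esec : ∀ j : ↥{i : ℕ | ∃ k, (i, k) ∈ S}, ↥{l : ℕ | ((j : ℕ), l) ∈ S} ≃ ℕ := fun j =>
    Classical.choice (@nonempty_equiv_of_countable _ _ _ (hsecInf j) _ _)
  refine ⟨⟨Equiv.trans
    (⟨fun p => ⟨⟨p.1.1, ⟨p.1.2, p.2⟩⟩, ⟨p.1.2, p.2⟩⟩,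
      fun x => ⟨((x.1 : ℕ), (x.2 : ℕ)), x.2.2⟩,
      fun p => rfl, fun x => rfl⟩ :
        ↥S ≃ (Σ j : ↥{i : ℕ | ∃ k, (i, k) ∈ S}, ↥{l : ℕ | ((j : ℕ), l) ∈ S}))
    ((Equiv.sigmaCongrRight esec).trans
      ((Equiv.sigmaEquivProd _ ℕ).trans (Equiv.prodCongr esupp (Equiv.refl ℕ)))), ?_⟩⟩
  rintro ⟨⟨a1, a2⟩, ha⟩ ⟨⟨b1, b2⟩, hb⟩
  show G.Adj (esupp ⟨a1, ⟨a2, ha⟩⟩, esec ⟨a1, ⟨a2, ha⟩⟩ ⟨a2, ha⟩)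
      (esupp ⟨b1, ⟨b2, hb⟩⟩, esec ⟨b1, ⟨b2, hb⟩⟩ ⟨b2, hb⟩) ↔ G.Adj (a1, a2) (b1, b2)
  rw [hG, hG]
  constructor
  · rintro ⟨hfst, hsnd⟩
    have h1' : a1 = b1 := congrArg Subtype.val (esupp.injective hfst)
    subst h1'
    refine ⟨rfl, fun hc => ?_⟩
    have hc' : a2 = b2 := hc
    subst hc'
    exact hsnd rfl
  · rintro ⟨hfst, hsnd⟩
    have h1' : a1 = b1 := hfst
    subst h1'
    refine ⟨rfl, fun hc => hsnd ?_⟩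
    exact congrArg Subtype.val ((esec ⟨a1, ⟨a2, ha⟩⟩).injective hc)

end Aux

theorem Gomega_omega_maximal_chain_refining_section
    (G : SimpleGraph (ℕ × ℕ))
    (hG : ∀ a b : ℕ × ℕ, G.Adj a b ↔ (a.1 = b.1 ∧ a.2 ≠ b.2))
    (𝓛 : Set (Set (ℕ × ℕ))) (h𝓛 : IsMaxChainIn (insert ∅ (graphCopies G)) 𝓛)
    (A B : Set (ℕ × ℕ)) (hA : A ∈ 𝓛) (hB : B ∈ 𝓛)
    (hA0 : A ≠ ∅) (hB0 : B ≠ ∅) (hAB : A ⊂ B) :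
    ∃ C ∈ 𝓛, A ⊆ C ∧ C ⊆ B ∧
      ∃ i : ℕ, {k : ℕ | (i, k) ∈ C}.Infinite ∧
        C ∩ {p : ℕ × ℕ | p.1 = i} ⊂ B ∩ {p : ℕ × ℕ | p.1 = i} := by
  obtain ⟨hsub, hchain, hmax⟩ := h𝓛
  have hcopy : ∀ {L : Set (ℕ × ℕ)}, L ∈ 𝓛 → L ≠ ∅ → L ∈ graphCopies G := by
    intro L hL hL0
    rcases hsub hL with h | h
    · exact absurd h hL0
    · exact h
  have hAcopy := hcopy hA hA0
  have hBcopy := hcopy hB hB0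
  have htot : ∀ {L M : Set (ℕ × ℕ)}, L ∈ 𝓛 → M ∈ 𝓛 → L ⊆ M ∨ M ⊆ L := by
    intro L M hL hM
    rcases eq_or_ne L M with h | h
    · exact Or.inl h.subset
    · exact hchain hL hM h
  by_cases hcase : ∃ i k l : ℕ, (i, k) ∈ B ∧ (i, k) ∉ A ∧ (i, l) ∈ A
  · -- Case 1: C = A works
    obtain ⟨i, k, l, hkB, hkA, hlA⟩ := hcase
    refine ⟨A, hA, subset_rfl, hAB.1, i, Gom.section_infinite hG hAcopy hlA, ?_⟩
    constructor
    · exact Set.inter_subset_inter_left _ hAB.1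
    · intro hsub'
      exact hkA (hsub' ⟨hkB, rfl⟩).1
  · push_neg at hcase
    obtain ⟨⟨i, k⟩, hxB, hxA⟩ := Set.exists_of_ssubset hAB
    have hAi : ∀ l, (i, l) ∉ A := fun l hl => hcase i k l hxB hxA hl
    by_cases h2a : ∃ L ∈ 𝓛, (i, k) ∈ L ∧ L ⊆ B ∧ ∃ l, (i, l) ∈ B ∧ (i, l) ∉ L
    · -- Case 2a
      obtain ⟨L, hL, hxL, hLB, l, hlB, hlL⟩ := h2a
      have hL0 : L ≠ ∅ := fun h => by rw [h] at hxL; exact hxL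
      have hAL : A ⊆ L := by
        rcases htot hA hL with h | h
        · exact h
        · exact absurd (h hxL) hxA
      refine ⟨L, hL, hAL, hLB, i, Gom.section_infinite hG (hcopy hL hL0) hxL, ?_⟩
      constructor
      · exact Set.inter_subset_inter_left _ hLB
      · intro hsub'
        exact hlL (hsub' ⟨hlB, rfl⟩).1
    · -- Case 2b
      push_neg at h2a
      set D : Set (ℕ × ℕ) :=
        {p : ℕ × ℕ | (∃ L ∈ 𝓛, (i, k) ∉ L ∧ p ∈ L) ∨ (p ∈ B ∧ p.1 = i ∧ p.2 ≠ k)} with hD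
      have hAD : A ⊆ D := fun p hp => Or.inl ⟨A, hA, hxA, hp⟩
      have hlow : ∀ {L}, L ∈ 𝓛 → (i, k) ∉ L → L ⊆ B := by
        intro L hL hxL
        rcases htot hL hB with h | h
        · exact h
        · exact absurd (h hxB) hxL
      have hDB : D ⊆ B := by
        rintro p (⟨L, hL, hxL, hpL⟩ | ⟨hpB, -, -⟩)
        · exact hlow hL hxL hpL
        · exact hpB
      have hxD : (i, k) ∉ D := by
        rintro (⟨L, hL, hxL, hpL⟩ | ⟨-, -, h⟩)
        · exact hxL hpL
        · exact h rfl
      have hBi : {l : ℕ | (i, l) ∈ B}.Infinite := Gom.section_infinite hG hBcopy hxB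
      have hBik : ({l : ℕ | (i, l) ∈ B} \ {k}).Infinite := hBi.diff (Set.finite_singleton k)
      have hsecD : ({l : ℕ | (i, l) ∈ B} \ {k}) ⊆ {l : ℕ | (i, l) ∈ D} := by
        rintro l ⟨hlB, hlk⟩
        exact Or.inr ⟨hlB, rfl, hlk⟩
      have hDi : {l : ℕ | (i, l) ∈ D}.Infinite := hBik.mono hsecD
      -- D is a copy of G
      have hDcopy : D ∈ graphCopies G := by
        apply Gom.mem_copies hG
        · rintro j m (⟨L, hL, hxL, hpL⟩ | ⟨hpB, hj, hmk⟩)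
          · have hL0 : L ≠ ∅ := fun h => by rw [h] at hpL; exact hpL
            refine (Gom.section_infinite hG (hcopy hL hL0) hpL).mono ?_
            intro l hl
            exact Or.inl ⟨L, hL, hxL, hl⟩
          · subst hj
            exact hDi
        · refine (Gom.supp_infinite hG hAcopy).mono ?_
          rintro j ⟨m, hm⟩
          exact ⟨m, hAD hm⟩
      -- D is comparable with everything in 𝓛
      have hcomp : ∀ L ∈ 𝓛, D ⊆ L ∨ L ⊆ D := by
        intro L hL
        by_cases hxL : (i, k) ∈ L
        · left
          rintro p (⟨L', hL', hxL', hpL'⟩ | ⟨hpB, hp1, hp2⟩)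
          · rcases htot hL' hL with h | h
            · exact h hpL'
            · exact absurd (h hxL) hxL'
          · rcases htot hL hB with h | h
            · have hpe : p = (i, p.2) := by rw [← hp1]
              have := h2a L hL hxL h p.2 (by rw [← hpe]; exact hpB)
              rw [← hpe] at this
              exact this
            · exact h hpB
        · right
          exact fun p hp => Or.inl ⟨L, hL, hxL, hp⟩
      have hDmem : D ∈ 𝓛 := by
        have h' := hmax (insert D 𝓛) ?_ ?_ (Set.subset_insert _ _)
        · rw [← h']; exact Set.mem_insert _ _
        · rintro X (rfl | hX)
          · exact Set.mem_insert_iff.mpr (Or.inr hDcopy)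
          · exact hsub hX
        · apply hchain.insert
          intro L hL _
          rcases hcomp L hL with h | h
          · exact Or.inl h
          · exact Or.inr h
      refine ⟨D, hDmem, hAD, hDB, i, hDi, ?_⟩
      constructor
      · exact Set.inter_subset_inter_left _ hDB
      · intro hsub'
        exact hxD (hsub' ⟨hxB, rfl⟩).1
end

section
/- Let L be an uncountable ℝ-embeddable complete linear order whose minimum is non-isolated. Then L is order-isomorphic to a lexicographic sum ∑_{x ∈ [0,1]} L_x indexed by the real unit interval [0,1], where: (L1) each L_x is a nonempty at most countable complete linear order; (L2) the set {x ∈ [0,1] : |L_x| > 1} is at most countable; (L3) either L_0 has exactly one element or the minimum of L_0 is non-isolated. -/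
/-!
Embed `L` in `ℝ` by a strictly monotone `g` and put `S = g(L)`. Summing atomless probability
measures carried by the uncountable sets `[p, q] ∩ closure S` (`p`, `q` rational) and normalising
gives an atomless probability measure carried by `closure S` that charges every interval meeting
`S` uncountably. Its distribution function `F` is continuous, increases only across points of `S`, and is constant
only on intervals meeting `S` countably. Then `f = F ∘ g` is the decomposition: by completeness of
`L` and the first property `f` maps onto `[0, 1]` and its fibres are closed under suprema and
infima; the second property makes the fibres countable; and a fibre with two points `a < b`
makes `F` constant on `[g a, g b]`, so its value is the value of `F` at a rational.
-/

open MeasureTheory ProbabilityTheory Set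

theorem exists_isProbabilityMeasure_nullSingletonClass_of_not_countable {X : Type*}
    [MeasurableSpace X] [StandardBorelSpace X] {C : Set X} (hC : MeasurableSet C)
    (hCc : ¬C.Countable) :
    ∃ ω : Measure X, IsProbabilityMeasure ω ∧ NullSingletonClass ω ∧ ω Cᶜ = 0 := by
  have := hC.standardBorel
  let e : ℝ ≃ᵐ C := PolishSpace.measurableEquivOfNotCountable not_countable
    (countable_coe_iff.not.2 hCc)
  have he : Measurable ((↑) ∘ e : ℝ → X) := measurable_subtype_coe.comp e.measurable
  have : IsProbabilityMeasure (volume.restrict (Icc (0 : ℝ) 1)) := ⟨by simp [Real.volume_Icc]⟩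
  refine ⟨(volume.restrict (Icc (0 : ℝ) 1)).map ((↑) ∘ e),
    Measure.isProbabilityMeasure_map he.aemeasurable, ⟨fun x => ?_⟩, ?_⟩
  · rw [Measure.map_apply he (measurableSet_singleton x)]
    exact Subsingleton.measure_zero
      (fun a ha b hb => (Subtype.val_injective.comp e.injective) (ha.trans hb.symm)) _
  · rw [Measure.map_apply he hC.compl]
    exact measure_mono_null (fun x hx => absurd (e x).2 hx) measure_empty

theorem exists_rat_Icc_subset_not_countable {S U : Set ℝ} (hU : IsOpen U)
    (h : ¬(U ∩ S).Countable) :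
    ∃ q : ℚ × ℚ, Icc (q.1 : ℝ) q.2 ⊆ U ∧ ¬(Ioo (q.1 : ℝ) q.2 ∩ S).Countable := by
  by_contra! hq
  refine h ((countable_iUnion fun q : ℚ × ℚ =>
    countable_iUnion fun hqU : Icc (q.1 : ℝ) q.2 ⊆ U => hq q hqU).mono ?_)
  rintro t ⟨htU, htS⟩
  obtain ⟨ε, hε, hball⟩ := Metric.isOpen_iff.1 hU t htU
  obtain ⟨a, hta, hat⟩ := exists_rat_btwn (sub_lt_self t hε)
  obtain ⟨b, htb, hbt⟩ := exists_rat_btwn (lt_add_of_pos_right t hε)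
  refine mem_iUnion₂.2 ⟨(a, b), ?_, ⟨hat, htb⟩, htS⟩
  exact (Icc_subset_Ioo hta hbt).trans (Real.ball_eq_Ioo t ε ▸ hball)

theorem exists_isProbabilityMeasure_pos_Ioo_of_not_countable {S : Set ℝ} (hS : ¬S.Countable) :
    ∃ μ : Measure ℝ, IsProbabilityMeasure μ ∧ NullSingletonClass μ ∧ μ (closure S)ᶜ = 0 ∧
      ∀ a b, ¬(Ioo a b ∩ S).Countable → 0 < μ (Ioo a b) := by
  have hω : ∀ q : ℚ × ℚ, ∃ ω : Measure ℝ, IsFiniteMeasure ω ∧ NullSingletonClass ω ∧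
      ω (closure S)ᶜ = 0 ∧ (¬(Ioo (q.1 : ℝ) q.2 ∩ S).Countable →
        IsProbabilityMeasure ω ∧ ω (Icc (q.1 : ℝ) q.2)ᶜ = 0) := by
    intro q
    by_cases hq : (Ioo (q.1 : ℝ) q.2 ∩ S).Countable
    · exact ⟨0, inferInstance, ⟨fun _ => rfl⟩, rfl, fun h => absurd hq h⟩
    obtain ⟨ω, hω1, hω0, hωC⟩ := exists_isProbabilityMeasure_nullSingletonClass_of_not_countable
      (isClosed_Icc.inter isClosed_closure).measurableSet
      fun h => hq (h.mono (inter_subset_inter Ioo_subset_Icc_self subset_closure))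
    exact ⟨ω, inferInstance, hω0, measure_mono_null (compl_subset_compl.2 inter_subset_right) hωC,
      fun _ => ⟨hω1, measure_mono_null (compl_subset_compl.2 inter_subset_left) hωC⟩⟩
  choose ω hωfin hω0 hωS hωq using hω
  have hpos : ∀ a b, ¬(Ioo a b ∩ S).Countable → Measure.sum ω (Ioo a b) ≠ 0 := by
    intro a b h
    obtain ⟨q, hqab, hq⟩ := exists_rat_Icc_subset_not_countable isOpen_Ioo h
    obtain ⟨hprob, hq0⟩ := hωq q hq
    have h1 : ω q (Icc (q.1 : ℝ) q.2) = 1 := (prob_compl_eq_zero_iff measurableSet_Icc).1 hq0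
    exact (one_pos.trans_le (h1.symm.trans_le
      ((measure_mono hqab).trans (Measure.le_sum ω q _)))).ne'
  have : NeZero (Measure.sum ω) := by
    obtain ⟨q, -, hq⟩ := exists_rat_Icc_subset_not_countable isOpen_univ (by rwa [univ_inter])
    exact ⟨fun h => hpos _ _ hq (by rw [h, Measure.coe_zero, Pi.zero_apply])⟩
  refine ⟨(Measure.sum ω).toFinite, inferInstance, ⟨fun t => ?_⟩, ?_,
    fun a b h => pos_iff_ne_zero.2 fun h0 => hpos a b h (toFinite_apply_eq_zero_iff.1 h0)⟩
  · exact toFinite_apply_eq_zero_iff.2 (Measure.sum_apply_eq_zero.2 fun q => measure_singleton t)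
  · exact toFinite_apply_eq_zero_iff.2 (Measure.sum_apply_eq_zero.2 hωS)

theorem continuous_cdf (μ : Measure ℝ) [IsProbabilityMeasure μ] [NullSingletonClass μ] :
    Continuous (cdf μ) := by
  refine continuous_iff_continuousAt.2 fun x => continuousAt_iff_continuous_left_right.2
    ⟨continuousWithinAt_Iio_iff_Iic.1 ((monotone_cdf μ).continuousWithinAt_Iio_iff_leftLim_eq.2 ?_),
      (cdf μ).right_continuous x⟩
  have h := (cdf μ).measure_singleton x
  rw [measure_cdf, measure_singleton, eq_comm, ENNReal.ofReal_eq_zero, sub_nonpos] at h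
  exact le_antisymm ((monotone_cdf μ).leftLim_le le_rfl) h

theorem measure_Ioo_eq_ofReal_cdf_sub_cdf (μ : Measure ℝ) [IsProbabilityMeasure μ]
    [NullSingletonClass μ] (a b : ℝ) : μ (Ioo a b) = ENNReal.ofReal (cdf μ b - cdf μ a) := by
  calc μ (Ioo a b) = (cdf μ).measure (Ioo a b) := by rw [measure_cdf]
    _ = _ := by
      rw [StieltjesFunction.measure_Ioo,
        (continuous_cdf μ).continuousAt.continuousWithinAt.leftLim_eq]

/-- The classical Cantor function is an `IsCantorFunction` for the Cantor set. -/
structure IsCantorFunction (S : Set ℝ) (F : ℝ → ℝ) : Prop where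
  monotone : Monotone F
  continuous : Continuous F
  inter_nonempty_of_lt : ∀ a b, F a < F b → (Ioo a b ∩ S).Nonempty
  countable_of_eq : ∀ a b, F a = F b → (Icc a b ∩ S).Countable
  eq_zero_of_subset_Ici : ∀ a, S ⊆ Ici a → F a = 0
  eq_one_of_subset_Iic : ∀ b, S ⊆ Iic b → F b = 1

theorem isCantorFunction_cdf {S : Set ℝ} (μ : Measure ℝ) [IsProbabilityMeasure μ]
    [NullSingletonClass μ] (hμS : μ (closure S)ᶜ = 0)
    (hμpos : ∀ a b, ¬(Ioo a b ∩ S).Countable → 0 < μ (Ioo a b)) :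
    IsCantorFunction S (cdf μ) := by
  refine ⟨monotone_cdf μ, continuous_cdf μ, fun a b hab => ?_, fun a b hab => ?_,
    fun a ha => ?_, fun b hb => ?_⟩
  · have hpos : μ (Ioo a b) ≠ 0 := by
      rw [measure_Ioo_eq_ofReal_cdf_sub_cdf]
      exact (ENNReal.ofReal_pos.2 (sub_pos.2 hab)).ne'
    obtain ⟨t, ht, htS⟩ : (Ioo a b ∩ closure S).Nonempty := by
      by_contra! h
      exact hpos (measure_mono_null (fun t ht htS => h.subset ⟨ht, htS⟩) hμS)
    exact mem_closure_iff.1 htS _ isOpen_Ioo ht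
  · have hIoo : (Ioo a b ∩ S).Countable := not_not.1 fun h => (hμpos a b h).ne' (by
      rw [measure_Ioo_eq_ofReal_cdf_sub_cdf, hab, sub_self, ENNReal.ofReal_zero])
    refine (((countable_singleton b).insert a).union hIoo).mono fun t ⟨ht, htS⟩ => ?_
    rcases sdiff_subset_iff.1 Icc_sdiff_both.subset ht with h | h
    exacts [Or.inl h, Or.inr ⟨h, htS⟩]
  · have hIic : μ (Iic a) = 0 := by
      refine measure_mono_null (fun t ht => ?_) (measure_union_null (measure_singleton a) hμS)
      by_cases htS : t ∈ closure S
      · exact Or.inl (le_antisymm ht (closure_minimal ha isClosed_Ici htS))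
      · exact Or.inr htS
    rw [cdf_eq_real, measureReal_def, hIic, ENNReal.toReal_zero]
  · have hIic : μ (Iic b) = 1 := (prob_compl_eq_zero_iff measurableSet_Iic).1
      (measure_mono_null (compl_subset_compl.2 (closure_minimal hb isClosed_Iic)) hμS)
    rw [cdf_eq_real, measureReal_def, hIic, ENNReal.toReal_one]

theorem exists_isCantorFunction_of_not_countable {S : Set ℝ} (hS : ¬S.Countable) :
    ∃ F, IsCantorFunction S F :=
  let ⟨μ, _, _, hμS, hμpos⟩ := exists_isProbabilityMeasure_pos_Ioo_of_not_countable hS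
  ⟨cdf μ, isCantorFunction_cdf μ hμS hμpos⟩

section OrderContinuity

variable {L α β : Type*} [LinearOrder L] [ConditionallyCompleteLinearOrder α] [TopologicalSpace α]
  [OrderTopology α] [ConditionallyCompleteLinearOrder β] [TopologicalSpace β] [OrderTopology β]
  {g : L → α} {F : α → β}

theorem isLUB_image_comp_of_inter_nonempty (hg : StrictMono g) (hF : Monotone F)
    (hFc : Continuous F) (hgap : ∀ a b, F a < F b → (Ioo a b ∩ range g).Nonempty)
    {S : Set L} {s : L} (hne : S.Nonempty) (hs : IsLUB S s) :
    IsLUB ((F ∘ g) '' S) (F (g s)) := by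
  have hbdd : BddAbove (g '' S) := ⟨g s, forall_mem_image.2 fun a ha => hg.monotone (hs.1 ha)⟩
  have hFsup : F (sSup (g '' S)) = sSup (F '' (g '' S)) :=
    hF.map_csSup_of_continuousAt hFc.continuousAt (hne.image g) hbdd
  have hle : F (g s) ≤ F (sSup (g '' S)) := by
    by_contra! hlt
    obtain ⟨_, ⟨hSc, hcs⟩, c, rfl⟩ := hgap _ _ hlt
    have hc : c ∈ upperBounds S := fun a ha =>
      (hg.lt_iff_lt.1 ((le_csSup hbdd (mem_image_of_mem g ha)).trans_lt hSc)).le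
    exact (hg.monotone (hs.2 hc)).not_gt hcs
  refine ⟨forall_mem_image.2 fun a ha => hF (hg.monotone (hs.1 ha)), fun b hb => ?_⟩
  rw [image_comp] at hb
  exact hle.trans (hFsup.trans_le (csSup_le ((hne.image g).image F) hb))

theorem isGLB_image_comp_of_inter_nonempty (hg : StrictMono g) (hF : Monotone F)
    (hFc : Continuous F) (hgap : ∀ a b, F a < F b → (Ioo a b ∩ range g).Nonempty)
    {S : Set L} {s : L} (hne : S.Nonempty) (hs : IsGLB S s) :
    IsGLB ((F ∘ g) '' S) (F (g s)) :=
  isLUB_image_comp_of_inter_nonempty (L := Lᵒᵈ) (α := αᵒᵈ) (β := βᵒᵈ) hg.dual hF.dual hFc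
    (fun a b h => (hgap b a h).imp fun _ ⟨⟨h₁, h₂⟩, hc⟩ => ⟨⟨h₂, h₁⟩, hc⟩) hne hs

end OrderContinuity

theorem apply_eq_of_isLUB_image {ι β : Type*} [PartialOrder β] {φ : ι → β} {S : Set ι} {s : ι}
    {x : β} (h : IsLUB (φ '' S) (φ s)) (hne : S.Nonempty) (hS : S ⊆ φ ⁻¹' {x}) : φ s = x := by
  rw [(hne.image φ).subset_singleton_iff.1 (image_subset_iff.2 hS)] at h
  exact (isLUB_singleton.unique h).symm

theorem apply_eq_of_isGLB_image {ι β : Type*} [PartialOrder β] {φ : ι → β} {S : Set ι} {s : ι}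
    {x : β} (h : IsGLB (φ '' S) (φ s)) (hne : S.Nonempty) (hS : S ⊆ φ ⁻¹' {x}) : φ s = x := by
  rw [(hne.image φ).subset_singleton_iff.1 (image_subset_iff.2 hS)] at h
  exact (isGLB_singleton.unique h).symm

section Fibres

variable {L β : Type*} [LinearOrder L] [PartialOrder β] {φ : L → β} {x : β}

theorem exists_isLeast_preimage_singleton (hsup : ∀ S : Set L, ∃ s, IsLUB S s)
    (hglb : ∀ ⦃S s⦄, S.Nonempty → IsGLB S s → IsGLB (φ '' S) (φ s))
    (hne : (φ ⁻¹' {x}).Nonempty) : ∃ m, IsLeast (φ ⁻¹' {x}) m := by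
  obtain ⟨m, hm⟩ := hsup (lowerBounds (φ ⁻¹' {x}))
  rw [isLUB_lowerBounds] at hm
  exact ⟨m, apply_eq_of_isGLB_image (hglb hne hm) hne subset_rfl, hm.1⟩

theorem exists_isGreatest_preimage_singleton (hsup : ∀ S : Set L, ∃ s, IsLUB S s)
    (hlub : ∀ ⦃S s⦄, S.Nonempty → IsLUB S s → IsLUB (φ '' S) (φ s))
    (hne : (φ ⁻¹' {x}).Nonempty) : ∃ M, IsGreatest (φ ⁻¹' {x}) M := by
  obtain ⟨M, hM⟩ := hsup (φ ⁻¹' {x})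
  exact ⟨M, apply_eq_of_isLUB_image (hlub hne hM) hne subset_rfl, hM.1⟩

theorem exists_lub_mem_preimage_singleton (hsup : ∀ S : Set L, ∃ s, IsLUB S s)
    (hlub : ∀ ⦃S s⦄, S.Nonempty → IsLUB S s → IsLUB (φ '' S) (φ s))
    (hglb : ∀ ⦃S s⦄, S.Nonempty → IsGLB S s → IsGLB (φ '' S) (φ s))
    (hne : (φ ⁻¹' {x}).Nonempty) {S : Set L} (hS : S ⊆ φ ⁻¹' {x}) :
    ∃ s ∈ φ ⁻¹' {x}, (∀ a ∈ S, a ≤ s) ∧ ∀ b ∈ φ ⁻¹' {x}, (∀ a ∈ S, a ≤ b) → s ≤ b := by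
  rcases S.eq_empty_or_nonempty with rfl | hSne
  · obtain ⟨m, hm⟩ := exists_isLeast_preimage_singleton hsup hglb hne
    exact ⟨m, hm.1, fun _ h => absurd h (notMem_empty _), fun b hb _ => hm.2 hb⟩
  · obtain ⟨s, hs⟩ := hsup S
    exact ⟨s, apply_eq_of_isLUB_image (hlub hSne hs) hSne hS, fun a ha => hs.1 ha,
      fun b _ hb => hs.2 hb⟩

end Fibres

namespace IsCantorFunction

variable {L : Type*} [LinearOrder L] {g : L → ℝ} {F : ℝ → ℝ}

theorem isLUB_image_comp (hF : IsCantorFunction (range g) F) (hg : StrictMono g) ⦃S : Set L⦄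
    ⦃s : L⦄ (hne : S.Nonempty) (hs : IsLUB S s) : IsLUB ((F ∘ g) '' S) ((F ∘ g) s) :=
  isLUB_image_comp_of_inter_nonempty hg hF.monotone hF.continuous hF.inter_nonempty_of_lt hne hs

theorem isGLB_image_comp (hF : IsCantorFunction (range g) F) (hg : StrictMono g) ⦃S : Set L⦄
    ⦃s : L⦄ (hne : S.Nonempty) (hs : IsGLB S s) : IsGLB ((F ∘ g) '' S) ((F ∘ g) s) :=
  isGLB_image_comp_of_inter_nonempty hg hF.monotone hF.continuous hF.inter_nonempty_of_lt hne hs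

theorem exists_apply_eq (hF : IsCantorFunction (range g) F) (hg : StrictMono g)
    (hsup : ∀ S : Set L, ∃ s, IsLUB S s) {a b : L} {x : ℝ} (ha : F (g a) ≤ x)
    (hb : x ≤ F (g b)) : ∃ c, F (g c) = x := by
  obtain ⟨i, hi⟩ := hsup (lowerBounds {c | x ≤ F (g c)})
  rw [isLUB_lowerBounds] at hi
  have hxi : x ≤ F (g i) := (hF.isGLB_image_comp hg ⟨b, hb⟩ hi).2
    (forall_mem_image.2 fun c hc => hc)
  refine ⟨i, le_antisymm ?_ hxi⟩
  -- Otherwise `F` takes the value `x` at some `t < g i`, and the gap property puts an element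
  -- of `L` between `t` and `g i`: it lies below `i` yet belongs to the set whose infimum is `i`.
  by_contra! hlt
  have hai : a ≤ i := by
    by_contra! hia
    exact hlt.not_ge ((hF.monotone (hg.monotone hia.le)).trans ha)
  obtain ⟨t, -, hFt⟩ :=
    intermediate_value_Icc (hg.monotone hai) hF.continuous.continuousOn ⟨ha, hlt.le⟩
  obtain ⟨_, ⟨htc, hci⟩, c, rfl⟩ := hF.inter_nonempty_of_lt t (g i) (hFt.trans_lt hlt)
  exact (hg.lt_iff_lt.1 hci).not_ge (hi.1 (hFt.symm.trans_le (hF.monotone htc.le)))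

theorem countable_preimage_singleton (hF : IsCantorFunction (range g) F) (hg : StrictMono g)
    {x : ℝ} (hmin : ∃ i, IsLeast ((F ∘ g) ⁻¹' {x}) i)
    (hmax : ∃ j, IsGreatest ((F ∘ g) ⁻¹' {x}) j) : ((F ∘ g) ⁻¹' {x}).Countable := by
  obtain ⟨i, hi⟩ := hmin
  obtain ⟨j, hj⟩ := hmax
  refine ((hF.countable_of_eq (g i) (g j) (Eq.trans hi.1 hj.1.symm)).preimage
    hg.injective).mono fun a ha => ?_
  exact ⟨⟨hg.monotone (hi.2 ha), hg.monotone (hj.2 ha)⟩, a, rfl⟩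

end IsCantorFunction

theorem countable_setOf_not_subsingleton_preimage {L : Type*} [LinearOrder L] {g : L → ℝ}
    {F : ℝ → ℝ} (hg : StrictMono g) (hF : Monotone F) :
    {x | ¬((F ∘ g) ⁻¹' {x}).Subsingleton}.Countable := by
  refine (countable_range (F ∘ ((↑) : ℚ → ℝ))).mono fun x hx => ?_
  obtain ⟨a, ha, b, hb, hab⟩ := not_subsingleton_iff.1 hx
  wlog h : a < b generalizing a b
  · exact this b hb a ha hab.symm (hab.symm.lt_of_le (not_lt.1 h))
  obtain ⟨q, haq, hqb⟩ := exists_rat_btwn (hg h)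
  exact mem_range.2 ⟨q, le_antisymm ((hF hqb.le).trans_eq hb) (ha.symm.trans_le (hF haq.le))⟩

/-- The lexicographic-sum decomposition is encoded by a monotone surjection `f : L → [0,1]`
whose fibres are the summands `L_x`. -/
theorem uncountable_complete_order_decomposition
    (L : Type*) [LinearOrder L] [Uncountable L]
    (hemb : ∃ f : L → ℝ, StrictMono f)
    (hsup : ∀ S : Set L, ∃ s, IsLUB S s)
    (hnoniso : ∀ m : L, IsBot m → ∀ x, m < x → ∃ y, m < y ∧ y < x) :
    ∃ f : L → Set.Icc (0 : ℝ) 1, Monotone f ∧ Function.Surjective f ∧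
      -- (L1) each summand `L_x = f ⁻¹' {x}` is a nonempty at most countable
      -- complete linear order (in the order inherited from `L`):
      (∀ x : Set.Icc (0 : ℝ) 1, (f ⁻¹' {x}).Countable) ∧
      (∀ x : Set.Icc (0 : ℝ) 1, ∃ m ∈ f ⁻¹' {x}, ∀ a ∈ f ⁻¹' {x}, m ≤ a) ∧
      (∀ x : Set.Icc (0 : ℝ) 1, ∃ M ∈ f ⁻¹' {x}, ∀ a ∈ f ⁻¹' {x}, a ≤ M) ∧
      (∀ x : Set.Icc (0 : ℝ) 1, ∀ S ⊆ f ⁻¹' {x}, ∃ s ∈ f ⁻¹' {x},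
        (∀ a ∈ S, a ≤ s) ∧ ∀ b ∈ f ⁻¹' {x}, (∀ a ∈ S, a ≤ b) → s ≤ b) ∧
      -- (L2) all but countably many summands are singletons:
      {x : Set.Icc (0 : ℝ) 1 | ¬ (f ⁻¹' {x}).Subsingleton}.Countable ∧
      -- (L3) the summand over `0` is a singleton or has non-isolated minimum:
      ((f ⁻¹' {(⟨0, by norm_num⟩ : Set.Icc (0 : ℝ) 1)}).Subsingleton ∨
        ∃ m ∈ f ⁻¹' {(⟨0, by norm_num⟩ : Set.Icc (0 : ℝ) 1)},
          (∀ a ∈ f ⁻¹' {(⟨0, by norm_num⟩ : Set.Icc (0 : ℝ) 1)}, m ≤ a) ∧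
          ∀ x ∈ f ⁻¹' {(⟨0, by norm_num⟩ : Set.Icc (0 : ℝ) 1)}, m < x →
            ∃ y ∈ f ⁻¹' {(⟨0, by norm_num⟩ : Set.Icc (0 : ℝ) 1)}, m < y ∧ y < x) := by
  obtain ⟨g, hg⟩ := hemb
  obtain ⟨m, hm⟩ : ∃ m : L, IsBot m := (hsup ∅).imp fun _ h _ => h.2 fun _ ha => ha.elim
  obtain ⟨M, hM⟩ : ∃ M : L, IsTop M := (hsup univ).imp fun _ h b => h.1 (mem_univ b)
  obtain ⟨F, hF⟩ := exists_isCantorFunction_of_not_countable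
    fun h => not_countable_univ (preimage_range g ▸ h.preimage hg.injective)
  have hm0 : F (g m) = 0 := hF.eq_zero_of_subset_Ici _ (range_subset_iff.2 (hg.monotone <| hm ·))
  have hM1 : F (g M) = 1 := hF.eq_one_of_subset_Iic _ (range_subset_iff.2 (hg.monotone <| hM ·))
  have hne : ∀ x : Icc (0 : ℝ) 1, ((F ∘ g) ⁻¹' {(x : ℝ)}).Nonempty := fun x =>
    hF.exists_apply_eq hg hsup (hm0.trans_le x.2.1) (x.2.2.trans_eq hM1.symm)
  let f : L → Icc (0 : ℝ) 1 := fun a =>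
    ⟨F (g a), hm0 ▸ hF.monotone (hg.monotone (hm a)), hM1 ▸ hF.monotone (hg.monotone (hM a))⟩
  have hfib : ∀ x, f ⁻¹' {x} = (F ∘ g) ⁻¹' {(x : ℝ)} := fun x => ext fun a => Subtype.ext_iff
  have hfmono : Monotone f := fun a b hab => Subtype.mk_le_mk.2 (hF.monotone (hg.monotone hab))
  have hlub := hF.isLUB_image_comp hg
  have hglb := hF.isGLB_image_comp hg
  refine ⟨f, hfmono, fun x => (hne x).imp fun a => Subtype.ext,
    fun x => hfib x ▸ hF.countable_preimage_singleton hg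
      (exists_isLeast_preimage_singleton hsup hglb (hne x))
      (exists_isGreatest_preimage_singleton hsup hlub (hne x)),
    fun x => hfib x ▸ exists_isLeast_preimage_singleton hsup hglb (hne x),
    fun x => hfib x ▸ exists_isGreatest_preimage_singleton hsup hlub (hne x),
    fun x => hfib x ▸ fun S => exists_lub_mem_preimage_singleton hsup hlub hglb (hne x),
    (countable_setOf_not_subsingleton_preimage hg hF.monotone).preimage Subtype.val_injective
      |>.mono fun x hx => by rwa [mem_ofPred_eq, hfib] at hx,
    Or.inr ⟨m, Subtype.ext hm0, fun a _ => hm a, fun a ha hma => ?_⟩⟩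
  obtain ⟨y, hmy, hya⟩ := hnoniso m hm a hma
  exact ⟨y, (ordConnected_singleton.preimage_mono hfmono).out (Subtype.ext hm0) ha
    ⟨hmy.le, hya.le⟩, hmy, hya⟩
end

section
/- Every at most countable complete linear order is Boolean; that is, if L is an at most countable linear order with a minimum, a maximum, and no gaps (every subset has a supremum), then L has dense jumps: for all x < y in L there exist a, b with x ≤ a < b ≤ y and no element strictly between a and b. -/
/-- Every at most countable complete linear order is Boolean, i.e. has dense jumps. -/
theorem countable_complete_is_boolean
    (L : Type*) [LinearOrder L] [Countable L]
    (hmin : ∃ m : L, IsBot m) (hmax : ∃ M : L, IsTop M)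
    (hsup : ∀ S : Set L, ∃ s, IsLUB S s) :
    ∀ x y : L, x < y → ∃ a b : L, x ≤ a ∧ a < b ∧ b ≤ y ∧
      ∀ z : L, ¬ (a < z ∧ z < b) := by
  intro x y hxy
  by_contra hcon
  push_neg at hcon
  -- hcon : ∀ a b, x ≤ a → a < b → b ≤ y → ∃ z, a < z ∧ z < b
  have hdense : ∀ a b : L, x ≤ a → a < b → b ≤ y → ∃ z, a < z ∧ z < b := by
    intro a b ha hab hb
    exact hcon a b ha hab hb
  set I := Set.Icc x y with hI
  haveI : DenselyOrdered I := by
    constructor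
    intro a b hab
    obtain ⟨z, hz1, hz2⟩ := hdense a.1 b.1 a.2.1 hab b.2.2
    exact ⟨⟨z, le_trans a.2.1 hz1.le, le_trans hz2.le b.2.2⟩, hz1, hz2⟩
  haveI : Nontrivial I := by
    refine ⟨⟨x, le_refl x, hxy.le⟩, ⟨y, hxy.le, le_refl y⟩, ?_⟩
    intro h
    exact absurd (congrArg Subtype.val h) hxy.ne
  obtain ⟨f⟩ := Order.embedding_from_countable_to_dense (α := ℚ) (β := I)
  set F : ℚ → L := fun q => (f q).1 with hF
  have hFmono : StrictMono F := fun a b hab => f.strictMono hab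
  set g : ℝ → L := fun r => (hsup (F '' {q : ℚ | (q : ℝ) < r})).choose with hg
  have hglub : ∀ r : ℝ, IsLUB (F '' {q : ℚ | (q : ℝ) < r}) (g r) := fun r =>
    (hsup (F '' {q : ℚ | (q : ℝ) < r})).choose_spec
  have hgmono : StrictMono g := by
    intro r s hrs
    obtain ⟨q1, hq1, hq1'⟩ := exists_rat_btwn hrs
    obtain ⟨q2, hq2, hq2'⟩ := exists_rat_btwn hq1'
    have h1 : g r ≤ F q1 := by
      apply (hglub r).2
      rintro _ ⟨q, hq, rfl⟩
      exact (hFmono.le_iff_le).2 (by exact_mod_cast (lt_trans hq hq1).le)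
    have h2 : F q2 ≤ g s := (hglub s).1 ⟨q2, hq2', rfl⟩
    calc g r ≤ F q1 := h1
      _ < F q2 := hFmono (by exact_mod_cast hq2)
      _ ≤ g s := h2
  have : Countable ℝ := Function.Injective.countable hgmono.injective
  exact not_countable (α := ℝ) this
end

section
/- Let A ⊆ B ⊆ ℕ and let L be a complete linear order such that the cardinality of B \ A plus 1 equals the cardinality of L (as cardinals; in particular L is nonempty and at most countable). Then there is a chain 𝓛 of sets with A ⊆ X ⊆ B for all X ∈ 𝓛, such that A, B ∈ 𝓛, the chain ⟨𝓛, ⊊⟩ is order-isomorphic to L, and for every cut ⟨𝒜, ℬ⟩ of 𝓛 one has ⋃𝒜 ∈ 𝓛, ⋂ℬ ∈ 𝓛 and |⋂ℬ \ ⋃𝒜| ≤ 1. -/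
/-!
Let `J ⊆ L` be the set of lower ends of jumps `x ⋖ y` of `L`. Since `L` is countable and complete,
every nondegenerate interval `[a, b)` contains such an `x`: otherwise `[a, b]` would be a dense
complete order containing a copy of `ℚ`, hence of `ℝ`. So `|J| + 1 = |L|`, and a bijection
`e : B \ A ≃ J` gives the chain `l ↦ A ∪ {n ∈ B \ A | e n < l}`. It is order isomorphic
to `L`; the union of the lower class of a cut is the chain member at the supremum `s` of that class,
and the intersection of the upper class is the member at `s` or, if `s ⋖ t`, at `t`, which adds
only the point `e⁻¹ s`.
-/

universe u

open Set

section

variable {L : Type*} [LinearOrder L]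

lemma IsLUB.eq_Iic_of_mem {D : Set L} {s : L} (hs : IsLUB D s)
    (hD : IsLowerSet D) (h : s ∈ D) : D = Iic s :=
  subset_antisymm (fun _ hd => hs.1 hd) (hD.Iic_subset h)

lemma IsLUB.eq_Iio_of_notMem {D : Set L} {s : L} (hs : IsLUB D s)
    (hD : IsLowerSet D) (h : s ∉ D) : D = Iio s := by
  refine subset_antisymm (fun d hd => (hs.1 hd).lt_of_ne ?_) fun x hx => ?_
  · rintro rfl; exact h hd
  · obtain ⟨d, hd, hxd⟩ := (lt_isLUB_iff hs).1 hx
    exact hD hxd.le hd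

lemma exists_isLowerSet_of_cut {α : Type*} {f : L → Set α} (hf : Monotone f)
    {𝒜 ℬ : Set (Set α)} (hun : 𝒜 ∪ ℬ = range f) (hdis : Disjoint 𝒜 ℬ)
    (hlt : ∀ X ∈ 𝒜, ∀ Y ∈ ℬ, X ⊂ Y) : ∃ D : Set L, IsLowerSet D ∧ 𝒜 = f '' D ∧ ℬ = f '' Dᶜ := by
  have hmem : ∀ l, f l ∈ 𝒜 ∪ ℬ := fun l => hun ▸ mem_range_self l
  have hℬ : f ⁻¹' ℬ = (f ⁻¹' 𝒜)ᶜ := by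
    ext l
    exact ⟨fun hB hA => hdis.notMem_of_mem_left hA hB, fun hA => (hmem l).resolve_left hA⟩
  refine ⟨f ⁻¹' 𝒜, fun a b hba ha => ?_, ?_, ?_⟩
  · by_contra hb
    exact (hlt _ ha _ ((hmem b).resolve_left hb)).not_subset (hf hba)
  · exact (image_preimage_eq_of_subset (hun ▸ subset_union_left)).symm
  · rw [← hℬ, image_preimage_eq_of_subset (hun ▸ subset_union_right)]

variable (L) in
def jumps : Set L := {x | ∃ y, x ⋖ y}

lemma not_countable_of_orderEmbedding_rat (hsup : ∀ S : Set L, ∃ s, IsLUB S s) (e : ℚ ↪o L) :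
    ¬ Countable L := by
  intro hL
  choose g hg using fun r : ℝ => hsup (e '' {q : ℚ | (q : ℝ) < r})
  have hg_mono : StrictMono g := by
    intro r r' hr
    obtain ⟨q₁, hrq₁, hq₁r'⟩ := exists_rat_btwn hr
    obtain ⟨q₂, hq₁q₂, hq₂r'⟩ := exists_rat_btwn hq₁r'
    calc g r ≤ e q₁ := (hg r).2 <| forall_mem_image.2 fun q hq =>
            e.le_iff_le.2 (by exact_mod_cast (hq.trans hrq₁).le)
      _ < e q₂ := e.lt_iff_lt.2 (by exact_mod_cast hq₁q₂)
      _ ≤ g r' := (hg r').1 (mem_image_of_mem e hq₂r')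
  exact not_countable hg_mono.injective.countable

lemma exists_mem_jumps_Ico [Countable L] (hsup : ∀ S : Set L, ∃ s, IsLUB S s) {a b : L}
    (hab : a < b) : ∃ j ∈ jumps L, j ∈ Ico a b := by
  by_contra! h
  have : DenselyOrdered (Icc a b) := by
    refine ⟨fun u v huv => ?_⟩
    have huv : (u : L) < v := huv
    have hnot : ¬ (u : L) ⋖ v := fun hcov => h u ⟨v, hcov⟩ ⟨u.2.1, huv.trans_le v.2.2⟩
    obtain ⟨w, huw, hwv⟩ := (not_covBy_iff huv).1 hnot
    exact ⟨⟨w, u.2.1.trans huw.le, hwv.le.trans v.2.2⟩, huw, hwv⟩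
  have : Nontrivial (Icc a b) := ⟨⟨a, left_mem_Icc.2 hab.le⟩, ⟨b, right_mem_Icc.2 hab.le⟩,
    fun h' => hab.ne (congrArg Subtype.val h')⟩
  obtain ⟨e⟩ := Order.embedding_from_countable_to_dense ℚ (Icc a b)
  exact not_countable_of_orderEmbedding_rat hsup (e.trans (OrderEmbedding.subtype _)) ‹_›

lemma jumps_eq_compl_singleton [Finite L] {M : L} (hM : IsTop M) : jumps L = {M}ᶜ := by
  ext x
  refine ⟨fun ⟨y, hxy⟩ hxM => (hxy.lt.trans_le (hM y)).ne hxM, fun hxM => ?_⟩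
  exact exists_covBy_of_wellFoundedLT fun hx => hxM ((hM x).antisymm (hx (hM x)))

lemma infinite_jumps [Countable L] [Infinite L] (hsup : ∀ S : Set L, ∃ s, IsLUB S s) :
    (jumps L).Infinite := by
  have hinj : Function.Injective fun l : L => jumps L ∩ Iio l := by
    refine StrictMono.injective fun a b hab => ?_
    obtain ⟨j, hj, haj, hjb⟩ := exists_mem_jumps_Ico hsup hab
    exact ssubset_iff_subset_not_subset.2
      ⟨inter_subset_inter_right _ (Iio_subset_Iio hab.le), fun h => (h ⟨hj, hjb⟩).2.not_ge haj⟩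
  exact fun hfin => infinite_of_injective_forall_mem hinj (fun l => inter_subset_left)
    hfin.finite_subsets

lemma mk_jumps_add_one [Countable L] (hsup : ∀ S : Set L, ∃ s, IsLUB S s) {M : L}
    (hM : IsTop M) : Cardinal.mk (jumps L) + 1 = Cardinal.mk L := by
  cases finite_or_infinite L
  · rw [jumps_eq_compl_singleton hM, ← Cardinal.mk_singleton M, add_comm, Cardinal.mk_sum_compl]
  · have := (infinite_jumps hsup).to_subtype
    rw [Cardinal.mk_eq_aleph0, Cardinal.mk_eq_aleph0 L, Cardinal.add_one_eq le_rfl]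

end

section JumpChain

variable {α L : Type*} [LinearOrder L] {A B : Set α} (e : ↥(B \ A) ≃ ↥(jumps L))

def jumpChain (l : L) : Set α := A ∪ {n | ∃ h : n ∈ B \ A, (e ⟨n, h⟩ : L) < l}

lemma subset_jumpChain (l : L) : A ⊆ jumpChain e l := subset_union_left

lemma jumpChain_subset (hAB : A ⊆ B) (l : L) : jumpChain e l ⊆ B := by
  rintro n (hn | ⟨hn, -⟩)
  exacts [hAB hn, hn.1]

lemma jumpChain_mono : Monotone (jumpChain e) := by
  rintro a b hab n (hn | ⟨hn, hlt⟩)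
  exacts [Or.inl hn, Or.inr ⟨hn, hlt.trans_le hab⟩]

lemma jumpChain_strictMono [Countable L] (hsup : ∀ S : Set L, ∃ s, IsLUB S s) :
    StrictMono (jumpChain e) := by
  intro a b hab
  obtain ⟨j, hj, haj, hjb⟩ := exists_mem_jumps_Ico hsup hab
  set n := e.symm ⟨j, hj⟩
  have hn : (e ⟨n, n.2⟩ : L) = j := by simp [n]
  refine ssubset_iff_subset_not_subset.2 ⟨jumpChain_mono e hab.le, fun h => ?_⟩
  rcases h (Or.inr ⟨n.2, hn.trans_lt hjb⟩) with hA | ⟨_, hlt⟩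
  exacts [n.2.2 hA, (hn.symm.trans_lt hlt).not_ge haj]

lemma jumpChain_of_isBot {m : L} (hm : IsBot m) : jumpChain e m = A :=
  union_eq_left.2 fun _ ⟨_, hlt⟩ => ((hm _).not_gt hlt).elim

lemma jumpChain_of_isTop (hAB : A ⊆ B) {M : L} (hM : IsTop M) : jumpChain e M = B := by
  refine subset_antisymm (jumpChain_subset e hAB M) fun n hn => ?_
  by_cases hnA : n ∈ A
  · exact Or.inl hnA
  · obtain ⟨y, hy⟩ := (e ⟨n, hn, hnA⟩).2
    exact Or.inr ⟨⟨hn, hnA⟩, hy.lt.trans_le (hM y)⟩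

lemma biUnion_jumpChain_of_isLUB {D : Set L} {s : L} (hD : D.Nonempty) (hs : IsLUB D s) :
    ⋃ d ∈ D, jumpChain e d = jumpChain e s := by
  refine subset_antisymm (iUnion₂_subset fun d hd => jumpChain_mono e (hs.1 hd)) ?_
  rintro n (hn | ⟨hn, hlt⟩)
  · obtain ⟨d, hd⟩ := hD
    exact mem_biUnion hd (Or.inl hn)
  · obtain ⟨d, hd, hlt'⟩ := (lt_isLUB_iff hs).1 hlt
    exact mem_biUnion hd (Or.inr ⟨hn, hlt'⟩)

lemma biInter_Ioi_jumpChain {s : L} (hs : s ∉ jumps L) (hne : (Ioi s).Nonempty) :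
    ⋂ u ∈ Ioi s, jumpChain e u = jumpChain e s := by
  refine subset_antisymm (fun n hn => ?_) (subset_iInter₂ fun u hu => jumpChain_mono e hu.le)
  obtain ⟨u, hu⟩ := hne
  rcases mem_iInter₂.1 hn u hu with hA | ⟨hBA, -⟩
  · exact Or.inl hA
  refine Or.inr ⟨hBA, lt_of_not_ge fun hsn => ?_⟩
  have hlt : s < e ⟨n, hBA⟩ := hsn.lt_of_ne fun h => hs (h ▸ (e ⟨n, hBA⟩).2)
  rcases mem_iInter₂.1 hn _ hlt with hA | ⟨_, hlt'⟩
  exacts [hBA.2 hA, lt_irrefl _ hlt']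

lemma jumpChain_diff_subsingleton {s t : L} (hst : s ⋖ t) :
    (jumpChain e t \ jumpChain e s).Subsingleton := by
  have key : ∀ n ∈ jumpChain e t \ jumpChain e s, ∃ h : n ∈ B \ A, (e ⟨n, h⟩ : L) = s := by
    rintro n ⟨hA | ⟨hBA, hlt⟩, hns⟩
    · exact absurd (Or.inl hA) hns
    · exact ⟨hBA, hst.le_of_lt hlt |>.antisymm (not_lt.1 fun h => hns (Or.inr ⟨hBA, h⟩))⟩
  intro n hn m hm
  obtain ⟨_, hns⟩ := key n hn
  obtain ⟨_, hms⟩ := key m hm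
  exact congrArg Subtype.val (e.injective (Subtype.ext (hns.trans hms.symm)))

lemma exists_cut_jumpChain (hsup : ∀ S : Set L, ∃ s, IsLUB S s) {D : Set L} (hD : IsLowerSet D)
    (hne : D.Nonempty) (hne' : Dᶜ.Nonempty) :
    ∃ s t, ⋃₀ (jumpChain e '' D) = jumpChain e s ∧ ⋂₀ (jumpChain e '' Dᶜ) = jumpChain e t ∧
      (jumpChain e t \ jumpChain e s).Subsingleton := by
  obtain ⟨s, hs⟩ := hsup D
  have hunion : ⋃₀ (jumpChain e '' D) = jumpChain e s := by
    rw [sUnion_image]; exact biUnion_jumpChain_of_isLUB e hne hs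
  rw [sInter_image]
  by_cases hsD : s ∈ D
  · have hDc : Dᶜ = Ioi s := by rw [hs.eq_Iic_of_mem hD hsD, compl_Iic]
    rw [hDc] at hne' ⊢
    by_cases hsJ : s ∈ jumps L
    · obtain ⟨t, hst⟩ := hsJ
      refine ⟨s, t, hunion, subset_antisymm (biInter_subset_of_mem hst.lt)
        (subset_iInter₂ fun u hu => jumpChain_mono e (hst.ge_of_gt hu)),
        jumpChain_diff_subsingleton e hst⟩
    · exact ⟨s, s, hunion, biInter_Ioi_jumpChain e hsJ hne', by simp⟩
  · have hDc : Dᶜ = Ici s := by rw [hs.eq_Iio_of_notMem hD hsD, compl_Iio]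
    rw [hDc]
    exact ⟨s, s, hunion, subset_antisymm (biInter_subset_of_mem (mem_Ici.2 le_rfl))
      (subset_iInter₂ fun u hu => jumpChain_mono e hu), by simp⟩

end JumpChain

theorem chain_between_sets_of_naturals
    (A B : Set ℕ) (hAB : A ⊆ B)
    (L : Type u) [LinearOrder L]
    (hmin : ∃ m : L, IsBot m) (hmax : ∃ M : L, IsTop M)
    (hsup : ∀ S : Set L, ∃ s, IsLUB S s)
    (hcard : Cardinal.lift.{u} (Cardinal.mk ↥(B \ A)) + 1 = Cardinal.lift.{0} (Cardinal.mk L)) :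
    ∃ 𝓛 : Set (Set ℕ),
      (∀ X ∈ 𝓛, A ⊆ X ∧ X ⊆ B) ∧ A ∈ 𝓛 ∧ B ∈ 𝓛 ∧
      IsChain (· ⊆ ·) 𝓛 ∧ Nonempty (L ≃o 𝓛) ∧
      ∀ 𝒜 ℬ : Set (Set ℕ), 𝒜 ∪ ℬ = 𝓛 → Disjoint 𝒜 ℬ →
        𝒜.Nonempty → ℬ.Nonempty →
        (∀ X ∈ 𝒜, ∀ Y ∈ ℬ, X ⊂ Y) →
        ⋃₀ 𝒜 ∈ 𝓛 ∧ ⋂₀ ℬ ∈ 𝓛 ∧ (⋂₀ ℬ \ ⋃₀ 𝒜).Subsingleton := by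
  obtain ⟨m, hm⟩ := hmin
  obtain ⟨M, hM⟩ := hmax
  have : Countable L := by
    rw [← Cardinal.mk_le_aleph0_iff, ← Cardinal.lift_le_aleph0.{u, 0}, ← hcard,
      Cardinal.add_le_aleph0]
    exact ⟨Cardinal.lift_le_aleph0.2 Cardinal.mk_le_aleph0, Cardinal.one_le_aleph0⟩
  obtain ⟨e⟩ : Nonempty (↥(B \ A) ≃ ↥(jumps L)) := by
    rw [← Cardinal.lift_mk_eq', ← Cardinal.add_one_inj, hcard, ← mk_jumps_add_one hsup hM,
      Cardinal.lift_add, Cardinal.lift_one]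
  have hf := jumpChain_strictMono e hsup
  refine ⟨range (jumpChain e), ?_, ⟨m, jumpChain_of_isBot e hm⟩, ⟨M, jumpChain_of_isTop e hAB hM⟩,
    hf.monotone.isChain_range, ⟨hf.orderIso _⟩, ?_⟩
  · rintro _ ⟨l, rfl⟩
    exact ⟨subset_jumpChain e l, jumpChain_subset e hAB l⟩
  · intro 𝒜 ℬ hun hdis h𝒜 hℬ hlt
    obtain ⟨D, hD, rfl, rfl⟩ := exists_isLowerSet_of_cut hf.monotone hun hdis hlt
    obtain ⟨s, t, hs, ht, hst⟩ := exists_cut_jumpChain e hsup hD h𝒜.of_image hℬ.of_image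
    exact ⟨hs ▸ mem_range_self s, ht ▸ mem_range_self t, hs ▸ ht ▸ hst⟩
end

section
/- Fix an integer n ≥ 3 and a set J_0 ⊆ ℚ that is dense in ℚ. Let ℙ be the set of finite graphs p = ⟨G_p, ρ_p⟩ with G_p a finite subset of ℚ and ρ_p a set of 2-element subsets of G_p, such that: p contains no clique of size n; (P1) for all a, b ∈ ℚ, if {a,b} ∈ ρ_p and {a+1,b} ∈ ρ_p then b > a+1; and (P2) {a, a−1} ∉ ρ_p for all a ∈ ℚ. Order ℙ by p ≤ q iff G_p ⊇ G_q and ρ_p ∩ [G_q]² = ρ_q. For finite sets K ⊆ H ⊆ ℚ with H nonempty and an integer m ≥ 1, let D^H_{K,m} be the set of p ∈ ℙ such that H ⊆ G_p and, if the induced graph ⟨K, ρ_p ∩ [K]²⟩ contains no clique of size n−1, then there exists q ∈ J_0 with max H < q < max H + 1/m, {q,k} ∈ ρ_p for all k ∈ K, and {q,h} ∉ ρ_p for all h ∈ H \ K. Then D^H_{K,m} is dense in ⟨ℙ, ≤⟩: for every p₀ ∈ ℙ there is p ∈ D^H_{K,m} with p ≤ p₀. -/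
/-- A finite graph condition: a finite vertex set `G ⊆ ℚ` together with a set of
edges, each edge being a 2-element subset of `G`. -/
def IsFinGraph (p : Finset ℚ × Finset (Finset ℚ)) : Prop :=
  ∀ e ∈ p.2, e ⊆ p.1 ∧ e.card = 2

/-- The condition `p` contains a clique of size `k` inside the vertex set `F₀`. -/
def HasCliqueIn (p : Finset ℚ × Finset (Finset ℚ)) (F₀ : Finset ℚ) (k : ℕ) : Prop :=
  ∃ F : Finset ℚ, F ⊆ F₀ ∧ F.card = k ∧
    ∀ a ∈ F, ∀ b ∈ F, a ≠ b → ({a, b} : Finset ℚ) ∈ p.2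

/-- Membership in the forcing notion `ℙ`. -/
def MemP (n : ℕ) (p : Finset ℚ × Finset (Finset ℚ)) : Prop :=
  IsFinGraph p ∧
  ¬ HasCliqueIn p p.1 n ∧
  (∀ a b : ℚ, ({a, b} : Finset ℚ) ∈ p.2 → ({a + 1, b} : Finset ℚ) ∈ p.2 → b > a + 1) ∧
  (∀ a : ℚ, ({a, a - 1} : Finset ℚ) ∉ p.2)

/-- The order on `ℙ`: `p ≤ q` iff `G_p ⊇ G_q` and `ρ_p ∩ [G_q]² = ρ_q`. -/
def PLe (p q : Finset ℚ × Finset (Finset ℚ)) : Prop :=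
  q.1 ⊆ p.1 ∧ ∀ e : Finset ℚ, e ∈ q.2 ↔ (e ∈ p.2 ∧ e ⊆ q.1)


lemma pair_eq_cases {x y q k : ℚ} (hqk : q ≠ k) (h : ({x, y} : Finset ℚ) = {q, k}) :
    (x = q ∧ y = k) ∨ (x = k ∧ y = q) := by
  have hx : x ∈ ({q, k} : Finset ℚ) := by rw [← h]; simp
  have hy : y ∈ ({q, k} : Finset ℚ) := by rw [← h]; simp
  have hq : q ∈ ({x, y} : Finset ℚ) := by rw [h]; simp
  have hk : k ∈ ({x, y} : Finset ℚ) := by rw [h]; simp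
  simp only [Finset.mem_insert, Finset.mem_singleton] at hx hy hq hk
  rcases hx with rfl | rfl <;> rcases hy with h2 | h2 <;> tauto

theorem density_of_extension_sets
    (n : ℕ) (hn : 3 ≤ n) (J₀ : Set ℚ)
    (hJ₀ : ∀ p q : ℚ, p < q → ∃ j ∈ J₀, p < j ∧ j < q)
    (H K : Finset ℚ) (hKH : K ⊆ H) (hH : H.Nonempty)
    (m : ℕ) (hm : 1 ≤ m)
    (p₀ : Finset ℚ × Finset (Finset ℚ)) (hp₀ : MemP n p₀) :
    ∃ p : Finset ℚ × Finset (Finset ℚ), MemP n p ∧ PLe p p₀ ∧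
      H ⊆ p.1 ∧
      (¬ HasCliqueIn p K (n - 1) →
        ∃ q ∈ J₀, H.max' hH < q ∧ q < H.max' hH + 1 / (m : ℚ) ∧
          (∀ k ∈ K, ({q, k} : Finset ℚ) ∈ p.2) ∧
          ∀ h ∈ H, h ∉ K → ({q, h} : Finset ℚ) ∉ p.2) := by
  classical
  obtain ⟨hfg, hcl, hP1, hP2⟩ := hp₀
  set G₁ : Finset ℚ := p₀.1 ∪ H with hG₁def
  set p₁ : Finset ℚ × Finset (Finset ℚ) := (G₁, p₀.2) with hp₁def
  have hsubG₁ : p₀.1 ⊆ G₁ := Finset.subset_union_left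
  have hHG₁ : H ⊆ G₁ := Finset.subset_union_right
  -- p₁ is in ℙ
  have hmem₁ : MemP n p₁ := by
    refine ⟨fun e he => ⟨(hfg e he).1.trans hsubG₁, (hfg e he).2⟩, ?_, hP1, hP2⟩
    rintro ⟨F, hFsub, hFcard, hFcli⟩
    apply hcl
    refine ⟨F, ?_, hFcard, hFcli⟩
    intro a ha
    have h1 : 1 < F.card := by omega
    obtain ⟨b, hb, hba⟩ := Finset.exists_mem_ne h1 a
    have := hFcli a ha b hb (Ne.symm hba)
    exact (hfg _ this).1 (by simp)
  by_cases hclK : HasCliqueIn p₁ K (n - 1)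
  · refine ⟨p₁, hmem₁, ⟨hsubG₁, fun e => ⟨fun he => ⟨he, (hfg e he).1⟩, fun h => h.1⟩⟩,
      hHG₁, fun h => absurd hclK h⟩
  · -- choose q avoiding the bad set
    set M : ℚ := H.max' hH with hMdef
    have hε : (0 : ℚ) < 1 / m := by
      have : (0 : ℚ) < m := by exact_mod_cast hm
      positivity
    set B : Finset ℚ := G₁ ∪ G₁.image (· + 1) ∪ G₁.image (· - 1) with hBdef
    set L : Finset ℚ := insert M (B.filter (fun b => b < M + 1 / m)) with hLdef
    have hLne : L.Nonempty := ⟨M, by simp [hLdef]⟩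
    set c : ℚ := L.max' hLne with hcdef
    have hcM : M ≤ c := Finset.le_max' _ _ (by simp [hLdef])
    have hclt : c < M + 1 / m := by
      have := Finset.max'_mem L hLne
      rw [← hcdef] at this
      simp only [hLdef, Finset.mem_insert, Finset.mem_filter] at this
      rcases this with h | h
      · rw [h]; linarith
      · exact h.2
    obtain ⟨q, hqJ, hcq, hqε⟩ := hJ₀ c (M + 1 / m) hclt
    have hqM : M < q := lt_of_le_of_lt hcM hcq
    have hqB : q ∉ B := by
      intro hq
      have : q ∈ L := by
        simp only [hLdef, Finset.mem_insert, Finset.mem_filter]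
        exact Or.inr ⟨hq, hqε⟩
      exact absurd (Finset.le_max' L q this) (not_le.mpr hcq)
    have hqG : q ∉ G₁ := fun h => hqB (by simp [hBdef, Finset.mem_union]; tauto)
    have hq1 : q + 1 ∉ G₁ := by
      intro h
      apply hqB
      simp only [hBdef, Finset.mem_union, Finset.mem_image]
      exact Or.inr ⟨q + 1, h, by ring⟩
    have hq2 : q - 1 ∉ G₁ := by
      intro h
      apply hqB
      simp only [hBdef, Finset.mem_union, Finset.mem_image]
      exact Or.inl (Or.inr ⟨q - 1, h, by ring⟩)
    have hKG₁ : K ⊆ G₁ := hKH.trans hHG₁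
    have hqk : ∀ k ∈ K, q ≠ k := fun k hk h => hqG (h ▸ hKG₁ hk)
    have hkM : ∀ k ∈ K, k ≤ M := fun k hk => Finset.le_max' _ _ (hKH hk)
    -- the extension p₂
    set p₂ : Finset ℚ × Finset (Finset ℚ) :=
      (insert q G₁, p₀.2 ∪ K.image (fun k => ({q, k} : Finset ℚ))) with hp₂def
    have hmem₂ : ∀ e : Finset ℚ, e ∈ p₂.2 ↔ e ∈ p₀.2 ∨ ∃ k ∈ K, e = ({q, k} : Finset ℚ) := by
      intro e
      simp only [hp₂def, Finset.mem_union, Finset.mem_image]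
      constructor
      · rintro (h | ⟨k, hk, rfl⟩)
        · exact Or.inl h
        · exact Or.inr ⟨k, hk, rfl⟩
      · rintro (h | ⟨k, hk, rfl⟩)
        · exact Or.inl h
        · exact Or.inr ⟨k, hk, rfl⟩
    have hold_sub : ∀ e ∈ p₀.2, e ⊆ G₁ := fun e he => (hfg e he).1.trans hsubG₁
    have hq_not_old : ∀ e ∈ p₀.2, q ∉ e := fun e he hq => hqG (hold_sub e he hq)
    -- P1 for p₂
    have hP1₂ : ∀ a b : ℚ, ({a, b} : Finset ℚ) ∈ p₂.2 → ({a + 1, b} : Finset ℚ) ∈ p₂.2 →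
        b > a + 1 := by
      intro a b h1 h2
      rw [hmem₂] at h1 h2
      rcases h1 with h1 | ⟨k₁, hk₁, he₁⟩
      · rcases h2 with h2 | ⟨k₂, hk₂, he₂⟩
        · exact hP1 a b h1 h2
        · rcases pair_eq_cases (hqk k₂ hk₂) he₂ with ⟨ha, hb⟩ | ⟨ha, hb⟩
          · exfalso
            apply hq2
            have : a ∈ G₁ := hold_sub _ h1 (by simp)
            have : a = q - 1 := by linarith
            rwa [← this]
          · exact absurd (hold_sub _ h1 (by simp [hb])) (hb ▸ hqG)
      · rcases pair_eq_cases (hqk k₁ hk₁) he₁ with ⟨ha, hb⟩ | ⟨ha, hb⟩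
        · exfalso
          rcases h2 with h2 | ⟨k₂, hk₂, he₂⟩
          · exact hq1 (ha ▸ hold_sub _ h2 (by simp))
          · rcases pair_eq_cases (hqk k₂ hk₂) he₂ with ⟨ha2, hb2⟩ | ⟨ha2, hb2⟩
            · rw [ha] at ha2; linarith
            · exact hqk k₁ hk₁ (hb2 ▸ hb)
        · -- a = k₁, b = q
          rcases h2 with h2 | ⟨k₂, hk₂, he₂⟩
          · exact absurd (hold_sub _ h2 (by simp [hb])) (hb ▸ hqG)
          · rcases pair_eq_cases (hqk k₂ hk₂) he₂ with ⟨ha2, hb2⟩ | ⟨ha2, hb2⟩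
            · exact absurd (hb.symm.trans hb2) (hqk k₂ hk₂)
            · have := hkM k₂ hk₂
              rw [hb, ha2]
              linarith [hqM]
    -- P2 for p₂
    have hP2₂ : ∀ a : ℚ, ({a, a - 1} : Finset ℚ) ∉ p₂.2 := by
      intro a h
      rw [hmem₂] at h
      rcases h with h | ⟨k, hk, he⟩
      · exact hP2 a h
      · rcases pair_eq_cases (hqk k hk) he with ⟨ha, hb⟩ | ⟨ha, hb⟩
        · apply hq2
          have : k = q - 1 := by rw [← hb, ha]
          exact this ▸ hKG₁ hk
        · apply hq1
          have : k = q + 1 := by rw [← ha]; linarith [hb.symm ▸ (rfl : a - 1 = a - 1), hb]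
          exact this ▸ hKG₁ hk
    -- IsFinGraph p₂
    have hfg₂ : IsFinGraph p₂ := by
      intro e he
      rw [hmem₂] at he
      rcases he with he | ⟨k, hk, rfl⟩
      · exact ⟨((hfg e he).1.trans hsubG₁).trans (Finset.subset_insert _ _), (hfg e he).2⟩
      · constructor
        · intro x hx
          simp only [Finset.mem_insert, Finset.mem_singleton] at hx
          rcases hx with rfl | rfl
          · exact Finset.mem_insert_self _ _
          · exact Finset.mem_insert_of_mem (hKG₁ hk)
        · exact Finset.card_pair (hqk k hk)
    -- no n-clique in p₂
    have hcl₂ : ¬ HasCliqueIn p₂ p₂.1 n := by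
      rintro ⟨F, hFsub, hFcard, hFcli⟩
      by_cases hqF : q ∈ F
      · apply hclK
        refine ⟨F.erase q, ?_, by rw [Finset.card_erase_of_mem hqF, hFcard], ?_⟩
        · intro x hx
          obtain ⟨hxq, hxF⟩ := Finset.mem_erase.mp hx
          have := hFcli x hxF q hqF hxq
          rw [hmem₂] at this
          rcases this with h | ⟨k, hk, he⟩
          · exact absurd (hold_sub _ h (by simp)) hqG
          · rcases pair_eq_cases (hqk k hk) he with ⟨ha, _⟩ | ⟨ha, _⟩
            · exact absurd ha hxq
            · exact ha ▸ hk
        · intro a ha b hb hab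
          obtain ⟨haq, haF⟩ := Finset.mem_erase.mp ha
          obtain ⟨hbq, hbF⟩ := Finset.mem_erase.mp hb
          have := hFcli a haF b hbF hab
          rw [hmem₂] at this
          rcases this with h | ⟨k, hk, he⟩
          · exact h
          · rcases pair_eq_cases (hqk k hk) he with ⟨ha', _⟩ | ⟨_, hb'⟩
            · exact absurd ha' haq
            · exact absurd hb' hbq
      · apply hmem₁.2.1
        refine ⟨F, ?_, hFcard, ?_⟩
        · intro x hx
          rcases Finset.mem_insert.mp (hFsub hx) with rfl | h
          · exact absurd hx hqF
          · exact h
        · intro a ha b hb hab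
          have := hFcli a ha b hb hab
          rw [hmem₂] at this
          rcases this with h | ⟨k, hk, he⟩
          · exact h
          · exfalso
            rcases pair_eq_cases (hqk k hk) he with ⟨ha', _⟩ | ⟨_, hb'⟩
            · exact hqF (ha' ▸ ha)
            · exact hqF (hb' ▸ hb)
    refine ⟨p₂, ⟨hfg₂, hcl₂, hP1₂, hP2₂⟩, ⟨hsubG₁.trans (Finset.subset_insert _ _), ?_⟩,
      hHG₁.trans (Finset.subset_insert _ _), fun _ => ⟨q, hqJ, hqM, hqε, ?_, ?_⟩⟩
    · intro e
      constructor
      · exact fun he => ⟨(hmem₂ e).mpr (Or.inl he), (hfg e he).1⟩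
      · rintro ⟨he, hesub⟩
        rw [hmem₂] at he
        rcases he with he | ⟨k, hk, rfl⟩
        · exact he
        · exact absurd (hesub (by simp)) (fun h => hqG (hsubG₁ h))
    · exact fun k hk => (hmem₂ _).mpr (Or.inr ⟨k, hk, rfl⟩)
    · intro h hh hhK he
      rw [hmem₂] at he
      rcases he with he | ⟨k, hk, heq⟩
      · exact hqG (hold_sub _ he (by simp))
      · rcases pair_eq_cases (hqk k hk) heq with ⟨_, hb⟩ | ⟨ha, _⟩
        · exact hhK (hb ▸ hk)
        · exact hqk k hk ha
end

section
/- For every integer n ≥ 3 there exist a graph R with vertex set ℚ and a set J_0 ⊆ ℚ such that both J_0 and ℚ \ J_0 are dense in ℚ, and: (iii) for every x ∈ ℝ and every set A with J_0 ∩ (−∞,x) ⊆ A ⊆ ℚ ∩ (−∞,x), and also for every A with J_0 ⊆ A ⊆ ℚ, the induced subgraph of R on A is K_n-free and satisfies the Henson extension property (hence is isomorphic to the Henson graph H_n); and (iv) for every q ∈ J_0 and every set C with J_0 ∩ (−∞,q] ⊆ C ⊆ ℚ ∩ (−∞,q], the induced subgraph of R on C is not isomorphic to H_n. -/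
/-!
The graph is built in countably many stages on a countable linear order carrying a colouring
`c : α → ℕ` with dense colour classes (on `ℚ`: the exponent of `2` in the denominator). Stage `s`
serves one request `(K, lo, hi)`, every request recurring at arbitrarily late stages: if `K ≤ lo`,
the colours on `K` are at most `s` and `K` spans no `(n-1)`-clique so far, it joins `K` to every
point of colour `s + 1` in `(lo, hi)`. The colour of such a witness records its stage, so its lower
neighbours are exactly the `K` of that stage. Hence the top vertex of an `n`-clique would see an
`(n-1)`-clique inside a served `K`, whose edges all predate that stage; and any set containing all
witnesses just above each of its finite subsets has the extension property. Two witnesses `p < q`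
of one stage have the same lower neighbours, so no vertex below `q` separates `q` from `p`.
-/

open SimpleGraph

/-- The Henson extension property for a graph `G` (relative to `n`). -/
def HensonProperty (n : ℕ) {V : Type*} (G : SimpleGraph V) : Prop :=
  ∀ H K : Finset V, K ⊆ H →
    (¬ ∃ F : Finset V, F ⊆ K ∧ G.IsNClique (n - 1) F) →
    ∃ v, v ∉ H ∧ (∀ k ∈ K, G.Adj v k) ∧ ∀ h ∈ H, h ∉ K → ¬ G.Adj v h

namespace HensonProperty

variable {n : ℕ} {V W : Type*} {G : SimpleGraph V} {G' : SimpleGraph W}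

theorem of_iso (e : G ≃g G') (h : HensonProperty n G') : HensonProperty n G := by
  intro H K hKH hK
  let f : V ↪ W := e.toEquiv.toEmbedding
  have hf : ∀ {x} {S : Finset V}, f x ∈ S.map f ↔ x ∈ S := Finset.mem_map' f
  obtain ⟨v, hvH, hvK, hvH'⟩ := h (H.map f) (K.map f) (Finset.map_subset_map.2 hKH) <| by
    rintro ⟨F, hFK, hF⟩
    obtain ⟨F, hF₀K, rfl⟩ := Finset.subset_map_iff.1 hFK
    refine hK ⟨F, hF₀K, ⟨fun x hx y hy hxy => ?_, by simpa using hF.2⟩⟩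
    exact e.map_adj_iff.1 (hF.1 (hf.2 hx) (hf.2 hy) (e.injective.ne hxy))
  refine ⟨e.symm v, fun hv => hvH ?_, fun k hk => ?_, fun x hx hxK hvx => ?_⟩
  · simpa [f] using hf.2 hv
  · simpa [f] using e.symm.map_adj_iff.2 (hvK _ (hf.2 hk))
  · exact hvH' _ (hf.2 hx) (mt hf.1 hxK) (by simpa [f] using e.map_adj_iff.2 hvx)

theorem exists_adj_not_adj (h : HensonProperty n G) (hn : 3 ≤ n) {p q : V} (hpq : p ≠ q) :
    ∃ v, v ≠ p ∧ v ≠ q ∧ G.Adj v q ∧ ¬ G.Adj v p := by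
  classical
  obtain ⟨v, hv, hvq, hvp⟩ := h {p, q} {q} (by simp) <| by
    rintro ⟨F, hF, hFc⟩
    have := (Finset.card_le_card hF).trans_eq (Finset.card_singleton q)
    have := hFc.card_eq
    omega
  simp only [Finset.mem_insert, Finset.mem_singleton, not_or] at hv
  exact ⟨v, hv.1, hv.2, hvq q (Finset.mem_singleton_self q), hvp p (by simp) (by simpa using hpq)⟩

end HensonProperty

namespace HensonConstruction

variable {α : Type*}

structure Request (α : Type*) where
  nbhd : Finset α
  lo : α
  hi : α

instance [Countable α] : Countable (Request α) :=
  Function.Injective.countable (f := fun r : Request α => (r.nbhd, r.lo, r.hi))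
    fun ⟨_, _, _⟩ ⟨_, _, _⟩ h => by simpa using h

instance [Nonempty α] : Nonempty (Request α) :=
  ⟨⟨∅, Classical.arbitrary α, Classical.arbitrary α⟩⟩

section

variable [Countable α] [Nonempty α]

noncomputable def request (s : ℕ) : Request α :=
  (exists_surjective_nat (Request α)).choose s.unpair.2

theorem exists_le_request_eq (r : Request α) (m : ℕ) : ∃ s, m ≤ s ∧ request s = r := by
  obtain ⟨i, hi⟩ := (exists_surjective_nat (Request α)).choose_spec r
  exact ⟨Nat.pair m i, Nat.left_le_pair m i, by simp [request, hi]⟩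

end

variable [LinearOrder α] (n : ℕ) (c : α → ℕ)

def HasDenseFibres : Prop :=
  ∀ m {a b : α}, a < b → ∃ v, a < v ∧ v < b ∧ c v = m

-- Colour `0` is never used by witnesses, and colour `s + 1` is too large for any neighbourhood
-- requested at stage `s` or earlier.
def Request.witnesses (r : Request α) (s : ℕ) : Set α :=
  {v | r.lo < v ∧ v < r.hi ∧ c v = s + 1}

def Request.Servable (r : Request α) (G : SimpleGraph α) (s : ℕ) : Prop :=
  r.lo < r.hi ∧ (∀ k ∈ r.nbhd, k ≤ r.lo ∧ c k ≤ s) ∧ ∀ F ⊆ r.nbhd, ¬ G.IsNClique (n - 1) F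

variable [Countable α] [Nonempty α]

def stageGraph (G : SimpleGraph α) (s : ℕ) : SimpleGraph α :=
  fromRel fun u v => (request s).Servable n c G s ∧ u ∈ (request s).nbhd ∧
    v ∈ (request s).witnesses c s

def approx : ℕ → SimpleGraph α
  | 0 => ⊥
  | s + 1 => approx s ⊔ stageGraph n c (approx s) s

def IsActive (s : ℕ) : Prop := (request s).Servable n c (approx n c s) s

def hensonGraph : SimpleGraph α := ⨆ s, stageGraph n c (approx n c s) s

def witnessSet : Set α := {v | ∃ s, IsActive n c s ∧ v ∈ (request s).witnesses c s}

variable {n c}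

theorem stageGraph_le_approx {t s : ℕ} (hts : t < s) :
    stageGraph n c (approx n c t) t ≤ approx n c s := by
  induction s, hts using Nat.le_induction with
  | base => exact le_sup_right
  | succ s _ ih => exact ih.trans le_sup_left

theorem approx_le_hensonGraph (s : ℕ) : approx n c s ≤ hensonGraph n c := by
  induction s with
  | zero => exact bot_le
  | succ s ih => exact sup_le ih (le_iSup (fun t => stageGraph n c (approx n c t) t) s)

theorem stageGraph_adj_of_mem {s : ℕ} (hs : IsActive n c s) {u v : α}
    (hu : u ∈ (request s).nbhd) (hv : v ∈ (request s).witnesses c s) :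
    (stageGraph n c (approx n c s) s).Adj u v :=
  (fromRel_adj _ u v).2 ⟨((hs.2.1 u hu).1.trans_lt hv.1).ne, Or.inl ⟨hs, hu, hv⟩⟩

theorem hensonGraph_adj_of_mem {s : ℕ} (hs : IsActive n c s) {u v : α}
    (hu : u ∈ (request s).nbhd) (hv : v ∈ (request s).witnesses c s) :
    (hensonGraph n c).Adj u v :=
  iSup_adj.2 ⟨s, stageGraph_adj_of_mem hs hu hv⟩

theorem exists_isActive_of_adj {u v : α} (h : (hensonGraph n c).Adj u v) (huv : u < v) :
    ∃ s, IsActive n c s ∧ u ∈ (request s).nbhd ∧ v ∈ (request s).witnesses c s := by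
  obtain ⟨s, hs⟩ := iSup_adj.1 h
  obtain ⟨-, ⟨hs, hu, hv⟩ | ⟨hs, hv, hu⟩⟩ := (fromRel_adj _ u v).1 hs
  · exact ⟨s, hs, hu, hv⟩
  · exact absurd ((hs.2.1 v hv).1.trans_lt hu.1) huv.not_gt

/-- The colour of a witness determines its stage. -/
theorem adj_iff_mem_nbhd {s : ℕ} (hs : IsActive n c s) {u v : α}
    (hv : v ∈ (request s).witnesses c s) (huv : u < v) :
    (hensonGraph n c).Adj u v ↔ u ∈ (request s).nbhd := by
  refine ⟨fun h => ?_, fun hu => hensonGraph_adj_of_mem hs hu hv⟩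
  obtain ⟨t, -, hu, hv'⟩ := exists_isActive_of_adj h huv
  obtain rfl : t = s := by have := hv.2.2; have := hv'.2.2; omega
  exact hu

theorem approx_adj_of_adj {s : ℕ} {u v : α} (h : (hensonGraph n c).Adj u v)
    (hu : c u ≤ s) (hv : c v ≤ s) : (approx n c s).Adj u v := by
  wlog huv : u < v generalizing u v
  · exact (this h.symm hv hu ((le_of_not_gt huv).lt_of_ne h.ne.symm)).symm
  obtain ⟨t, ht, htu, htv⟩ := exists_isActive_of_adj h huv
  have hts : t < s := by have := htv.2.2; omega
  exact stageGraph_le_approx hts (stageGraph_adj_of_mem ht htu htv)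

theorem cliqueFree_hensonGraph (hn : 2 ≤ n) : (hensonGraph n c).CliqueFree n := by
  classical
  intro F hF
  have hne : F.Nonempty := Finset.card_pos.1 (by rw [hF.card_eq]; omega)
  set v := F.max' hne
  have hvF : v ∈ F := F.max'_mem hne
  have hlt : ∀ u ∈ F.erase v, u < v := fun u hu =>
    (F.le_max' u (Finset.mem_of_mem_erase hu)).lt_of_ne (Finset.ne_of_mem_erase hu)
  have hadj : ∀ u ∈ F.erase v, (hensonGraph n c).Adj u v := fun u hu =>
    hF.1 (Finset.mem_of_mem_erase hu) hvF (Finset.ne_of_mem_erase hu)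
  obtain ⟨u₀, hu₀⟩ : (F.erase v).Nonempty :=
    Finset.card_pos.1 (by rw [Finset.card_erase_of_mem hvF, hF.card_eq]; omega)
  obtain ⟨s, hs, -, hv⟩ := exists_isActive_of_adj (hadj u₀ hu₀) (hlt u₀ hu₀)
  have hsub : F.erase v ⊆ (request s).nbhd := fun u hu =>
    (adj_iff_mem_nbhd hs hv (hlt u hu)).1 (hadj u hu)
  refine hs.2.2 _ hsub ⟨fun x hx y hy hxy => ?_, by rw [Finset.card_erase_of_mem hvF, hF.card_eq]⟩
  exact approx_adj_of_adj (hF.1 (Finset.mem_of_mem_erase hx) (Finset.mem_of_mem_erase hy) hxy)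
    (hs.2.1 x (hsub hx)).2 (hs.2.1 y (hsub hy)).2

theorem exists_mem_witnessSet_extension (hc : HasDenseFibres c) {K : Finset α}
    (hK : ¬ ∃ F ⊆ K, (hensonGraph n c).IsNClique (n - 1) F) {a b : α}
    (hKa : ∀ k ∈ K, k ≤ a) (hab : a < b) :
    ∃ w ∈ witnessSet n c, a < w ∧ w < b ∧ (∀ k ∈ K, (hensonGraph n c).Adj k w) ∧
      ∀ u ≤ a, (hensonGraph n c).Adj u w → u ∈ K := by
  obtain ⟨s, hKs, hreq⟩ := exists_le_request_eq ⟨K, a, b⟩ (K.sup c)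
  have hs : IsActive n c s := by
    rw [IsActive, hreq]
    refine ⟨hab, fun k hk => ⟨hKa k hk, (Finset.le_sup hk).trans hKs⟩, fun F hF hFc => ?_⟩
    exact hK ⟨F, hF, hFc.mono (approx_le_hensonGraph s)⟩
  obtain ⟨w, haw, hwb, hw⟩ := hc (s + 1) hab
  have hws : w ∈ (request s).witnesses c s := by rw [hreq]; exact ⟨haw, hwb, hw⟩
  refine ⟨w, ⟨s, hs, hws⟩, haw, hwb, fun k hk => hensonGraph_adj_of_mem hs (by rwa [hreq]) hws,
    fun u hua hu => ?_⟩
  simpa [hreq] using (adj_iff_mem_nbhd hs hws (hua.trans_lt haw)).1 hu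

theorem hensonProperty_induce (hc : HasDenseFibres c) (A : Set α)
    (hA : ∀ S : Finset α, ↑S ⊆ A →
      ∃ a b, a ∈ upperBounds (S : Set α) ∧ a < b ∧ witnessSet n c ∩ Set.Ioo a b ⊆ A) :
    HensonProperty n ((hensonGraph n c).induce A) := by
  intro H K hKH hK
  let f : A ↪ α := Function.Embedding.subtype _
  obtain ⟨a, b, ha, hab, hbA⟩ := hA (H.map f) (by simp [f])
  obtain ⟨w, hwJ, haw, hwb, hwK, hwK'⟩ := exists_mem_witnessSet_extension (n := n) hc (K := K.map f)
    (fun ⟨F, hFK, hF⟩ => by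
      obtain ⟨F, hF₀, rfl⟩ := Finset.subset_map_iff.1 hFK
      exact hK ⟨F, hF₀, (isNClique_induce_iff A F _).2 hF⟩)
    (fun k hk => ha (Finset.map_subset_map.2 hKH hk)) hab
  refine ⟨⟨w, hbA ⟨hwJ, haw, hwb⟩⟩, fun hw => ?_, fun k hk => ?_, fun x hx hxK hwx => ?_⟩
  · exact haw.not_ge (ha (Finset.mem_map_of_mem f hw))
  · exact (hwK _ (Finset.mem_map_of_mem f hk)).symm
  · exact hxK ((Finset.mem_map' f).1 (hwK' _ (ha (Finset.mem_map_of_mem f hx)) hwx.symm))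

theorem exists_mem_witnessSet_btwn (hn : 2 ≤ n) (hc : HasDenseFibres c) {a b : α} (hab : a < b) :
    ∃ w ∈ witnessSet n c, a < w ∧ w < b := by
  obtain ⟨w, hw, haw, hwb, -⟩ :=
    exists_mem_witnessSet_extension (n := n) hc (K := ∅) (by simp; omega) (by simp) hab
  exact ⟨w, hw, haw, hwb⟩

theorem exists_notMem_witnessSet_btwn (hc : HasDenseFibres c) {a b : α} (hab : a < b) :
    ∃ v ∉ witnessSet n c, a < v ∧ v < b := by
  obtain ⟨v, hav, hvb, hv⟩ := hc 0 hab
  exact ⟨v, fun ⟨_, _, _, _, hvs⟩ => by omega, hav, hvb⟩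

/-- A witness `p < q` of the stage of `q` is adjacent to every lower neighbour of `q`. -/
theorem not_hensonProperty_induce (hn : 3 ≤ n) (hc : HasDenseFibres c) {q : α}
    (hq : q ∈ witnessSet n c) {C : Set α} (hJC : witnessSet n c ∩ Set.Iic q ⊆ C)
    (hCq : C ⊆ Set.Iic q) : ¬ HensonProperty n ((hensonGraph n c).induce C) := by
  obtain ⟨s, hs, hqs⟩ := hq
  obtain ⟨p, hlp, hpq, hp⟩ := hc (s + 1) hqs.1
  have hps : p ∈ (request s).witnesses c s := ⟨hlp, hpq.trans hqs.2.1, hp⟩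
  intro hH
  obtain ⟨v, -, hvq, hadj, hnadj⟩ := hH.exists_adj_not_adj hn
    (p := ⟨p, hJC ⟨⟨s, hs, hps⟩, hpq.le⟩⟩) (q := ⟨q, hJC ⟨⟨s, hs, hqs⟩, le_rfl⟩⟩)
    (by simpa using hpq.ne)
  have hvq' : (v : α) < q := (hCq v.2).lt_of_ne fun h => hvq (Subtype.ext h)
  exact hnadj (hensonGraph_adj_of_mem hs ((adj_iff_mem_nbhd hs hqs hvq').1 hadj) hps)

end HensonConstruction

/-- The witness is `(p t + 1) / (p ^ m (p k + 1))`: for large `k` these points form a grid fine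
enough to meet `(a, b)`. -/
theorem exists_padicValRat_eq_neg (p : ℕ) [hp : Fact p.Prime] (m : ℕ) {a b : ℚ} (hab : a < b) :
    ∃ q, a < q ∧ q < b ∧ padicValRat p q = -m := by
  have hp1 : (1 : ℚ) ≤ p := by exact_mod_cast hp.out.one_lt.le
  have hp0 : (0 : ℚ) < p := by linarith
  obtain ⟨k, hk⟩ := exists_nat_gt ((p : ℚ) / (b - a))
  set D : ℚ := p ^ m * (p * k + 1) with hD
  have hDpos : 0 < D := by positivity
  have hkD : (k : ℚ) < D := calc
    (k : ℚ) < p * k + 1 := by nlinarith [(k.cast_nonneg : (0 : ℚ) ≤ k)]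
    _ ≤ D := le_mul_of_one_le_left (by positivity) (one_le_pow₀ hp1)
  have hwidth : (p : ℚ) < (b - a) * D := by
    rw [div_lt_iff₀ (sub_pos.2 hab)] at hk
    nlinarith
  set t : ℤ := ⌊(a * D - 1) / p⌋ + 1
  have ht₁ : (a * D - 1) / p < t := by push_cast [t]; exact Int.lt_floor_add_one _
  have ht₂ : (t : ℚ) ≤ (a * D - 1) / p + 1 := by
    push_cast [t]; linarith [Int.floor_le ((a * D - 1) / p)]
  refine ⟨(p * t + 1) / D, ?_, ?_, ?_⟩
  · rw [lt_div_iff₀ hDpos]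
    rw [div_lt_iff₀ hp0] at ht₁
    linarith
  · rw [div_lt_iff₀ hDpos]
    rw [div_add_one hp0.ne', le_div_iff₀ hp0] at ht₂
    linarith
  · have hndvd : ¬ (p : ℤ) ∣ p * t + 1 := fun h =>
      hp.out.not_dvd_one (Int.natCast_dvd_natCast.1 ((Int.dvd_add_right (dvd_mul_right _ _)).1 h))
    have hndvd' : ¬ p ∣ p * k + 1 := fun h =>
      hp.out.not_dvd_one ((Nat.dvd_add_right (dvd_mul_right _ _)).1 h)
    have hnum : ((p * t + 1 : ℤ) : ℚ) ≠ 0 := Int.cast_ne_zero.2 fun h => hndvd (h ▸ dvd_zero _)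
    have hvnum : padicValRat p ((p * t + 1 : ℤ) : ℚ) = 0 := by
      rw [padicValRat.of_int, padicValInt.eq_zero_of_not_dvd hndvd, Nat.cast_zero]
    have hvD : padicValRat p D = m := by
      have hcast : ((p * k + 1 : ℕ) : ℚ) = p * k + 1 := by push_cast; ring
      rw [hD, padicValRat.mul (by positivity) (by positivity), padicValRat.pow,
        padicValRat.self hp.out.one_lt, ← hcast, padicValRat.of_nat,
        padicValNat.eq_zero_of_not_dvd hndvd']
      simp
    push_cast at hnum hvnum
    rw [padicValRat.div hnum hDpos.ne', hvnum, hvD, zero_sub]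

theorem exists_rat_mem_upperBounds_lt (S : Finset ℚ) {x : ℝ} (hS : ∀ q ∈ S, (q : ℝ) < x) :
    ∃ a : ℚ, a ∈ upperBounds (S : Set ℚ) ∧ (a : ℝ) < x := by
  obtain ⟨a₀, ha₀⟩ := exists_rat_lt x
  have hne : (insert a₀ S).Nonempty := Finset.insert_nonempty _ _
  refine ⟨(insert a₀ S).max' hne, fun q hq => (insert a₀ S).le_max' q (Finset.mem_insert_of_mem hq),
    ?_⟩
  obtain h | h := Finset.mem_insert.1 ((insert a₀ S).max'_mem hne)
  · rw [h]; exact ha₀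
  · exact hS _ h

open HensonConstruction

theorem exists_graph_on_rationals_with_henson_initial_segments
    (n : ℕ) (hn : 3 ≤ n) :
    ∃ (R : SimpleGraph ℚ) (J₀ : Set ℚ),
      -- `J₀` and `ℚ \ J₀` are dense in `ℚ`:
      (∀ p q : ℚ, p < q → ∃ j ∈ J₀, p < j ∧ j < q) ∧
      (∀ p q : ℚ, p < q → ∃ j ∉ J₀, p < j ∧ j < q) ∧
      -- (iii) initial segments (and full extensions of `J₀`) induce copies of `H_n`:
      (∀ x : ℝ, ∀ A : Set ℚ, {q | q ∈ J₀ ∧ (q : ℝ) < x} ⊆ A →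
        A ⊆ {q : ℚ | (q : ℝ) < x} →
        (R.induce A).CliqueFree n ∧ HensonProperty n (R.induce A)) ∧
      (∀ A : Set ℚ, J₀ ⊆ A →
        (R.induce A).CliqueFree n ∧ HensonProperty n (R.induce A)) ∧
      -- (iv) closed initial segments at points of `J₀` do not induce copies of `H_n`:
      (∀ q ∈ J₀, ∀ C : Set ℚ, {r | r ∈ J₀ ∧ r ≤ q} ⊆ C → C ⊆ {r : ℚ | r ≤ q} →
        ∀ Hg : SimpleGraph ℕ, Hg.CliqueFree n → HensonProperty n Hg →
          ¬ Nonempty ((R.induce C) ≃g Hg)) := by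
  let c : ℚ → ℕ := fun q => (-padicValRat 2 q).toNat
  have hc : HasDenseFibres c := fun m a b hab => by
    obtain ⟨q, haq, hqb, hq⟩ := exists_padicValRat_eq_neg 2 m hab
    exact ⟨q, haq, hqb, by simp [c, hq]⟩
  have hK : (hensonGraph n c).CliqueFree n := cliqueFree_hensonGraph (by omega)
  refine ⟨hensonGraph n c, witnessSet n c, fun _ _ => exists_mem_witnessSet_btwn (by omega) hc,
    fun _ _ => exists_notMem_witnessSet_btwn hc, ?_, ?_, ?_⟩
  · intro x A hJA hAx
    refine ⟨hK.comap (Embedding.induce A).isContained, hensonProperty_induce hc A fun S hS => ?_⟩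
    obtain ⟨a, ha, hax⟩ := exists_rat_mem_upperBounds_lt S fun q hq => hAx (hS hq)
    obtain ⟨b, hab, hbx⟩ := exists_rat_btwn hax
    exact ⟨a, b, ha, by exact_mod_cast hab,
      fun w ⟨hw, _, hwb⟩ => hJA ⟨hw, (Rat.cast_lt.2 hwb).trans hbx⟩⟩
  · intro A hJA
    refine ⟨hK.comap (Embedding.induce A).isContained, hensonProperty_induce hc A fun S _ => ?_⟩
    obtain ⟨a, ha⟩ := S.bddAbove
    exact ⟨a, a + 1, ha, lt_add_one a, fun w hw => hJA hw.1⟩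
  · rintro q hq C hJC hCq Hg - hHg ⟨e⟩
    exact not_hensonProperty_induce hn hc hq hJC hCq (hHg.of_iso e)
end
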